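/- arXiv:2209.01459 — 4 statements merged into one kernel-verified Lean document; each statement's English description precedes it below -/
import Mathlib

section
/- Let G be a finite connected simple graph and let D be a divisor on G of positive rank such that any two distinct effective divisors equivalent to D have disjoint supports. Then scw(G) ≤ deg(D). -/
open SimpleGraph

universe u

variable {V : Type u}

/-- A tree-cut decomposition of a finite simple graph `G`: a finite tree `T`
on a node type `B`, together with pairwise disjoint (possibly empty) bags
`bag b ⊆ V` whose union is all of `V`. -/
structure TreeCutDecomp [Finite V] (G : SimpleGraph V) where
  B : Type
  finB : Finite B
  T : SimpleGraph B
  isTree : T.IsTree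
  bag : B → Set V
  disj : Pairwise fun b d => Disjoint (bag b) (bag d)
  covers : ∀ v : V, ∃ b, v ∈ bag b

namespace TreeCutDecomp

variable [Finite V] {G : SimpleGraph V}

/-- The adhesion of a link `l` of `T`: the set of edges of `G` whose endpoints lie in
bags indexed by nodes in different components of `T - l` (equivalently, nodes such that
every walk between them uses `l`). -/
def linkAdh (D : TreeCutDecomp G) (l : Sym2 D.B) : Set (Sym2 V) :=
  {e | e ∈ G.edgeSet ∧ ∃ v w : V, ∃ b d : D.B, e = s(v, w) ∧ v ∈ D.bag b ∧ w ∈ D.bag d ∧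
    ∀ p : D.T.Walk b d, l ∈ p.edges}

/-- The adhesion of a node `n` of `T`: the set of edges of `G` whose endpoints lie in
bags indexed by nodes in different components of `T - n` (equivalently, nodes distinct
from `n` such that every walk between them passes through `n`). -/
def nodeAdh (D : TreeCutDecomp G) (n : D.B) : Set (Sym2 V) :=
  {e | e ∈ G.edgeSet ∧ ∃ v w : V, ∃ b d : D.B, e = s(v, w) ∧ v ∈ D.bag b ∧ w ∈ D.bag d ∧
    b ≠ n ∧ d ≠ n ∧ ∀ p : D.T.Walk b d, n ∈ p.support}

/-- The width of a tree-cut decomposition: the maximum of `|adh(l)|` over links `l` of `T`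
and of `|X_b| + |adh(b)|` over nodes `b` of `T`. -/
noncomputable def width (D : TreeCutDecomp G) : ℕ :=
  sSup ({n | ∃ l ∈ D.T.edgeSet, n = (D.linkAdh l).ncard} ∪
        {n | ∃ b : D.B, n = (D.bag b).ncard + (D.nodeAdh b).ncard})

end TreeCutDecomp

/-- The screewidth of `G`: the minimum width of a tree-cut decomposition of `G`. -/
noncomputable def screewidth [Finite V] (G : SimpleGraph V) : ℕ :=
  sInf {n | ∃ D : TreeCutDecomp G, D.width = n}

section Divisors

variable [Fintype V]

open Classical in
/-- The graph Laplacian applied to an integer-valued function on the vertices. -/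
noncomputable def graphLap (G : SimpleGraph V) (f : V → ℤ) : V → ℤ :=
  fun v => ∑ w : V, if G.Adj v w then f v - f w else 0

/-- Two divisors are (linearly) equivalent if they differ by a Laplacian of an
integer-valued function. -/
def DivEquiv (G : SimpleGraph V) (D D' : V → ℤ) : Prop :=
  ∃ f : V → ℤ, D' = D - graphLap G f

/-- A divisor is effective if it is nonnegative everywhere. -/
def DivEffective (D : V → ℤ) : Prop := ∀ v, 0 ≤ D v

/-- A divisor has positive rank if for every vertex `v` it is equivalent to an
effective divisor placing at least one chip on `v`. -/
def DivPosRank (G : SimpleGraph V) (D : V → ℤ) : Prop :=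
  ∀ v : V, ∃ D' : V → ℤ, DivEquiv G D D' ∧ DivEffective D' ∧ 1 ≤ D' v

/-- The support of a divisor. -/
def divSupp (D : V → ℤ) : Set V := {v | 1 ≤ D v}

end Divisors

namespace ScwProof

open Finset
open scoped Classical

variable {V : Type u} [Fintype V] {G : SimpleGraph V}

/-! ### Basic Laplacian lemmas -/

lemma lap_apply (G : SimpleGraph V) (f : V → ℤ) (v : V) :
    graphLap G f v = ∑ w : V, if G.Adj v w then f v - f w else 0 := rfl

lemma lap_sub_apply (f g : V → ℤ) (v : V) :
    graphLap G (fun x => f x - g x) v = graphLap G f v - graphLap G g v := by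
  classical
  simp only [lap_apply, ← Finset.sum_sub_distrib]
  apply Finset.sum_congr rfl
  intro w _
  split_ifs <;> ring

lemma lap_add_apply (f g : V → ℤ) (v : V) :
    graphLap G (fun x => f x + g x) v = graphLap G f v + graphLap G g v := by
  classical
  simp only [lap_apply, ← Finset.sum_add_distrib]
  apply Finset.sum_congr rfl
  intro w _
  split_ifs <;> ring

lemma lap_congr {f g : V → ℤ} (h : ∀ x, f x = g x) (v : V) :
    graphLap G f v = graphLap G g v := by
  have : f = g := funext h
  rw [this]

lemma lap_const (c : ℤ) (v : V) : graphLap G (fun _ => c) v = 0 := by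
  classical
  simp [lap_apply]

lemma lap_add_const (f : V → ℤ) (c : ℤ) (v : V) :
    graphLap G (fun x => f x + c) v = graphLap G f v := by
  rw [lap_add_apply, lap_const, add_zero]

lemma sum_lap (f : V → ℤ) : ∑ v : V, graphLap G f v = 0 := by
  classical
  have hswap : ∑ v : V, graphLap G f v = ∑ w : V, ∑ v : V,
      (if G.Adj w v then f w - f v else 0) := by
    simp only [lap_apply]
  have hswap2 : ∑ v : V, graphLap G f v = ∑ v : V, ∑ w : V,
      (if G.Adj w v then f w - f v else 0) := by
    rw [hswap, Finset.sum_comm]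
  have hadd : (∑ v : V, graphLap G f v) + (∑ v : V, graphLap G f v) = 0 := by
    nth_rewrite 2 [hswap2]
    rw [← Finset.sum_add_distrib]
    apply Finset.sum_eq_zero
    intro v _
    rw [lap_apply, ← Finset.sum_add_distrib]
    apply Finset.sum_eq_zero
    intro w _
    by_cases h : G.Adj v w
    · rw [if_pos h, if_pos h.symm]; ring
    · rw [if_neg h, if_neg (fun h' => h h'.symm), add_zero]
  linarith

/-- number of neighbours of `v` inside `A`, as an integer. -/
noncomputable def nbrZ (G : SimpleGraph V) (A : V → Prop) (v : V) : ℤ :=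
  ∑ w : V, if G.Adj v w ∧ A w then 1 else 0

lemma nbrZ_nonneg (A : V → Prop) (v : V) : 0 ≤ nbrZ G A v := by
  classical
  apply Finset.sum_nonneg
  intro w _
  split_ifs <;> norm_num

lemma one_le_nbrZ {A : V → Prop} {v w : V} (h : G.Adj v w) (hA : A w) :
    1 ≤ nbrZ G A v := by
  classical
  have hw1 : (fun x => if G.Adj v x ∧ A x then (1:ℤ) else 0) w = 1 := by
    simp only []
    rw [if_pos (And.intro h hA)]
  calc (1:ℤ) = (fun x => if G.Adj v x ∧ A x then (1:ℤ) else 0) w := hw1.symm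
    _ ≤ ∑ x : V, if G.Adj v x ∧ A x then (1:ℤ) else 0 := by
        apply Finset.single_le_sum (f := fun x => if G.Adj v x ∧ A x then (1:ℤ) else 0)
        · intro x _; split_ifs <;> norm_num
        · exact Finset.mem_univ w
    _ = nbrZ G A v := rfl

lemma nbrZ_mono {A B : V → Prop} (h : ∀ x, A x → B x) (v : V) :
    nbrZ G A v ≤ nbrZ G B v := by
  classical
  apply Finset.sum_le_sum
  intro w _
  split_ifs with h1 h2
  · norm_num
  · exact absurd ⟨h1.1, h _ h1.2⟩ h2
  · norm_num
  · norm_num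

/-- indicator function of a predicate. -/
noncomputable def ind (A : V → Prop) : V → ℤ := fun v => if A v then 1 else 0

lemma lap_ind_mem {A : V → Prop} {v : V} (hv : A v) :
    graphLap G (ind A) v = nbrZ G (fun w => ¬ A w) v := by
  classical
  rw [lap_apply, nbrZ]
  apply Finset.sum_congr rfl
  intro w _
  by_cases h : G.Adj v w
  · by_cases hw : A w
    · rw [if_pos h, if_neg (by simp [hw]), ind, ind, if_pos hv, if_pos hw]; ring
    · rw [if_pos h, if_pos ⟨h, hw⟩, ind, ind, if_pos hv, if_neg hw]; ring
  · rw [if_neg h, if_neg (by simp [h])]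

lemma lap_ind_not_mem {A : V → Prop} {v : V} (hv : ¬ A v) :
    graphLap G (ind A) v = - nbrZ G A v := by
  classical
  rw [lap_apply, nbrZ, ← Finset.sum_neg_distrib]
  apply Finset.sum_congr rfl
  intro w _
  by_cases h : G.Adj v w
  · by_cases hw : A w
    · rw [if_pos h, if_pos ⟨h, hw⟩, ind, ind, if_neg hv, if_pos hw]; ring
    · rw [if_pos h, if_neg (by simp [hw]), ind, ind, if_neg hv, if_neg hw]; ring
  · rw [if_neg h, if_neg (by simp [h]), neg_zero]

omit [Fintype V] in
lemma exists_cross_walk {A : V → Prop} {a b : V} (w : G.Walk a b)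
    (ha : ¬ A a) (hb : A b) : ∃ u v, G.Adj u v ∧ A u ∧ ¬ A v := by
  classical
  induction w with
  | nil => exact absurd hb ha
  | @cons u x y h p ih =>
    by_cases hx : A x
    · exact ⟨x, u, h.symm, hx, ha⟩
    · exact ih hx hb

omit [Fintype V] in
lemma exists_cross (hG : G.Connected) {A : V → Prop} {x y : V}
    (hx : A x) (hy : ¬ A y) : ∃ u v, G.Adj u v ∧ A u ∧ ¬ A v := by
  obtain ⟨w⟩ := hG.preconnected y x
  exact exists_cross_walk w hy hx

end ScwProof

namespace ScwProof

variable {V : Type u} [Fintype V] {G : SimpleGraph V}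

section MinMax

variable [Nonempty V]

noncomputable def fmin (f : V → ℤ) : ℤ := Finset.univ.inf' Finset.univ_nonempty f

noncomputable def fmax (f : V → ℤ) : ℤ := Finset.univ.sup' Finset.univ_nonempty f

lemma fmin_le (f : V → ℤ) (v : V) : fmin f ≤ f v :=
  Finset.inf'_le _ (Finset.mem_univ v)

lemma le_fmax (f : V → ℤ) (v : V) : f v ≤ fmax f :=
  Finset.le_sup' _ (Finset.mem_univ v)

lemma exists_fmin (f : V → ℤ) : ∃ v, f v = fmin f := by
  obtain ⟨v, _, hv⟩ := Finset.exists_mem_eq_inf' (Finset.univ_nonempty) f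
  exact ⟨v, hv.symm⟩

lemma exists_fmax (f : V → ℤ) : ∃ v, f v = fmax f := by
  obtain ⟨v, _, hv⟩ := Finset.exists_mem_eq_sup' (Finset.univ_nonempty) f
  exact ⟨v, hv.symm⟩

lemma fmin_le_fmax (f : V → ℤ) : fmin f ≤ fmax f := by
  obtain ⟨v, hv⟩ := exists_fmin f
  rw [← hv]; exact le_fmax f v

lemma fmax_le {f : V → ℤ} {c : ℤ} (h : ∀ v, f v ≤ c) : fmax f ≤ c := by
  obtain ⟨v, hv⟩ := exists_fmax f
  rw [← hv]; exact h v

lemma le_fmin {f : V → ℤ} {c : ℤ} (h : ∀ v, c ≤ f v) : c ≤ fmin f := by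
  obtain ⟨v, hv⟩ := exists_fmin f
  rw [← hv]; exact h v

lemma fmax_eq {f : V → ℤ} {c : ℤ} (h : ∀ v, f v ≤ c) (h' : ∃ v, f v = c) : fmax f = c := by
  obtain ⟨v, hv⟩ := h'
  exact le_antisymm (fmax_le h) (hv ▸ le_fmax f v)

lemma fmin_eq {f : V → ℤ} {c : ℤ} (h : ∀ v, c ≤ f v) (h' : ∃ v, f v = c) : fmin f = c := by
  obtain ⟨v, hv⟩ := h'
  exact le_antisymm (hv ▸ fmin_le f v) (le_fmin h)

lemma fmax_congr {f g : V → ℤ} (h : ∀ v, f v = g v) : fmax f = fmax g := by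
  have : f = g := funext h
  rw [this]

lemma fmin_congr {f g : V → ℤ} (h : ∀ v, f v = g v) : fmin f = fmin g := by
  have : f = g := funext h
  rw [this]

lemma fmax_add_const (f : V → ℤ) (c : ℤ) : fmax (fun x => f x + c) = fmax f + c := by
  apply fmax_eq
  · intro v; have := le_fmax f v; linarith
  · obtain ⟨v, hv⟩ := exists_fmax f; exact ⟨v, by rw [hv]⟩

lemma fmin_add_const (f : V → ℤ) (c : ℤ) : fmin (fun x => f x + c) = fmin f + c := by
  apply fmin_eq
  · intro v; have := fmin_le f v; linarith
  · obtain ⟨v, hv⟩ := exists_fmin f; exact ⟨v, by rw [hv]⟩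

end MinMax

/-- A function with zero Laplacian on a connected graph is constant. -/
lemma const_of_lap_zero (hG : G.Connected) {f : V → ℤ}
    (h : ∀ v, graphLap G f v = 0) : ∀ v w, f v = f w := by
  classical
  have : Nonempty V := hG.nonempty
  suffices hs : ∀ v, f v = fmax f by intro v w; rw [hs v, hs w]
  by_contra hc
  push_neg at hc
  obtain ⟨y, hy⟩ := hc
  obtain ⟨x, hx⟩ := exists_fmax f
  obtain ⟨u, w, huw, hu, hw⟩ := exists_cross hG (A := fun v => f v = fmax f) hx hy
  have hpos : 0 < graphLap G f u := by
    rw [lap_apply]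
    apply Finset.sum_pos'
    · intro i _
      split_ifs with hadj
      · rw [hu]; have := le_fmax f i; linarith
      · exact le_refl 0
    · refine ⟨w, Finset.mem_univ w, ?_⟩
      rw [if_pos huw, hu]
      have := le_fmax f w
      have : f w ≠ fmax f := hw
      omega
  rw [h u] at hpos
  exact absurd hpos (lt_irrefl 0)

/-- closure of effectiveness under pointwise max of firing functions. -/
lemma eff_lap_max {E f g : V → ℤ} (hf : ∀ v, 0 ≤ E v - graphLap G f v)
    (hg : ∀ v, 0 ≤ E v - graphLap G g v) :
    ∀ v, 0 ≤ E v - graphLap G (fun x => max (f x) (g x)) v := by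
  intro v
  rcases le_total (f v) (g v) with hle | hle
  · have hlap : graphLap G (fun x => max (f x) (g x)) v ≤ graphLap G g v := by
      rw [lap_apply, lap_apply]
      apply Finset.sum_le_sum
      intro w _
      split_ifs with hadj
      · have h1 : max (f v) (g v) = g v := max_eq_right hle
        have h2 : g w ≤ max (f w) (g w) := le_max_right _ _
        rw [h1]; omega
      · omega
    have := hg v; omega
  · have hlap : graphLap G (fun x => max (f x) (g x)) v ≤ graphLap G f v := by
      rw [lap_apply, lap_apply]
      apply Finset.sum_le_sum
      intro w _
      split_ifs with hadj
      · have h1 : max (f v) (g v) = f v := max_eq_left hle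
        have h2 : f w ≤ max (f w) (g w) := le_max_left _ _
        rw [h1]; omega
      · omega
    have := hf v; omega

end ScwProof

namespace ScwProof

variable {V : Type u} [Fintype V] {G : SimpleGraph V}

/-- The set of effective divisors equivalent to `D`. -/
def Dset (G : SimpleGraph V) (D : V → ℤ) : Set (V → ℤ) :=
  {E | DivEquiv G D E ∧ DivEffective E}

variable {D : V → ℤ}

lemma eff_of_mem {E : V → ℤ} (hE : E ∈ Dset G D) : ∀ v, 0 ≤ E v := hE.2

lemma equiv_of_mem {E F : V → ℤ} (hE : E ∈ Dset G D) (hF : F ∈ Dset G D) :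
    ∃ f, ∀ v, F v = E v - graphLap G f v := by
  obtain ⟨f1, h1⟩ := hE.1
  obtain ⟨f2, h2⟩ := hF.1
  refine ⟨fun x => f2 x - f1 x, fun v => ?_⟩
  have h1v : E v = D v - graphLap G f1 v := by rw [h1]; simp
  have h2v : F v = D v - graphLap G f2 v := by rw [h2]; simp
  rw [lap_sub_apply]
  omega

lemma mem_of_eq_sub {E : V → ℤ} (hE : E ∈ Dset G D) (f : V → ℤ)
    (heff : ∀ v, 0 ≤ E v - graphLap G f v) :
    (fun v => E v - graphLap G f v) ∈ Dset G D := by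
  obtain ⟨f1, h1⟩ := hE.1
  refine ⟨⟨fun x => f1 x + f x, ?_⟩, heff⟩
  funext v
  have h1v : E v = D v - graphLap G f1 v := by rw [h1]; simp
  simp only [Pi.sub_apply]
  rw [lap_add_apply]
  omega

lemma sum_eq_of_mem {E : V → ℤ} (hE : E ∈ Dset G D) : ∑ v, E v = ∑ v, D v := by
  obtain ⟨f1, h1⟩ := hE.1
  have : ∀ v, E v = D v - graphLap G f1 v := by intro v; rw [h1]; simp
  calc ∑ v, E v = ∑ v, (D v - graphLap G f1 v) := Finset.sum_congr rfl (fun v _ => this v)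
    _ = ∑ v, D v - ∑ v, graphLap G f1 v := Finset.sum_sub_distrib _ _
    _ = ∑ v, D v := by rw [sum_lap, sub_zero]

/-- The partitioning hypothesis, in convenient form. -/
def PartHyp (G : SimpleGraph V) (D : V → ℤ) : Prop :=
  ∀ E F : V → ℤ, E ∈ Dset G D → F ∈ Dset G D → E ≠ F →
    Disjoint (divSupp E) (divSupp F)

lemma class_unique (hp : PartHyp G D) {E F : V → ℤ} (hE : E ∈ Dset G D)
    (hF : F ∈ Dset G D) {v : V} (h1 : 1 ≤ E v) (h2 : 1 ≤ F v) : E = F := by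
  by_contra hne
  have hdis := hp E F hE hF hne
  exact Set.disjoint_left.mp hdis (show v ∈ divSupp E from h1) (show v ∈ divSupp F from h2)

/-- The key "set-firing move" lemma. -/
lemma move_supp (hp : PartHyp G D) {E F : V → ℤ} (hE : E ∈ Dset G D)
    (hF : F ∈ Dset G D) (hne : E ≠ F) (A : V → Prop)
    (heq : ∀ v, F v = E v - graphLap G (ind A) v) :
    (∀ v, 1 ≤ E v → A v) ∧ (∀ v, 1 ≤ F v → ¬ A v) ∧
    (∀ x y, G.Adj x y → A x → ¬ A y → 1 ≤ E x ∧ 1 ≤ F y) := by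
  have hbound : ∀ x y, G.Adj x y → A x → ¬ A y → 1 ≤ E x ∧ 1 ≤ F y := by
    intro x y hadj hx hy
    constructor
    · have h1 := heq x
      rw [lap_ind_mem hx] at h1
      have h2 : 1 ≤ nbrZ G (fun w => ¬ A w) x := one_le_nbrZ hadj hy
      have h3 := eff_of_mem hF x
      omega
    · have h1 := heq y
      rw [lap_ind_not_mem hy] at h1
      have h2 : 1 ≤ nbrZ G A y := one_le_nbrZ hadj.symm hx
      have h3 := eff_of_mem hE y
      omega
  refine ⟨?_, ?_, hbound⟩
  · intro v hv
    by_contra hnv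
    have h1 := heq v
    rw [lap_ind_not_mem hnv] at h1
    have h2 := nbrZ_nonneg (G := G) A v
    have h3 : 1 ≤ F v := by omega
    exact hne (class_unique hp hE hF hv h3)
  · intro v hv
    by_contra hnv
    have h1 := heq v
    rw [lap_ind_mem hnv] at h1
    have h2 := nbrZ_nonneg (G := G) (fun w => ¬ A w) v
    have h3 : 1 ≤ E v := by omega
    exact hne (class_unique hp hE hF h3 hv)

/-- the chain of divisors interpolating between `E` and `E - lap f`. -/
noncomputable def chainD (G : SimpleGraph V) (E f : V → ℤ) (t : ℤ) : V → ℤ :=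
  fun v => E v - graphLap G (fun x => max (f x) t) v

lemma chain_mem {E : V → ℤ} (hE : E ∈ Dset G D) {f : V → ℤ}
    (hf : ∀ v, 0 ≤ E v - graphLap G f v) (t : ℤ) : chainD G E f t ∈ Dset G D := by
  have heff : ∀ v, 0 ≤ E v - graphLap G (fun x => max (f x) t) v := by
    apply eff_lap_max hf
    intro v
    rw [lap_const]
    have := eff_of_mem hE v
    omega
  exact mem_of_eq_sub hE _ heff

lemma chain_top {E f : V → ℤ} {t : ℤ} (hd : ∀ v, f v ≤ t) : chainD G E f t = E := by
  funext v
  unfold chainD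
  have : graphLap G (fun x => max (f x) t) v = 0 := by
    rw [lap_congr (g := fun _ => t) (fun x => max_eq_right (hd x)), lap_const]
  omega

lemma chain_bot {E f : V → ℤ} {t : ℤ} (hd : ∀ v, t ≤ f v) :
    ∀ v, chainD G E f t v = E v - graphLap G f v := by
  intro v
  unfold chainD
  rw [lap_congr (g := f) (fun x => max_eq_left (hd x))]

lemma chain_succ (E f : V → ℤ) (t : ℤ) (v : V) :
    chainD G E f t v = chainD G E f (t+1) v
      - graphLap G (ind (fun x => t + 1 ≤ f x)) v := by
  unfold chainD
  have key : graphLap G (fun x => max (f x) (t+1)) v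
      - graphLap G (fun x => max (f x) t) v = - graphLap G (ind (fun x => t + 1 ≤ f x)) v := by
    rw [← lap_sub_apply]
    have hpt : ∀ x, max (f x) (t+1) - max (f x) t
        = ((fun y => 0 - ind (fun z => t + 1 ≤ f z) y) x) + 1 := by
      intro x
      unfold ind
      simp only []
      split_ifs with h
      · rw [max_eq_left h, max_eq_left (by omega)]; ring
      · rw [max_eq_right (by omega), max_eq_right (by omega)]; ring
    rw [lap_congr hpt, lap_add_const, lap_sub_apply, lap_const]
    ring
  omega

lemma chain_ne (hG : G.Connected) (E f : V → ℤ) {t : ℤ}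
    (hlo : ∃ v, f v ≤ t) (hhi : ∃ v, t + 1 ≤ f v) :
    chainD G E f t ≠ chainD G E f (t+1) := by
  obtain ⟨a, ha⟩ := hhi
  obtain ⟨b, hb⟩ := hlo
  obtain ⟨u, w, huw, hu, hw⟩ := exists_cross hG (A := fun x => t + 1 ≤ f x) ha
    (show ¬ t + 1 ≤ f b by omega)
  intro hcontra
  have h1 := chain_succ (G := G) E f t w
  rw [hcontra] at h1
  have h2 : graphLap G (ind (fun x => t + 1 ≤ f x)) w = - nbrZ G (fun x => t + 1 ≤ f x) w :=
    lap_ind_not_mem hw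
  have h3 : 1 ≤ nbrZ G (fun x => t + 1 ≤ f x) w := one_le_nbrZ huw.symm hu
  omega

end ScwProof

namespace ScwProof

variable {V : Type u} [Fintype V] [Nonempty V] {G : SimpleGraph V} {D : V → ℤ}

/-- Lemma C: for equivalent `E, F ∈ Dset` with potential `f` (i.e. `F = E - lap f`),
the support of `F` lies on the minimum level of `f` and that of `E` on the maximum. -/
lemma supp_fmin_fmax (hG : G.Connected) (hp : PartHyp G D) {E F : V → ℤ}
    (hE : E ∈ Dset G D) (hF : F ∈ Dset G D) (f : V → ℤ)
    (heq : ∀ v, F v = E v - graphLap G f v) :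
    (∀ v, 1 ≤ F v → f v = fmin f) ∧ (∀ v, 1 ≤ E v → f v = fmax f) := by
  by_cases hconst : fmin f = fmax f
  · constructor
    · intro v _
      have h1 := fmin_le f v
      have h2 := le_fmax f v
      omega
    · intro v _
      have h1 := fmin_le f v
      have h2 := le_fmax f v
      omega
  have hlt : fmin f < fmax f := lt_of_le_of_ne (fmin_le_fmax f) hconst
  have hf : ∀ v, 0 ≤ E v - graphLap G f v := by
    intro v; rw [← heq v]; exact eff_of_mem hF v
  have hFeq : ∀ v, F v = chainD G E f (fmin f) v := by
    intro v
    rw [chain_bot (fun x => fmin_le f x) v, heq v]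
  have hEeq : E = chainD G E f (fmax f) := (chain_top (fun x => le_fmax f x)).symm
  constructor
  · -- bottom move
    obtain ⟨vmin, hvmin⟩ := exists_fmin f
    obtain ⟨vmax, hvmax⟩ := exists_fmax f
    have hne : chainD G E f (fmin f) ≠ chainD G E f (fmin f + 1) :=
      chain_ne hG E f ⟨vmin, by omega⟩ ⟨vmax, by omega⟩
    have hmove := move_supp hp (chain_mem hE hf (fmin f + 1)) (chain_mem hE hf (fmin f))
      (Ne.symm hne) (fun x => fmin f + 1 ≤ f x) (fun v => chain_succ E f (fmin f) v)
    intro v hv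
    have h2 := hmove.2.1 v (by rw [hFeq v] at hv; exact hv)
    have := fmin_le f v
    omega
  · -- top move
    obtain ⟨vmin, hvmin⟩ := exists_fmin f
    obtain ⟨vmax, hvmax⟩ := exists_fmax f
    have hne : chainD G E f (fmax f - 1) ≠ chainD G E f (fmax f - 1 + 1) :=
      chain_ne hG E f ⟨vmin, by omega⟩ ⟨vmax, by omega⟩
    have hmove := move_supp hp (chain_mem hE hf (fmax f - 1 + 1)) (chain_mem hE hf (fmax f - 1))
      (Ne.symm hne) (fun x => fmax f - 1 + 1 ≤ f x) (fun v => chain_succ E f (fmax f - 1) v)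
    intro v hv
    have hv' : 1 ≤ chainD G E f (fmax f - 1 + 1) v := by
      have : fmax f - 1 + 1 = fmax f := by ring
      rw [this, ← hEeq]
      exact hv
    have h2 := hmove.1 v hv'
    have := le_fmax f v
    omega

omit [Nonempty V] in
/-- divisors in the interior of the chain have support inside upper level sets. -/
lemma interior_level (hG : G.Connected) (hp : PartHyp G D) {E : V → ℤ}
    (hE : E ∈ Dset G D) {f : V → ℤ} (hf : ∀ v, 0 ≤ E v - graphLap G f v) (t : ℤ)
    (h1 : ∃ v, f v ≤ t - 1) (h2 : ∃ v, t ≤ f v) :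
    ∀ v, 1 ≤ chainD G E f t v → t ≤ f v := by
  have hne : chainD G E f (t - 1) ≠ chainD G E f (t - 1 + 1) :=
    chain_ne hG E f (by obtain ⟨v, hv⟩ := h1; exact ⟨v, by omega⟩)
      (by obtain ⟨v, hv⟩ := h2; exact ⟨v, by omega⟩)
  have ht' : t - 1 + 1 = t := by ring
  have hmove := move_supp hp (chain_mem hE hf (t - 1 + 1)) (chain_mem hE hf (t - 1))
    (Ne.symm hne) (fun x => t - 1 + 1 ≤ f x) (fun v => chain_succ E f (t - 1) v)
  intro v hv
  have hv' : 1 ≤ chainD G E f (t - 1 + 1) v := by rw [ht']; exact hv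
  have := hmove.1 v hv'
  omega

/-- Key step: if `x` carries a chip of `E` and `xy` is an edge, then the potential at
`y` is at least `fmax f - 1`. -/
lemma edge_step (hG : G.Connected) (hp : PartHyp G D) {E F : V → ℤ}
    (hE : E ∈ Dset G D) (hF : F ∈ Dset G D) (f : V → ℤ)
    (heq : ∀ v, F v = E v - graphLap G f v) {x y : V}
    (hadj : G.Adj x y) (hx : 1 ≤ E x) : fmax f - 1 ≤ f y := by
  by_contra hcon
  push_neg at hcon
  have hy : f y ≤ fmax f - 2 := by omega
  set d := fmax f with hd
  have hfx : f x = d := (supp_fmin_fmax hG hp hE hF f heq).2 x hx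
  have hf : ∀ v, 0 ≤ E v - graphLap G f v := by
    intro v; rw [← heq v]; exact eff_of_mem hF v
  -- value of the chain divisor at level d-1 at y
  have hchain : chainD G E f (d - 1) y = E y + nbrZ G (fun z => d ≤ f z) y := by
    have h1 := chain_succ (G := G) E f (d - 1) y
    have ht' : d - 1 + 1 = d := by ring
    rw [ht'] at h1
    have h2 : chainD G E f d = E := chain_top (fun v => le_fmax f v)
    rw [h2] at h1
    have h3 : graphLap G (ind (fun x => d ≤ f x)) y = - nbrZ G (fun x => d ≤ f x) y :=
      lap_ind_not_mem (by omega)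
    omega
  have hpos : 1 ≤ chainD G E f (d - 1) y := by
    have h4 : 1 ≤ nbrZ G (fun z => d ≤ f z) y := one_le_nbrZ hadj.symm (by omega)
    have h5 := eff_of_mem hE y
    omega
  have := interior_level hG hp hE hf (d - 1) ⟨y, by omega⟩ ⟨x, by omega⟩ y hpos
  omega

/-- classes joined by an edge of `G` are at potential-oscillation exactly 1. -/
lemma edge_osc (hG : G.Connected) (hp : PartHyp G D) {E F : V → ℤ}
    (hE : E ∈ Dset G D) (hF : F ∈ Dset G D) (hne : E ≠ F) (f : V → ℤ)
    (heq : ∀ v, F v = E v - graphLap G f v) {x y : V}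
    (hadj : G.Adj x y) (hx : 1 ≤ E x) (hy : 1 ≤ F y) : fmax f = fmin f + 1 := by
  have h1 : f y = fmin f := (supp_fmin_fmax hG hp hE hF f heq).1 y hy
  have h2 := edge_step hG hp hE hF f heq hadj hx
  have h3 : fmin f ≠ fmax f := by
    intro hc
    apply hne
    funext v
    have h4 : ∀ w, f w = fmin f := by
      intro w
      have := fmin_le f w
      have := le_fmax f w
      omega
    have h5 : graphLap G f v = 0 := by
      rw [lap_congr (g := fun _ => fmin f) h4, lap_const]
    have := heq v
    omega
  have := fmin_le_fmax f
  omega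

end ScwProof

namespace ScwProof

variable {V : Type u} [Fintype V] [Nonempty V] {G : SimpleGraph V} {D : V → ℤ}

open Classical in
/-- A chosen potential function from `H` to `R`, i.e. `R = H - lap (pot G R H)`. -/
noncomputable def pot (G : SimpleGraph V) (R H : V → ℤ) : V → ℤ :=
  if h : ∃ f, ∀ v, R v = H v - graphLap G f v then Classical.choose h else 0

omit [Nonempty V] in
lemma pot_spec {R H : V → ℤ} (h : ∃ f, ∀ v, R v = H v - graphLap G f v) :
    ∀ v, R v = H v - graphLap G (pot G R H) v := by
  rw [pot, dif_pos h]
  exact Classical.choose_spec h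

/-- the normalized potential (minimum value 0). -/
noncomputable def npot (G : SimpleGraph V) (R H : V → ℤ) : V → ℤ :=
  fun v => pot G R H v - fmin (pot G R H)

/-- the height of `H` over `R`: the oscillation of the potential. -/
noncomputable def ht (G : SimpleGraph V) (R H : V → ℤ) : ℤ := fmax (npot G R H)

lemma npot_nonneg (R H : V → ℤ) (v : V) : 0 ≤ npot G R H v := by
  have := fmin_le (pot G R H) v
  unfold npot
  omega

lemma fmin_npot (R H : V → ℤ) : fmin (npot G R H) = 0 := by
  unfold npot
  rw [show (fun v => pot G R H v - fmin (pot G R H))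
    = fun v => pot G R H v + (- fmin (pot G R H)) from funext (fun v => by ring)]
  rw [fmin_add_const]
  ring

lemma npot_le_ht (R H : V → ℤ) (v : V) : npot G R H v ≤ ht G R H := le_fmax _ v

lemma exists_npot_zero (R H : V → ℤ) : ∃ v, npot G R H v = 0 := by
  obtain ⟨v, hv⟩ := exists_fmin (pot G R H)
  exact ⟨v, by unfold npot; omega⟩

lemma exists_npot_ht (R H : V → ℤ) : ∃ v, npot G R H v = ht G R H := exists_fmax _

lemma ht_nonneg (R H : V → ℤ) : 0 ≤ ht G R H := by
  obtain ⟨v, hv⟩ := exists_npot_ht (G := G) R H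
  have := npot_nonneg (G := G) R H v
  omega

lemma npot_spec {R H : V → ℤ} (h : ∃ f, ∀ v, R v = H v - graphLap G f v) :
    ∀ v, R v = H v - graphLap G (npot G R H) v := by
  intro v
  have h1 := pot_spec h v
  have h2 : graphLap G (npot G R H) v = graphLap G (pot G R H) v := by
    unfold npot
    rw [show (fun x => pot G R H x - fmin (pot G R H))
      = fun x => pot G R H x + (- fmin (pot G R H)) from funext (fun x => by ring)]
    rw [lap_add_const]
  omega

/-- oscillation of potentials between two fixed divisors is well-defined. -/
lemma osc_eq (hG : G.Connected) {R H : V → ℤ} (f g : V → ℤ)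
    (hf : ∀ v, R v = H v - graphLap G f v) (hg : ∀ v, R v = H v - graphLap G g v) :
    fmax f - fmin f = fmax g - fmin g := by
  have hlap : ∀ v, graphLap G (fun x => f x - g x) v = 0 := by
    intro v
    rw [lap_sub_apply]
    have := hf v
    have := hg v
    omega
  have hconst := const_of_lap_zero hG hlap
  obtain ⟨x₀⟩ := (inferInstance : Nonempty V)
  have hfg : ∀ v, g v = f v + (g x₀ - f x₀) := by
    intro v
    have := hconst v x₀
    omega
  rw [fmax_congr hfg, fmin_congr hfg, fmax_add_const, fmin_add_const]
  ring

lemma ht_eq_osc (hG : G.Connected) {R H : V → ℤ} (f : V → ℤ)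
    (hf : ∀ v, R v = H v - graphLap G f v) : ht G R H = fmax f - fmin f := by
  have h1 : ht G R H = fmax (npot G R H) - fmin (npot G R H) := by
    rw [fmin_npot, sub_zero]; rfl
  rw [h1]
  exact osc_eq hG _ f (npot_spec ⟨f, hf⟩) hf

lemma ht_eq_zero_iff (hG : G.Connected) {R H : V → ℤ}
    (h : ∃ f, ∀ v, R v = H v - graphLap G f v) : ht G R H = 0 ↔ R = H := by
  constructor
  · intro h0
    funext v
    have h1 := npot_spec h v
    have h2 : ∀ w, npot G R H w = 0 := by
      intro w
      have := npot_nonneg (G := G) R H w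
      have := npot_le_ht (G := G) R H w
      omega
    have h3 : graphLap G (npot G R H) v = 0 := by
      rw [lap_congr (g := fun _ => 0) h2, lap_const]
    omega
  · intro hRH
    subst hRH
    have h1 : ∀ v, graphLap G (pot G R R) v = 0 := by
      intro v
      have := pot_spec h v
      omega
    have h2 := const_of_lap_zero hG h1
    obtain ⟨x₀⟩ := (inferInstance : Nonempty V)
    have h3 : ∀ v, pot G R R v = pot G R R x₀ := fun v => h2 v x₀
    have h4 : fmax (pot G R R) = pot G R R x₀ :=
      fmax_eq (fun v => le_of_eq (h3 v)) ⟨x₀, rfl⟩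
    have h5 : fmin (pot G R R) = pot G R R x₀ :=
      fmin_eq (fun v => ge_of_eq (h3 v)) ⟨x₀, rfl⟩
    have := ht_eq_osc hG _ (pot_spec h)
    omega

/-- the parent divisor of `H` (toward the root `R`). -/
noncomputable def par (G : SimpleGraph V) (R H : V → ℤ) : V → ℤ :=
  chainD G H (npot G R H) (ht G R H - 1)

lemma par_mem {R H : V → ℤ} (hR : R ∈ Dset G D) (hH : H ∈ Dset G D) :
    par G R H ∈ Dset G D := by
  have h := equiv_of_mem hH hR
  apply chain_mem hH
  intro v
  rw [← npot_spec h v]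
  exact eff_of_mem hR v

lemma par_eq_sub {R H : V → ℤ} (h : ∃ f, ∀ v, R v = H v - graphLap G f v) :
    ∀ v, par G R H v = H v - graphLap G (ind (fun x => ht G R H ≤ npot G R H x)) v := by
  intro v
  have h1 := chain_succ (G := G) H (npot G R H) (ht G R H - 1) v
  have ht' : ht G R H - 1 + 1 = ht G R H := by ring
  rw [ht'] at h1
  have h2 : chainD G H (npot G R H) (ht G R H) = H :=
    chain_top (fun w => npot_le_ht (G := G) R H w)
  rw [h2] at h1
  exact h1

lemma par_root {R H : V → ℤ} (hG : G.Connected)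
    (h : ∃ f, ∀ v, R v = H v - graphLap G f v) (hRH : H = R) : par G R H = H := by
  have h0 : ht G R H = 0 := (ht_eq_zero_iff hG h).mpr hRH.symm
  funext v
  show chainD G H (npot G R H) (ht G R H - 1) v = H v
  unfold chainD
  rw [h0]
  have h2 : ∀ x, max (npot G R H x) (0 - 1) = npot G R H x :=
    fun x => max_eq_left (by have := npot_nonneg (G := G) R H x; omega)
  rw [lap_congr h2]
  have h3 := npot_spec h v
  have h4 : H v = R v := by rw [hRH]
  omega

lemma ht_par (hG : G.Connected) {R H : V → ℤ}
    (h : ∃ f, ∀ v, R v = H v - graphLap G f v) (hne : ht G R H ≠ 0) :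
    ht G R (par G R H) = ht G R H - 1 := by
  have hd1 : 1 ≤ ht G R H := by have := ht_nonneg (G := G) R H; omega
  have hspec : ∀ v, R v = par G R H v
      - graphLap G (fun x => npot G R H x - max (npot G R H x) (ht G R H - 1)) v := by
    intro v
    have h1 := npot_spec h v
    have h2 : par G R H v
        = H v - graphLap G (fun x => max (npot G R H x) (ht G R H - 1)) v := rfl
    have h3 := lap_sub_apply (G := G) (npot G R H)
      (fun x => max (npot G R H x) (ht G R H - 1)) v
    omega
  have hosc := ht_eq_osc hG _ hspec
  have hmax : fmax (fun x => npot G R H x - max (npot G R H x) (ht G R H - 1)) = 0 := by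
    apply fmax_eq
    · intro v
      show npot G R H v - max (npot G R H v) (ht G R H - 1) ≤ 0
      have := le_max_left (npot G R H v) (ht G R H - 1)
      omega
    · obtain ⟨v, hv⟩ := exists_npot_ht (G := G) R H
      refine ⟨v, ?_⟩
      show npot G R H v - max (npot G R H v) (ht G R H - 1) = 0
      rw [hv, max_eq_left (by omega)]
      ring
  have hmin : fmin (fun x => npot G R H x - max (npot G R H x) (ht G R H - 1)) = 1 - ht G R H := by
    apply fmin_eq
    · intro v
      show 1 - ht G R H ≤ npot G R H v - max (npot G R H v) (ht G R H - 1)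
      have h5 := npot_nonneg (G := G) R H v
      rcases le_total (npot G R H v) (ht G R H - 1) with hle | hle
      · rw [max_eq_right hle]; omega
      · rw [max_eq_left hle]; omega
    · obtain ⟨v, hv⟩ := exists_npot_zero (G := G) R H
      refine ⟨v, ?_⟩
      show npot G R H v - max (npot G R H v) (ht G R H - 1) = 1 - ht G R H
      rcases le_total (npot G R H v) (ht G R H - 1) with hle | hle
      · rw [max_eq_right hle, hv]; ring
      · rw [max_eq_left hle]
        omega
  omega

lemma par_ne (hG : G.Connected) {R H : V → ℤ}
    (h : ∃ f, ∀ v, R v = H v - graphLap G f v) (hne : ht G R H ≠ 0) :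
    par G R H ≠ H := by
  intro hc
  have h1 := ht_par hG h hne
  rw [hc] at h1
  omega

end ScwProof

namespace ScwProof

variable {V : Type u} [Fintype V] [Nonempty V] {G : SimpleGraph V} {D : V → ℤ}

lemma ht_def (R H : V → ℤ) : ht G R H = fmax (npot G R H) := rfl

lemma ht_ne_zero (hG : G.Connected) {R H : V → ℤ}
    (h : ∃ f, ∀ v, R v = H v - graphLap G f v) (hne : H ≠ R) : ht G R H ≠ 0 := by
  intro hc
  exact hne ((ht_eq_zero_iff hG h).mp hc).symm

/-- the move from `H` to its parent: support and boundary facts. -/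
lemma par_move (hG : G.Connected) (hp : PartHyp G D) {R H : V → ℤ}
    (hR : R ∈ Dset G D) (hH : H ∈ Dset G D) (hne : H ≠ R) :
    (∀ v, 1 ≤ H v → ht G R H ≤ npot G R H v) ∧
    (∀ v, 1 ≤ par G R H v → ¬ ht G R H ≤ npot G R H v) ∧
    (∀ x y, G.Adj x y → ht G R H ≤ npot G R H x → ¬ ht G R H ≤ npot G R H y →
      1 ≤ H x ∧ 1 ≤ par G R H y) := by
  have hex := equiv_of_mem hH hR
  have htne := ht_ne_zero hG hex hne
  have hmove := move_supp hp hH (par_mem hR hH) (Ne.symm (par_ne hG hex htne))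
    (fun x => ht G R H ≤ npot G R H x) (par_eq_sub hex)
  exact hmove

/-- Lemma M: an edge of `G` joining the supports of two distinct members of `Dset`
forces the two members to be in parent relation. -/
lemma edge_parent (hG : G.Connected) (hp : PartHyp G D) {R H K : V → ℤ}
    (hR : R ∈ Dset G D) (hH : H ∈ Dset G D) (hK : K ∈ Dset G D) (hne : H ≠ K)
    {x y : V} (hadj : G.Adj x y) (hx : 1 ≤ H x) (hy : 1 ≤ K y) :
    K = par G R H ∨ H = par G R K := by
  have hexH := equiv_of_mem hH hR
  have hexK := equiv_of_mem hK hR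
  have hsx : npot G R H x = ht G R H := by
    have := (supp_fmin_fmax hG hp hH hR _ (npot_spec hexH)).2 x hx
    rw [this, ht_def]
  have hsy : npot G R K y = ht G R K := by
    have := (supp_fmin_fmax hG hp hK hR _ (npot_spec hexK)).2 y hy
    rw [this, ht_def]
  have hstep : fmax (npot G R H) - 1 ≤ npot G R H y :=
    edge_step hG hp hH hR _ (npot_spec hexH) hadj hx
  have hstep' : ht G R H - 1 ≤ npot G R H y := by rw [ht_def]; exact hstep
  by_cases hcase : ht G R H ≤ npot G R H y
  · -- `npot_H` is maximal at y as well; look from the side of `K`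
    have hstepK : fmax (npot G R K) - 1 ≤ npot G R K x :=
      edge_step hG hp hK hR _ (npot_spec hexK) hadj.symm hy
    have hstepK' : ht G R K - 1 ≤ npot G R K x := by rw [ht_def]; exact hstepK
    by_cases hcase2 : ht G R K ≤ npot G R K x
    · -- contradiction via the potential between H and K
      exfalso
      have hKeq : ∀ v, K v = H v - graphLap G (fun z => pot G R H z - pot G R K z) v := by
        intro v
        have h1 := pot_spec hexH v
        have h2 := pot_spec hexK v
        have h3 := lap_sub_apply (G := G) (pot G R H) (pot G R K) v
        omega
      have hosc := edge_osc hG hp hH hK hne _ hKeq hadj hx hy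
      have hvx := (supp_fmin_fmax hG hp hH hK _ hKeq).2 x hx
      have hvy := (supp_fmin_fmax hG hp hH hK _ hKeq).1 y hy
      -- the potential difference takes the same value at x and y
      have hhx : npot G R H x = npot G R H y := by
        have := npot_le_ht (G := G) R H y
        omega
      have hkx : npot G R K x = npot G R K y := by
        have := npot_le_ht (G := G) R K x
        omega
      have hpx : pot G R H x - pot G R H y = npot G R H x - npot G R H y := by
        unfold npot; ring
      have hpy : pot G R K x - pot G R K y = npot G R K x - npot G R K y := by
        unfold npot; ring
      have heqxy : pot G R H x - pot G R K x = pot G R H y - pot G R K y := by omega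
      omega
    · -- K-side: x is one level below the top, so H is the parent of K
      have hKne : K ≠ R := by
        intro hc
        rw [hc] at hcase2 hstepK'
        have h0 : ht G R R = 0 := (ht_eq_zero_iff hG (equiv_of_mem hR hR)).mpr rfl
        have := npot_nonneg (G := G) R R x
        omega
      have hb := (par_move hG hp hR hK hKne).2.2 y x hadj.symm
        (by omega : ht G R K ≤ npot G R K y) hcase2
      right
      exact class_unique hp hH (par_mem hR hK) hx hb.2
  · -- H-side: y is one level below the top, so K is the parent of H
    have hHne : H ≠ R := by
      intro hc
      rw [hc] at hcase hstep'
      have h0 : ht G R R = 0 := (ht_eq_zero_iff hG (equiv_of_mem hR hR)).mpr rfl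
      have := npot_nonneg (G := G) R R y
      omega
    have hb := (par_move hG hp hR hH hHne).2.2 x y hadj
      (by omega : ht G R H ≤ npot G R H x) hcase
    left
    exact class_unique hp hK (par_mem hR hH) hy hb.2

end ScwProof

namespace ScwProof

open SimpleGraph

variable {α : Type*}

/-- the graph associated with a parent function. -/
def parGraph (p : α → α) : SimpleGraph α where
  Adj a b := a ≠ b ∧ (b = p a ∨ a = p b)
  symm := by
    constructor
    intro a b ⟨h1, h2⟩
    exact ⟨h1.symm, h2.symm⟩
  loopless := by constructor; intro a ⟨h1, _⟩; exact h1 rfl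

section ParTree

variable {p : α → α} {h : α → ℤ} {r : α}
  (hroot : p r = r) (hpar : ∀ i, i ≠ r → h (p i) = h i - 1) (hnn : ∀ i, 0 ≤ h i)
  (hzero : ∀ i, h i = 0 → i = r)

include hpar in
lemma parGraph_p_ne {i : α} (hi : i ≠ r) : p i ≠ i := by
  intro hc
  have := hpar i hi
  rw [hc] at this
  omega

include hroot hpar in
lemma parGraph_adj_cases {a b : α} (hab : (parGraph p).Adj a b) :
    (b = p a ∧ a ≠ r) ∨ (a = p b ∧ b ≠ r) := by
  obtain ⟨hne, hor⟩ := hab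
  rcases hor with h1 | h1
  · left
    refine ⟨h1, ?_⟩
    intro hc
    rw [hc, hroot] at h1
    exact hne (h1 ▸ hc.symm ▸ rfl)
  · right
    refine ⟨h1, ?_⟩
    intro hc
    rw [hc, hroot] at h1
    exact hne (h1 ▸ hc ▸ rfl)

include hroot hpar hnn hzero in
lemma parGraph_reachable : ∀ (m : ℕ) (i : α), h i ≤ (m : ℤ) → (parGraph p).Reachable i r := by
  intro m
  induction m with
  | zero =>
    intro i hi
    have : h i = 0 := le_antisymm (by exact_mod_cast hi) (hnn i)
    rw [hzero i this]
  | succ m ih =>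
    intro i hi
    by_cases hir : i = r
    · rw [hir]
    · have hadj : (parGraph p).Adj i (p i) :=
        ⟨(parGraph_p_ne hpar hir).symm, Or.inl rfl⟩
      have hlt : h (p i) ≤ (m : ℤ) := by
        have := hpar i hir
        push_cast at hi ⊢
        omega
      exact hadj.reachable.trans (ih (p i) hlt)

include hroot hpar hnn hzero in
lemma parGraph_connected [Nonempty α] : (parGraph p).Connected := by
  constructor
  intro a b
  have ha := parGraph_reachable hroot hpar hnn hzero (h a).toNat a (by omega)
  have hb := parGraph_reachable hroot hpar hnn hzero (h b).toNat b (by omega)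
  exact ha.trans hb.symm

/-- descendant relation. -/
def isDesc (p : α → α) (k i : α) : Prop := ∃ m : ℕ, p^[m] i = k

include hroot hpar hnn in
lemma parGraph_iter_ht {k : α} (hk : k ≠ r) :
    ∀ (m : ℕ) (i : α), p^[m] i = k → h i = h k + m := by
  intro m
  induction m with
  | zero => intro i hi; simp at hi; rw [hi]; ring
  | succ m ih =>
    intro i hi
    rw [Function.iterate_succ_apply] at hi
    by_cases hir : i = r
    · exfalso
      rw [hir, hroot] at hi
      have : p^[m] r = r := Function.iterate_fixed hroot m
      exact hk ((this ▸ hi) ▸ rfl)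
    · have := ih (p i) hi
      have := hpar i hir
      push_cast
      omega

include hroot hpar hnn in
lemma parGraph_not_desc_par {k : α} (hk : k ≠ r) : ¬ isDesc p k (p k) := by
  rintro ⟨m, hm⟩
  have h1 := parGraph_iter_ht hroot hpar hnn hk m (p k) hm
  have h2 := hpar k hk
  omega

lemma parGraph_desc_step {k i : α} (hd : isDesc p k i) (hik : i ≠ k) : isDesc p k (p i) := by
  obtain ⟨m, hm⟩ := hd
  cases m with
  | zero => simp at hm; exact absurd hm hik
  | succ m =>
    rw [Function.iterate_succ_apply] at hm
    exact ⟨m, hm⟩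

lemma parGraph_desc_of_par {k i : α} (hd : isDesc p k (p i)) : isDesc p k i := by
  obtain ⟨m, hm⟩ := hd
  exact ⟨m + 1, by rw [Function.iterate_succ_apply]; exact hm⟩

include hroot hpar hnn in
lemma parGraph_walk_mem_edges {k : α} (hk : k ≠ r) :
    ∀ {a b : α} (w : (parGraph p).Walk a b), isDesc p k a → ¬ isDesc p k b →
      s(k, p k) ∈ w.edges := by
  intro a b w
  induction w with
  | nil => intro h1 h2; exact absurd h1 h2
  | @cons u x y hadj w ih =>
    intro h1 h2
    rw [SimpleGraph.Walk.edges_cons]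
    by_cases hx : isDesc p k x
    · exact List.mem_cons_of_mem _ (ih hx h2)
    · rcases parGraph_adj_cases hroot hpar hadj with ⟨hux, _⟩ | ⟨hux, _⟩
      · -- x = p u
        by_cases huk : u = k
        · subst huk
          have : s(u, p u) = s(u, x) := by rw [hux]
          rw [this]
          exact List.mem_cons_self
        · exact absurd (hux ▸ parGraph_desc_step h1 huk) hx
      · exact absurd (parGraph_desc_of_par (hux ▸ h1)) hx

end ParTree

end ScwProof

namespace ScwProof

open SimpleGraph

variable {α : Type*}
variable {p : α → α} {h : α → ℤ} {r : α}
  (hroot : p r = r) (hpar : ∀ i, i ≠ r → h (p i) = h i - 1) (hnn : ∀ i, 0 ≤ h i)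
  (hzero : ∀ i, h i = 0 → i = r)

include hroot hpar hnn hzero in
lemma parGraph_isTree [Nonempty α] : (parGraph p).IsTree := by
  constructor
  · exact parGraph_connected hroot hpar hnn hzero
  · rw [isAcyclic_iff_forall_adj_isBridge]
    intro a b hab
    rw [isBridge_iff_adj_and_forall_walk_mem_edges]
    intro w
    rcases parGraph_adj_cases hroot hpar hab with ⟨hba, har⟩ | ⟨hab', hbr⟩
    · have h1 : isDesc p a a := ⟨0, rfl⟩
      have h2 : ¬ isDesc p a b := by
        rw [hba]; exact parGraph_not_desc_par hroot hpar hnn har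
      have h3 := parGraph_walk_mem_edges hroot hpar hnn har w h1 h2
      have h4 : s(a, b) = s(a, p a) := by rw [hba]
      rw [h4]
      exact h3
    · have h1 : isDesc p b b := ⟨0, rfl⟩
      have h2 : ¬ isDesc p b a := by
        rw [hab']; exact parGraph_not_desc_par hroot hpar hnn hbr
      have h3 := parGraph_walk_mem_edges hroot hpar hnn hbr w.reverse h1 h2
      rw [SimpleGraph.Walk.edges_reverse, List.mem_reverse] at h3
      have h4 : s(a, b) = s(b, p b) := by rw [← hab', Sym2.eq_swap]
      rw [h4]
      exact h3

end ScwProof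

namespace ScwProof

variable {V : Type u} [Fintype V] [Nonempty V] {G : SimpleGraph V} {D : V → ℤ}

lemma exists_enum (hp : PartHyp G D) (hdeg : 1 ≤ ∑ v, D v) {R₀ : V → ℤ}
    (hR : R₀ ∈ Dset G D) :
    ∃ (n : ℕ) (em : Fin n → (V → ℤ)) (pF : Fin n → Fin n) (rF : Fin n),
      (∀ i, em i ∈ Dset G D) ∧ Function.Injective em ∧
      (∀ E, E ∈ Dset G D → ∃ i, em i = E) ∧
      (∀ i, em (pF i) = par G R₀ (em i)) ∧ em rF = R₀ := by
  classical
  have hsupp : ∀ E : {E // E ∈ Dset G D}, ∃ v, 1 ≤ E.1 v := by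
    rintro ⟨E, hE⟩
    by_contra hc
    push_neg at hc
    have hz : ∑ v, E v = 0 := Finset.sum_eq_zero (fun v _ => by
      have h1 := hc v
      have h2 := eff_of_mem hE v
      simp only [] at h1 ⊢
      omega)
    have := sum_eq_of_mem hE
    omega
  haveI : Finite {E // E ∈ Dset G D} := by
    apply Finite.of_injective (fun E => Classical.choose (hsupp E))
    intro E F hEF
    have hEF' : Classical.choose (hsupp E) = Classical.choose (hsupp F) := hEF
    have h1 := Classical.choose_spec (hsupp E)
    have h2 := Classical.choose_spec (hsupp F)
    rw [hEF'] at h1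
    exact Subtype.ext (class_unique hp E.2 F.2 h1 h2)
  haveI : Fintype {E // E ∈ Dset G D} := Fintype.ofFinite _
  let Bt := {E // E ∈ Dset G D}
  let eB : Bt ≃ Fin (Fintype.card Bt) := Fintype.equivFin Bt
  refine ⟨Fintype.card Bt, fun i => (eB.symm i).1,
    fun i => eB ⟨par G R₀ (eB.symm i).1, par_mem hR (eB.symm i).2⟩,
    eB ⟨R₀, hR⟩, fun i => (eB.symm i).2, ?_, ?_, ?_, ?_⟩
  · intro i j hij
    have h1 : eB.symm i = eB.symm j := Subtype.ext hij
    exact eB.symm.injective h1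
  · intro E hE
    exact ⟨eB ⟨E, hE⟩, by simp only [Equiv.symm_apply_apply]⟩
  · intro i
    simp only [Equiv.symm_apply_apply]
  · simp only [Equiv.symm_apply_apply]

end ScwProof

open ScwProof

/-- If `D` is a positive-rank divisor on a finite connected simple graph `G` such that
any two distinct effective divisors equivalent to `D` have disjoint supports, then
`scw(G) ≤ deg(D)`. -/
theorem screewidth_le_deg_of_partitioning [Fintype V] (G : SimpleGraph V)
    (hG : G.Connected) (D : V → ℤ) (hrank : DivPosRank G D)
    (hpart : ∀ D₁ D₂ : V → ℤ, DivEquiv G D D₁ → DivEquiv G D D₂ →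
      DivEffective D₁ → DivEffective D₂ → D₁ ≠ D₂ → Disjoint (divSupp D₁) (divSupp D₂)) :
    (screewidth G : ℤ) ≤ ∑ v : V, D v := by
  classical
  haveI : Nonempty V := hG.nonempty
  have hp : PartHyp G D := fun E F hE hF hne => hpart E F hE.1 hF.1 hE.2 hF.2 hne
  obtain ⟨R₀, hReq, hReff, hRv⟩ := hrank (Classical.arbitrary V)
  have hR : R₀ ∈ Dset G D := ⟨hReq, hReff⟩
  have hdeg : 1 ≤ ∑ v, D v := by
    have h1 := sum_eq_of_mem hR
    have h2 : R₀ (Classical.arbitrary V) ≤ ∑ v, R₀ v :=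
      Finset.single_le_sum (fun v _ => hReff v) (Finset.mem_univ _)
    omega
  obtain ⟨n, em, pF, rF, hmem, hinj, hsurj, hpF, hrF⟩ := exists_enum hp hdeg hR
  haveI : Nonempty (Fin n) := ⟨rF⟩
  have hnotR : ∀ i, i ≠ rF → em i ≠ R₀ := by
    intro i hi hc
    exact hi (hinj (by rw [hc, hrF]))
  have hroot : pF rF = rF := by
    apply hinj
    rw [hpF, hrF]
    exact par_root hG (equiv_of_mem hR hR) rfl
  have hpar : ∀ i, i ≠ rF → ht G R₀ (em (pF i)) = ht G R₀ (em i) - 1 := by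
    intro i hi
    rw [hpF]
    exact ht_par hG (equiv_of_mem (hmem i) hR)
      (ht_ne_zero hG (equiv_of_mem (hmem i) hR) (hnotR i hi))
  have hnn : ∀ i, 0 ≤ ht G R₀ (em i) := fun i => ht_nonneg _ _
  have hzero : ∀ i, ht G R₀ (em i) = 0 → i = rF := by
    intro i h0
    have h1 := (ht_eq_zero_iff hG (equiv_of_mem (hmem i) hR)).mp h0
    exact hinj (by rw [hrF, h1])
  have htree : (parGraph pF).IsTree := parGraph_isTree hroot hpar hnn hzero
  -- the tree-cut decomposition
  let Dc : TreeCutDecomp G :=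
    { B := Fin n
      finB := inferInstance
      T := parGraph pF
      isTree := htree
      bag := fun i => divSupp (em i)
      disj := fun i j hij => hp (em i) (em j) (hmem i) (hmem j) (fun hc => hij (hinj hc))
      covers := by
        intro v
        obtain ⟨E, h1, h2, h3⟩ := hrank v
        obtain ⟨i, hi⟩ := hsurj E ⟨h1, h2⟩
        exact ⟨i, show (1:ℤ) ≤ em i v by rw [hi]; exact h3⟩ }
  -- every edge of G between two distinct bags gives a tree edge
  have hedge : ∀ (b d : Fin n) (v w : V), b ≠ d → G.Adj v w → 1 ≤ em b v → 1 ≤ em d w →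
      (parGraph pF).Adj b d := by
    intro b d v w hbd hadj h1 h2
    have hbd' : em b ≠ em d := fun hc => hbd (hinj hc)
    rcases edge_parent hG hp hR (hmem b) (hmem d) hbd' hadj h1 h2 with hcase | hcase
    · exact ⟨hbd, Or.inl (hinj (hcase.trans (hpF b).symm))⟩
    · exact ⟨hbd, Or.inr (hinj (hcase.trans (hpF d).symm))⟩
  -- the link adhesion bound, directed version
  have hlink1 : ∀ (i j : Fin n), (parGraph pF).Adj i j → j = pF i →
      ((Dc.linkAdh s(i, j)).ncard : ℤ) ≤ ∑ v, D v := by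
    intro i j hij hji
    have hirF : i ≠ rF := by
      intro hc
      have hjr : j = rF := by rw [hji, hc, hroot]
      exact hij.1 (hc.trans hjr.symm)
    have hHne : em i ≠ R₀ := hnotR i hirF
    have hKval : em j = par G R₀ (em i) := by rw [hji, hpF]
    have pm := par_move hG hp hR (hmem i) hHne
    set SH : Finset V := Finset.univ.filter (fun v => 1 ≤ em i v) with hSH
    set F2 : Finset (Sym2 V) := SH.biUnion (fun v =>
      (Finset.univ.filter (fun w => 1 ≤ em j w ∧ G.Adj v w)).image (fun w => s(v, w)))
      with hF2
    have hsub : Dc.linkAdh s(i, j) ⊆ ↑F2 := by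
      rintro e he
      simp only [TreeCutDecomp.linkAdh, Set.mem_setOf_eq] at he
      obtain ⟨heG, v, w, b, d, heq, hvb, hwd, hwalks⟩ := he
      have hvb' : 1 ≤ em b v := hvb
      have hwd' : 1 ≤ em d w := hwd
      have hadj : G.Adj v w := by rw [heq, SimpleGraph.mem_edgeSet] at heG; exact heG
      by_cases hbd : b = d
      · exfalso
        subst hbd
        have hnil := hwalks SimpleGraph.Walk.nil
        simp [SimpleGraph.Walk.edges_nil] at hnil
      · have hT := hedge b d v w hbd hadj hvb' hwd'
        have hw1 := hwalks (SimpleGraph.Walk.cons hT SimpleGraph.Walk.nil)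
        simp only [SimpleGraph.Walk.edges_cons, SimpleGraph.Walk.edges_nil,
          List.mem_singleton] at hw1
        rw [Sym2.eq_iff] at hw1
        rcases hw1 with ⟨hib, hjd⟩ | ⟨hid, hjb⟩
        · refine Finset.mem_coe.mpr (Finset.mem_biUnion.mpr ⟨v, ?_, ?_⟩)
          · rw [hSH]
            exact Finset.mem_filter.mpr ⟨Finset.mem_univ _, by rw [hib]; exact hvb'⟩
          · refine Finset.mem_image.mpr ⟨w, ?_, heq.symm⟩
            exact Finset.mem_filter.mpr ⟨Finset.mem_univ _, ⟨by rw [hjd]; exact hwd', hadj⟩⟩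
        · refine Finset.mem_coe.mpr (Finset.mem_biUnion.mpr ⟨w, ?_, ?_⟩)
          · rw [hSH]
            exact Finset.mem_filter.mpr ⟨Finset.mem_univ _, by rw [hid]; exact hwd'⟩
          · refine Finset.mem_image.mpr ⟨v, ?_, by rw [heq, Sym2.eq_swap]⟩
            exact Finset.mem_filter.mpr ⟨Finset.mem_univ _,
              ⟨by rw [hjb]; exact hvb', hadj.symm⟩⟩
    have hcard0 : (Dc.linkAdh s(i, j)).ncard ≤ F2.card := by
      have := Set.ncard_le_ncard hsub (F2.finite_toSet)
      rwa [Set.ncard_coe_finset] at this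
    have hcard1 : F2.card ≤ ∑ v ∈ SH,
        (Finset.univ.filter (fun w => 1 ≤ em j w ∧ G.Adj v w)).card := by
      refine le_trans Finset.card_biUnion_le ?_
      exact Finset.sum_le_sum (fun v _ => Finset.card_image_le)
    have hper : ∀ v ∈ SH,
        ((Finset.univ.filter (fun w => 1 ≤ em j w ∧ G.Adj v w)).card : ℤ) ≤ em i v := by
      intro v hv
      rw [hSH] at hv
      have hv1 : 1 ≤ em i v := (Finset.mem_filter.mp hv).2
      have hAv : ht G R₀ (em i) ≤ npot G R₀ (em i) v := pm.1 v hv1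
      have hKv := par_eq_sub (G := G) (equiv_of_mem (hmem i) hR) v
      rw [← hKval] at hKv
      have hlap := lap_ind_mem (G := G)
        (A := fun x => ht G R₀ (em i) ≤ npot G R₀ (em i) x) hAv
      have hlap' : graphLap G (ind (fun x => ht G R₀ (em i) ≤ npot G R₀ (em i) x)) v
          = nbrZ G (fun x => ¬ ht G R₀ (em i) ≤ npot G R₀ (em i) x) v := hlap
      have hKeff := eff_of_mem (hmem j) v
      have hnb : nbrZ G (fun x => ¬ ht G R₀ (em i) ≤ npot G R₀ (em i) x) v ≤ em i v := by
        omega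
      have hfc : ((Finset.univ.filter (fun w => 1 ≤ em j w ∧ G.Adj v w)).card : ℤ)
          ≤ nbrZ G (fun x => ¬ ht G R₀ (em i) ≤ npot G R₀ (em i) x) v := by
        rw [Finset.card_filter]
        push_cast
        unfold nbrZ
        apply Finset.sum_le_sum
        intro w _
        by_cases hcond : 1 ≤ em j w ∧ G.Adj v w
        · have hnA : ¬ ht G R₀ (em i) ≤ npot G R₀ (em i) w := by
            apply pm.2.1 w
            rw [← hKval]
            exact hcond.1
          rw [if_pos hcond, if_pos ⟨hcond.2, hnA⟩]
        · rw [if_neg hcond]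
          split_ifs <;> norm_num
      omega
    have hsum : ∑ v ∈ SH, em i v ≤ ∑ v, D v := by
      have h1 : ∑ v ∈ SH, em i v ≤ ∑ v, em i v :=
        Finset.sum_le_sum_of_subset_of_nonneg (Finset.subset_univ _)
          (fun v _ _ => eff_of_mem (hmem i) v)
      have h2 := sum_eq_of_mem (hmem i)
      omega
    have hfin : (F2.card : ℤ) ≤ ∑ v, D v := by
      calc (F2.card : ℤ) ≤ ((∑ v ∈ SH,
          (Finset.univ.filter (fun w => 1 ≤ em j w ∧ G.Adj v w)).card : ℕ) : ℤ) := by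
            exact_mod_cast hcard1
        _ = ∑ v ∈ SH,
            ((Finset.univ.filter (fun w => 1 ≤ em j w ∧ G.Adj v w)).card : ℤ) := by
            push_cast; rfl
        _ ≤ ∑ v ∈ SH, em i v := Finset.sum_le_sum hper
        _ ≤ ∑ v, D v := hsum
    omega
  have hlink : ∀ l ∈ (parGraph pF).edgeSet, ((Dc.linkAdh l).ncard : ℤ) ≤ ∑ v, D v := by
    intro l
    induction l using Sym2.ind with
    | _ i j =>
      intro hl
      rw [SimpleGraph.mem_edgeSet] at hl
      rcases parGraph_adj_cases (h := fun i => ht G R₀ (em i)) hroot hpar hl with ⟨hji, _⟩ | ⟨hij, _⟩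
      · exact hlink1 i j hl hji
      · rw [Sym2.eq_swap]
        exact hlink1 j i hl.symm hij
  -- node adhesions are empty
  have hnodeAdh : ∀ i : Fin n, Dc.nodeAdh i = ∅ := by
    intro i
    ext e
    simp only [TreeCutDecomp.nodeAdh, Set.mem_setOf_eq, Set.mem_empty_iff_false, iff_false]
    rintro ⟨heG, v, w, b, d, heq, hvb, hwd, hbne, hdne, hwalks⟩
    have hvb' : 1 ≤ em b v := hvb
    have hwd' : 1 ≤ em d w := hwd
    have hadj : G.Adj v w := by rw [heq, SimpleGraph.mem_edgeSet] at heG; exact heG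
    by_cases hbd : b = d
    · subst hbd
      have hnil := hwalks SimpleGraph.Walk.nil
      simp only [SimpleGraph.Walk.support_nil, List.mem_singleton] at hnil
      exact hbne hnil.symm
    · have hT := hedge b d v w hbd hadj hvb' hwd'
      have hw1 := hwalks (SimpleGraph.Walk.cons hT SimpleGraph.Walk.nil)
      simp only [SimpleGraph.Walk.support_cons, SimpleGraph.Walk.support_nil,
        List.mem_cons, List.mem_singleton, List.not_mem_nil, or_false] at hw1
      rcases hw1 with h | h
      · exact hbne h.symm
      · exact hdne h.symm
  have hnodebd : ∀ i : Fin n,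
      ((Dc.bag i).ncard : ℤ) + ((Dc.nodeAdh i).ncard : ℤ) ≤ ∑ v, D v := by
    intro i
    rw [hnodeAdh i, Set.ncard_empty]
    have hbag : Dc.bag i = ↑(Finset.univ.filter (fun v => 1 ≤ em i v)) := by
      ext v
      simp [divSupp]
      exact Iff.rfl
    rw [hbag, Set.ncard_coe_finset]
    have h1 : ((Finset.univ.filter (fun v => 1 ≤ em i v)).card : ℤ)
        ≤ ∑ v ∈ Finset.univ.filter (fun v => 1 ≤ em i v), em i v := by
      rw [Finset.card_eq_sum_ones]
      push_cast
      apply Finset.sum_le_sum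
      intro v hv
      exact (Finset.mem_filter.mp hv).2
    have h2 : ∑ v ∈ Finset.univ.filter (fun v => 1 ≤ em i v), em i v ≤ ∑ v, em i v :=
      Finset.sum_le_sum_of_subset_of_nonneg (Finset.subset_univ _)
        (fun v _ _ => eff_of_mem (hmem i) v)
    have h3 := sum_eq_of_mem (hmem i)
    omega
  -- width bound
  have hwidth : Dc.width ≤ (∑ v, D v).toNat := by
    apply csSup_le'
    rintro x (⟨l, hl, rfl⟩ | ⟨i, rfl⟩)
    · have := hlink l hl
      omega
    · have := hnodebd i
      omega
  have hscw : screewidth G ≤ Dc.width := Nat.sInf_le ⟨Dc, rfl⟩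
  have hfin2 : screewidth G ≤ (∑ v, D v).toNat := le_trans hscw hwidth
  omega
end

section
/- Let k ≥ 1 and let G be a finite connected simple graph that is k-edge-connected (every set of edges whose deletion disconnects G has size at least k) and has gonality gon(G) = k. Then sn(G) = scw(G) = gon(G) = k. -/
open SimpleGraph

universe u

variable {V : Type u}

/-- A scramble on `G`: a nonempty collection of "eggs", subsets of `V` each inducing
a connected subgraph of `G`. -/
structure Scramble [Finite V] (G : SimpleGraph V) where
  eggs : Set (Set V)
  nonempty : eggs.Nonempty
  egg_connected : ∀ E ∈ eggs, (G.induce E).Connected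

namespace Scramble

variable [Finite V] {G : SimpleGraph V}

/-- A hitting set for a scramble: a set of vertices meeting every egg. -/
def IsHittingSet (S : Scramble G) (H : Set V) : Prop :=
  ∀ E ∈ S.eggs, (H ∩ E).Nonempty

/-- An egg-cut for a scramble: a set `F` of edges of `G` such that `G - F` has two
distinct connected components each containing an egg. -/
def IsEggCut (S : Scramble G) (F : Set (Sym2 V)) : Prop :=
  F ⊆ G.edgeSet ∧ ∃ E₁ ∈ S.eggs, ∃ E₂ ∈ S.eggs,
    ∃ C₁ C₂ : (G.deleteEdges F).ConnectedComponent,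
      C₁ ≠ C₂ ∧ E₁ ⊆ C₁.supp ∧ E₂ ⊆ C₂.supp

/-- The order of a scramble: the minimum of the minimum size of a hitting set and the
minimum size of an egg-cut (the latter contributing nothing when no egg-cut exists). -/
noncomputable def order (S : Scramble G) : ℕ :=
  sInf ({n | ∃ H : Set V, S.IsHittingSet H ∧ H.ncard = n} ∪
        {n | ∃ F : Set (Sym2 V), S.IsEggCut F ∧ F.ncard = n})

end Scramble

/-- The scramble number of `G`: the maximum order of a scramble on `G`. -/
noncomputable def scrambleNumber [Finite V] (G : SimpleGraph V) : ℕ :=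
  sSup {n | ∃ S : Scramble G, S.order = n}

/-- The gonality of `G`: the minimum degree of an effective divisor of positive rank. -/
noncomputable def gonality [Fintype V] (G : SimpleGraph V) : ℕ :=
  sInf {n : ℕ | ∃ D : V → ℤ, DivEffective D ∧ DivPosRank G D ∧ ∑ v : V, D v = (n : ℤ)}

set_option linter.unusedSectionVars false
namespace Scw
open Finset
variable [Fintype V]
noncomputable def ind (A : Set V) : V → ℤ := A.indicator 1
lemma ind_mem {A : Set V} {v} (h : v ∈ A) : ind A v = 1 := Set.indicator_of_mem h 1
lemma ind_not_mem {A : Set V} {v} (h : v ∉ A) : ind A v = 0 := Set.indicator_of_notMem h 1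


lemma lap_add (G : SimpleGraph V) (f g : V → ℤ) :
    graphLap G (f + g) = graphLap G f + graphLap G g := by
  funext v
  simp only [graphLap, Pi.add_apply, ← Finset.sum_add_distrib]
  refine Finset.sum_congr rfl fun w _ => ?_
  by_cases h : G.Adj v w <;> simp [h] <;> ring

lemma lap_zero (G : SimpleGraph V) : graphLap G (0 : V → ℤ) = 0 := by
  funext v; simp [graphLap]

lemma lap_sub (G : SimpleGraph V) (f g : V → ℤ) :
    graphLap G (f - g) = graphLap G f - graphLap G g := by
  have h := lap_add G (f - g) g
  simp only [sub_add_cancel] at h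
  rw [h]; ring

lemma sum_lap (G : SimpleGraph V) (f : V → ℤ) : ∑ v, graphLap G f v = 0 := by
  classical
  have key : ∀ v w : V, (if G.Adj v w then f v - f w else 0) + (if G.Adj w v then f w - f v else 0) = 0 := by
    intro v w
    by_cases h : G.Adj v w
    · simp [h, h.symm]
    · have h' : ¬ G.Adj w v := fun hh => h hh.symm
      simp [h, h']
  have h1 : ∑ v, graphLap G f v = ∑ v, ∑ w, (if G.Adj w v then f w - f v else 0) := by
    rw [show (∑ v, graphLap G f v) = ∑ v, ∑ w, (if G.Adj v w then f v - f w else 0) from rfl]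
    exact Finset.sum_comm
  have h2 : (∑ v, graphLap G f v) + (∑ v, graphLap G f v) = 0 := by
    nth_rewrite 2 [h1]
    rw [show (∑ v, graphLap G f v) = ∑ v, ∑ w, (if G.Adj v w then f v - f w else 0) from rfl]
    rw [← Finset.sum_add_distrib]
    refine Finset.sum_eq_zero fun v _ => ?_
    rw [← Finset.sum_add_distrib]
    exact Finset.sum_eq_zero fun w _ => key v w
  omega

lemma lap_shift (G : SimpleGraph V) (f : V → ℤ) (c : ℤ) :
    graphLap G (fun v => f v - c) = graphLap G f := by
  funext v
  refine Finset.sum_congr rfl fun w _ => ?_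
  by_cases h : G.Adj v w <;> simp [h]

open Classical in
noncomputable def outDeg (G : SimpleGraph V) (A : Set V) (v : V) : ℕ :=
  (univ.filter fun w => G.Adj v w ∧ w ∉ A).card

open Classical in
noncomputable def inDeg (G : SimpleGraph V) (A : Set V) (v : V) : ℕ :=
  (univ.filter fun w => G.Adj v w ∧ w ∈ A).card

lemma lap_ind_mem (G : SimpleGraph V) {A : Set V} {v} (hv : v ∈ A) :
    graphLap G (ind A) v = outDeg G A v := by
  classical
  rw [show graphLap G (ind A) v = ∑ w, if G.Adj v w then ind A v - ind A w else 0 from rfl,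
    outDeg, Finset.card_filter]
  push_cast
  refine Finset.sum_congr rfl fun w _ => ?_
  by_cases h1 : G.Adj v w <;> by_cases h2 : w ∈ A <;>
    simp [h1, h2, ind_mem, ind_not_mem, ind_mem hv]

lemma lap_ind_not_mem (G : SimpleGraph V) {A : Set V} {v} (hv : v ∉ A) :
    graphLap G (ind A) v = -(inDeg G A v) := by
  classical
  rw [show graphLap G (ind A) v = ∑ w, if G.Adj v w then ind A v - ind A w else 0 from rfl,
    inDeg, Finset.card_filter]
  push_cast
  rw [← Finset.sum_neg_distrib]
  refine Finset.sum_congr rfl fun w _ => ?_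
  by_cases h1 : G.Adj v w <;> by_cases h2 : w ∈ A <;>
    simp [h1, h2, ind_mem, ind_not_mem, ind_not_mem hv]

open Classical in
noncomputable def cutF (G : SimpleGraph V) (A : Set V) : Finset (Sym2 V) :=
  (univ.filter (fun p : V × V => G.Adj p.1 p.2 ∧ p.1 ∈ A ∧ p.2 ∉ A)).image fun p => s(p.1, p.2)

def cutSet (G : SimpleGraph V) (A : Set V) : Set (Sym2 V) := ↑(cutF G A)

lemma mem_cutSet_iff {G : SimpleGraph V} {A : Set V} {e : Sym2 V} :
    e ∈ cutSet G A ↔ ∃ u w, G.Adj u w ∧ u ∈ A ∧ w ∉ A ∧ e = s(u, w) := by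
  classical
  simp only [cutSet, cutF, Finset.coe_image, Set.mem_image, Finset.mem_coe, Finset.mem_filter,
    Finset.mem_univ, true_and]
  constructor
  · rintro ⟨⟨u, w⟩, ⟨hadj, hu, hw⟩, rfl⟩
    exact ⟨u, w, hadj, hu, hw, rfl⟩
  · rintro ⟨u, w, hadj, hu, hw, rfl⟩
    exact ⟨(u, w), ⟨hadj, hu, hw⟩, rfl⟩

lemma mem_cutSet_of {G : SimpleGraph V} {A : Set V} {u w : V}
    (hadj : G.Adj u w) (hu : u ∈ A) (hw : w ∉ A) : s(u, w) ∈ cutSet G A :=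
  mem_cutSet_iff.2 ⟨u, w, hadj, hu, hw, rfl⟩

lemma cutSet_cases {G : SimpleGraph V} {A : Set V} {u w : V}
    (h : s(u, w) ∈ cutSet G A) : (u ∈ A ∧ w ∉ A) ∨ (w ∈ A ∧ u ∉ A) := by
  obtain ⟨a, b, _, ha, hb, he⟩ := mem_cutSet_iff.1 h
  rw [Sym2.eq_iff] at he
  rcases he with ⟨rfl, rfl⟩ | ⟨rfl, rfl⟩
  · exact Or.inl ⟨ha, hb⟩
  · exact Or.inr ⟨ha, hb⟩

lemma cutSet_subset_edgeSet {G : SimpleGraph V} {A : Set V} : cutSet G A ⊆ G.edgeSet := by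
  intro e he
  obtain ⟨u, w, hadj, _, _, rfl⟩ := mem_cutSet_iff.1 he
  exact hadj

open Classical in
lemma ncard_cutSet (G : SimpleGraph V) (A : Set V) :
    (cutSet G A).ncard = ∑ v ∈ univ.filter (· ∈ A), outDeg G A v := by
  classical
  rw [cutSet, Set.ncard_coe_finset, cutF]
  rw [Finset.card_image_of_injOn]
  · rw [Finset.card_eq_sum_card_fiberwise (f := Prod.fst) (t := univ.filter (· ∈ A))
      (fun p hp => by simp only [Finset.mem_coe, Finset.mem_filter, Finset.mem_univ, true_and] at hp ⊢; exact hp.2.1)]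
    refine Finset.sum_congr rfl fun v hv => ?_
    rw [outDeg]
    refine Finset.card_bij' (fun p _ => p.2) (fun w _ => (v, w)) ?_ ?_ ?_ ?_
    · rintro ⟨a, b⟩ hp
      simp only [Finset.mem_filter, Finset.mem_univ, true_and] at hp ⊢
      obtain ⟨⟨hadj, _, hb⟩, rfl⟩ := hp
      exact ⟨hadj, hb⟩
    · intro w hw
      simp only [Finset.mem_filter, Finset.mem_univ, true_and] at hw ⊢
      simp only [Finset.mem_filter, Finset.mem_univ, true_and] at hv
      exact ⟨⟨hw.1, hv, hw.2⟩, trivial⟩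
    · rintro ⟨a, b⟩ hp
      simp only [Finset.mem_filter, Finset.mem_univ, true_and] at hp
      simp [hp.2]
    · intro w hw; rfl
  · rintro ⟨a, b⟩ ha ⟨c, d⟩ hc he
    simp only [Finset.coe_filter, Set.mem_setOf_eq, Finset.mem_univ, true_and] at ha hc
    simp only [Sym2.eq_iff] at he
    rcases he with ⟨rfl, rfl⟩ | ⟨rfl, rfl⟩
    · rfl
    · exact (ha.2.2 hc.2.1).elim

lemma walk_stay {G : SimpleGraph V} {A : Set V} :
    ∀ {x y : V}, (G.deleteEdges (cutSet G A)).Walk x y → x ∈ A → y ∈ A := by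
  intro x y w
  induction w with
  | nil => exact id
  | cons h p ih =>
      intro hx
      rw [deleteEdges_adj] at h
      refine ih ?_
      by_contra hz
      exact h.2 (mem_cutSet_of h.1 hx hz)

lemma not_conn_del_cut (G : SimpleGraph V) {A : Set V} (h1 : A.Nonempty) (h2 : A ≠ Set.univ) :
    ¬ (G.deleteEdges (cutSet G A)).Connected := by
  intro hc
  obtain ⟨u, hu⟩ := h1
  obtain ⟨w, hw⟩ := Set.ne_univ_iff_exists_notMem A |>.1 h2
  obtain ⟨p⟩ := hc.preconnected u w
  exact hw (walk_stay p hu)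

def dsupp (E : V → ℤ) : Set V := {v | 1 ≤ E v}

lemma eff_trunc {G : SimpleGraph V} {E f : V → ℤ} (hE : DivEffective E)
    (hEf : DivEffective (E - graphLap G f)) (c : ℤ) :
    DivEffective (E - graphLap G (fun v => max (f v - c) 0)) := by
  classical
  intro v
  set g := fun v => max (f v - c) 0 with hg
  by_cases hv : f v ≤ c
  · have hle : graphLap G g v ≤ 0 := by
      rw [show graphLap G g v = ∑ w, ite (G.Adj v w) (g v - g w) 0 from rfl]
      refine Finset.sum_nonpos fun w _ => ?_
      by_cases h : G.Adj v w
      · simp only [if_pos h]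
        have h1 : g v = 0 := max_eq_right (by omega)
        have h2 : (0:ℤ) ≤ g w := le_max_right _ _
        omega
      · simp [h]
    have := hE v
    simp only [Pi.sub_apply]
    omega
  · have hle : graphLap G g v ≤ graphLap G f v := by
      rw [show graphLap G g v = ∑ w, ite (G.Adj v w) (g v - g w) 0 from rfl,
        show graphLap G f v = ∑ w, ite (G.Adj v w) (f v - f w) 0 from rfl]
      refine Finset.sum_le_sum fun w _ => ?_
      by_cases h : G.Adj v w
      · simp only [if_pos h]
        have h1 : g v = f v - c := max_eq_left (by omega)
        have h2 : f w - c ≤ g w := le_max_left _ _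
        omega
      · simp [h]
    have := hEf v
    simp only [Pi.sub_apply] at this ⊢
    omega

lemma lap_eq_zero_const {G : SimpleGraph V} (hG : G.Connected) {f : V → ℤ}
    (h : ∀ v, graphLap G f v = 0) (v w : V) : f v = f w := by
  classical
  obtain ⟨v1, _, hmax⟩ := Finset.exists_max_image univ f ⟨v, mem_univ v⟩
  have key : ∀ x y, G.Adj x y → f x = f v1 → f y = f v1 := by
    intro x y hxy hx
    by_contra hne
    have hlt : f y < f v1 := lt_of_le_of_ne (hmax y (mem_univ y)) hne
    have h0 := h x
    rw [show graphLap G f x = ∑ w, ite (G.Adj x w) (f x - f w) 0 from rfl] at h0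
    have hnonneg : ∀ w ∈ univ, (0:ℤ) ≤ ite (G.Adj x w) (f x - f w) 0 := by
      intro w _
      by_cases hh : G.Adj x w
      · simp only [if_pos hh]
        have := hmax w (mem_univ w)
        omega
      · simp [hh]
    have hz := (Finset.sum_eq_zero_iff_of_nonneg hnonneg).1 h0 y (mem_univ y)
    rw [if_pos hxy] at hz
    omega
  have all : ∀ a b (p : G.Walk a b), f a = f v1 → f b = f v1 := by
    intro a b p
    induction p with
    | nil => exact id
    | cons ha p ih => exact fun h' => ih (key _ _ ha h')
  obtain ⟨p⟩ := hG.preconnected v1 v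
  obtain ⟨q⟩ := hG.preconnected v1 w
  rw [all _ _ p rfl, all _ _ q rfl]

open Classical in
lemma rig {G : SimpleGraph V} {k : ℕ}
    (hconn : ∀ F : Set (Sym2 V), F ⊆ G.edgeSet → ¬ (G.deleteEdges F).Connected → k ≤ F.ncard)
    {E F : V → ℤ} (hE : DivEffective E) (hF : DivEffective F) (hdeg : ∑ v, E v = (k:ℤ))
    {A : Set V} (hfire : F = E - graphLap G (ind A)) (h1 : A.Nonempty) (h2 : A ≠ Set.univ) :
    (∀ v ∈ A, E v = outDeg G A v) ∧ (∀ v, v ∉ A → E v = 0) ∧ (∀ v ∈ A, F v = 0) ∧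
      (∀ v, v ∉ A → F v = inDeg G A v) ∧ (cutSet G A).ncard = k := by
  classical
  have hpoint : ∀ v ∈ A, (outDeg G A v : ℤ) ≤ E v := by
    intro v hv
    have hh := hF v
    rw [hfire] at hh
    simp only [Pi.sub_apply] at hh
    rw [lap_ind_mem G hv] at hh
    omega
  have hcut : k ≤ (cutSet G A).ncard := hconn _ cutSet_subset_edgeSet (not_conn_del_cut G h1 h2)
  rw [ncard_cutSet] at hcut
  have hsplit : ∑ v ∈ univ.filter (· ∈ A), E v + ∑ v ∈ univ.filter (fun v => ¬ v ∈ A), E v = (k:ℤ) := by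
    rw [← hdeg]
    exact Finset.sum_filter_add_sum_filter_not univ _ _
  have hER : (0:ℤ) ≤ ∑ v ∈ univ.filter (fun v => ¬ v ∈ A), E v :=
    Finset.sum_nonneg fun v _ => hE v
  have hmono : ((∑ v ∈ univ.filter (· ∈ A), outDeg G A v : ℕ) : ℤ) ≤
      ∑ v ∈ univ.filter (· ∈ A), E v := by
    push_cast
    refine Finset.sum_le_sum fun v hv => hpoint v ?_
    simpa using hv
  have hkle : (k : ℤ) ≤ ((∑ v ∈ univ.filter (· ∈ A), outDeg G A v : ℕ) : ℤ) := by
    exact_mod_cast hcut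
  -- all inequalities are equalities
  have heqsum : ∑ v ∈ univ.filter (· ∈ A), E v = (k:ℤ) := by omega
  have heqout : ((∑ v ∈ univ.filter (· ∈ A), outDeg G A v : ℕ) : ℤ) = (k:ℤ) := by omega
  have hrest : ∑ v ∈ univ.filter (fun v => ¬ v ∈ A), E v = 0 := by omega
  have hEzero : ∀ v, v ∉ A → E v = 0 := by
    intro v hv
    have := (Finset.sum_eq_zero_iff_of_nonneg (fun w _ => hE w)).1 hrest v (by simpa using hv)
    exact this
  have hEout : ∀ v ∈ A, E v = outDeg G A v := by
    intro v hv
    have hdiff : ∑ v ∈ univ.filter (· ∈ A), (E v - (outDeg G A v : ℤ)) = 0 := by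
      rw [Finset.sum_sub_distrib]
      push_cast at heqout ⊢
      omega
    have := (Finset.sum_eq_zero_iff_of_nonneg
      (fun w hw => by
        have := hpoint w (by simpa using hw)
        omega)).1 hdiff v (by simpa using hv)
    omega
  refine ⟨hEout, hEzero, ?_, ?_, ?_⟩
  · intro v hv
    rw [hfire]
    simp only [Pi.sub_apply]
    rw [lap_ind_mem G hv, hEout v hv]
    ring
  · intro v hv
    rw [hfire]
    simp only [Pi.sub_apply]
    rw [lap_ind_not_mem G hv, hEzero v hv]
    ring
  · rw [ncard_cutSet]
    exact_mod_cast heqout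

variable {G : SimpleGraph V}

lemma lap_const (G : SimpleGraph V) (c : ℤ) : graphLap G (fun _ => c) = 0 := by
  classical
  funext v
  rw [show graphLap G (fun _ => c) v = ∑ w, ite (G.Adj v w) (c - c) 0 from rfl]
  refine Finset.sum_eq_zero fun w _ => ?_
  by_cases h : G.Adj v w <;> simp [h]

lemma lap_neg (G : SimpleGraph V) (f : V → ℤ) : graphLap G (-f) = - graphLap G f := by
  have := lap_sub G 0 f
  simpa [lap_zero] using this

lemma lap_ind_compl (G : SimpleGraph V) (A : Set V) :
    graphLap G (ind Aᶜ) = - graphLap G (ind A) := by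
  have h : ind (Aᶜ) = (fun v => (- ind A) v - (-1)) := by
    funext v
    by_cases h : v ∈ A
    · rw [ind_not_mem (show v ∉ Aᶜ by simpa using h)]
      simp only [Pi.neg_apply]
      rw [ind_mem h]; ring
    · rw [ind_mem (show v ∈ Aᶜ by simpa using h)]
      simp only [Pi.neg_apply]
      rw [ind_not_mem h]; ring
  rw [h, lap_shift, lap_neg]

lemma sum_sub_lap (G : SimpleGraph V) (E f : V → ℤ) :
    ∑ v, (E - graphLap G f) v = ∑ v, E v := by
  simp only [Pi.sub_apply, Finset.sum_sub_distrib]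
  rw [sum_lap]
  ring

def DD (G : SimpleGraph V) (D0 : V → ℤ) : Set (V → ℤ) := {E | DivEffective E ∧ DivEquiv G D0 E}

abbrev Node (G : SimpleGraph V) (D0 : V → ℤ) := {E : V → ℤ // E ∈ DD G D0}

variable {D0 : V → ℤ}

lemma node_deg (E : Node G D0) : ∑ v, E.val v = ∑ v, D0 v := by
  obtain ⟨f, hf⟩ := E.2.2
  rw [hf, sum_sub_lap]

lemma node_eff (E : Node G D0) : DivEffective E.val := E.2.1

lemma node_equiv (E F : Node G D0) : ∃ g : V → ℤ, F.val = E.val - graphLap G g := by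
  obtain ⟨f1, hf1⟩ := E.2.2
  obtain ⟨f2, hf2⟩ := F.2.2
  refine ⟨f2 - f1, ?_⟩
  rw [hf2, hf1, lap_sub]
  funext v; simp only [Pi.sub_apply]; ring

lemma DD_finite (hD0 : DivEffective D0) : (DD G D0).Finite := by
  classical
  have hsub : DD G D0 ⊆ Set.pi Set.univ (fun _ : V => Set.Icc (0:ℤ) (∑ v, D0 v)) := by
    intro E hE v _
    have hdeg : ∑ w, E w = ∑ w, D0 w := by
      obtain ⟨f, hf⟩ := hE.2; rw [hf, sum_sub_lap]
    refine ⟨hE.1 v, ?_⟩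
    rw [← hdeg]
    exact Finset.single_le_sum (fun w _ => hE.1 w) (mem_univ v)
  exact (Set.Finite.pi (fun v => Set.finite_Icc _ _)).subset hsub

def TT (G : SimpleGraph V) (D0 : V → ℤ) : SimpleGraph (Node G D0) where
  Adj E F := E ≠ F ∧ ∃ A : Set V, F.val = E.val - graphLap G (ind A)
  symm := by
    constructor
    rintro E F ⟨hne, A, hA⟩
    refine ⟨hne.symm, Aᶜ, ?_⟩
    rw [lap_ind_compl, hA]
    funext v; simp
  loopless := ⟨fun E h => h.1 rfl⟩

lemma suppNonempty {k : ℕ} (hk : 1 ≤ k) {E : V → ℤ} (hE : DivEffective E)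
    (hdeg : ∑ v, E v = (k:ℤ)) : (dsupp E).Nonempty := by
  by_contra h
  rw [Set.not_nonempty_iff_eq_empty] at h
  have : ∀ v, E v = 0 := by
    intro v
    have h1 := hE v
    have h2 : v ∉ dsupp E := by rw [h]; exact Set.notMem_empty v
    simp only [dsupp, Set.mem_setOf_eq, not_le] at h2
    omega
  rw [Finset.sum_congr rfl (fun v _ => this v)] at hdeg
  simp at hdeg
  omega

lemma outDeg_pos {A : Set V} {v w : V} (hadj : G.Adj v w) (hw : w ∉ A) :
    1 ≤ outDeg G A v := by
  classical
  rw [outDeg, Nat.succ_le_iff, Finset.card_pos]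
  exact ⟨w, Finset.mem_filter.2 ⟨mem_univ w, hadj, hw⟩⟩

lemma outDeg_pos_elim {A : Set V} {v : V} (h : 1 ≤ outDeg G A v) :
    ∃ w, G.Adj v w ∧ w ∉ A := by
  classical
  rw [outDeg, Nat.succ_le_iff, Finset.card_pos] at h
  obtain ⟨w, hw⟩ := h
  rw [Finset.mem_filter] at hw
  exact ⟨w, hw.2⟩

lemma inDeg_pos {A : Set V} {v w : V} (hadj : G.Adj v w) (hw : w ∈ A) :
    1 ≤ inDeg G A v := by
  classical
  rw [inDeg, Nat.succ_le_iff, Finset.card_pos]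
  exact ⟨w, Finset.mem_filter.2 ⟨mem_univ w, hadj, hw⟩⟩

lemma inDeg_pos_elim {A : Set V} {v : V} (h : 1 ≤ inDeg G A v) :
    ∃ w, G.Adj v w ∧ w ∈ A := by
  classical
  rw [inDeg, Nat.succ_le_iff, Finset.card_pos] at h
  obtain ⟨w, hw⟩ := h
  rw [Finset.mem_filter] at hw
  exact ⟨w, hw.2⟩

lemma top_step {k : ℕ}
    (hconn : ∀ F : Set (Sym2 V), F ⊆ G.edgeSet → ¬ (G.deleteEdges F).Connected → k ≤ F.ncard)
    {E F g : V → ℤ} (hE : DivEffective E) (hF : DivEffective F) (hdegE : ∑ v, E v = (k:ℤ))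
    (hg : ∀ v, 0 ≤ g v) (hfire : F = E - graphLap G g) {vmax vmin : V}
    (hmax : ∀ v, g v ≤ g vmax) (hmin : g vmin = 0) (hM : 1 ≤ g vmax) :
    DivEffective (E - graphLap G (ind {v | g vmax ≤ g v})) ∧
    (F = (E - graphLap G (ind {v | g vmax ≤ g v})) -
      graphLap G (fun v => g v - ind {v | g vmax ≤ g v} v)) ∧
    (∀ v, 0 ≤ g v - ind {v | g vmax ≤ g v} v) ∧
    (∀ v, v ∉ {v | g vmax ≤ g v} → E v = 0) ∧
    (∀ v ∈ {v | g vmax ≤ g v}, (E - graphLap G (ind {v | g vmax ≤ g v})) v = 0) ∧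
    {v | g vmax ≤ g v}.Nonempty ∧ {v | g vmax ≤ g v} ≠ Set.univ := by
  classical
  set A := {v | g vmax ≤ g v} with hA
  have hmemA : ∀ v, v ∈ A ↔ g v = g vmax := by
    intro v
    constructor
    · intro h
      have : g vmax ≤ g v := h
      have := hmax v
      omega
    · intro h
      show g vmax ≤ g v
      omega
  have hid : ind A = fun v => max (g v - (g vmax - 1)) 0 := by
    funext v
    by_cases h : v ∈ A
    · rw [ind_mem h]
      have hv : g v = g vmax := (hmemA v).1 h
      have h1 : g v - (g vmax - 1) = 1 := by omega
      rw [h1]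
      omega
    · rw [ind_not_mem h]
      have h2 : ¬ g vmax ≤ g v := h
      exact (max_eq_right (by omega)).symm
  have hFE : DivEffective (E - graphLap G g) := by rw [← hfire]; exact hF
  have heff : DivEffective (E - graphLap G (ind A)) := by
    rw [hid]; exact eff_trunc hE hFE (g vmax - 1)
  have hfire2 : F = (E - graphLap G (ind A)) - graphLap G (fun v => g v - ind A v) := by
    rw [hfire]
    have h0 : (ind A + fun v => g v - ind A v) = g := by
      funext w
      simp only [Pi.add_apply]
      ring
    have h2 := lap_add G (ind A) (fun v => g v - ind A v)
    rw [h0] at h2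
    rw [h2]
    funext v
    simp only [Pi.sub_apply, Pi.add_apply]
    ring
  have hg2 : ∀ v, 0 ≤ g v - ind A v := by
    intro v
    by_cases h : v ∈ A
    · rw [ind_mem h]
      have := (hmemA v).1 h
      omega
    · rw [ind_not_mem h]
      have := hg v
      omega
  have h1 : A.Nonempty := ⟨vmax, show g vmax ≤ g vmax from le_refl _⟩
  have h2 : A ≠ Set.univ := by
    intro hu
    have hv : vmin ∈ A := hu ▸ Set.mem_univ vmin
    have : g vmax ≤ g vmin := hv
    omega
  obtain ⟨_, r2, r3, _, _⟩ := rig hconn hE heff hdegE rfl h1 h2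
  exact ⟨heff, hfire2, hg2, r2, r3, h1, h2⟩

lemma disj_supp {k : ℕ}
    (hconn : ∀ F : Set (Sym2 V), F ⊆ G.edgeSet → ¬ (G.deleteEdges F).Connected → k ≤ F.ncard)
    {D0 : V → ℤ} (hdeg0 : ∑ v, D0 v = (k:ℤ)) (hnV : Nonempty V)
    (E F : Node G D0) (hne : E ≠ F) : Disjoint (dsupp E.val) (dsupp F.val) := by
  classical
  obtain ⟨g0, hg0⟩ := node_equiv E F
  obtain ⟨vmin, _, hmin⟩ := Finset.exists_min_image univ g0 univ_nonempty
  set g := fun v => g0 v - g0 vmin with hgdef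
  have hfire : F.val = E.val - graphLap G g := by rw [hgdef, lap_shift]; exact hg0
  have hgnn : ∀ v, 0 ≤ g v := by
    intro v
    have := hmin v (mem_univ v)
    simp only [hgdef]
    omega
  obtain ⟨vmax, _, hmax'⟩ := Finset.exists_max_image univ g univ_nonempty
  have hmax : ∀ v, g v ≤ g vmax := fun v => hmax' v (mem_univ v)
  have hminz : g vmin = 0 := by simp [hgdef]
  have hM : 1 ≤ g vmax := by
    by_contra h
    push_neg at h
    have hz : ∀ v, g v = 0 := fun v => by have h1 := hmax v; have h2 := hgnn v; omega
    have : g = 0 := funext hz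
    rw [this, lap_zero] at hfire
    exact hne (Subtype.ext (by rw [hfire]; funext v; simp))
  have hdegE : ∑ v, E.val v = (k:ℤ) := by rw [node_deg]; exact hdeg0
  have hdegF : ∑ v, F.val v = (k:ℤ) := by rw [node_deg]; exact hdeg0
  obtain ⟨_, _, _, r4E, _, _, _⟩ :=
    top_step hconn (node_eff E) (node_eff F) hdegE hgnn hfire hmax hminz hM
  set gh := fun v => g vmax - g v with hghdef
  have hfire2 : E.val = F.val - graphLap G gh := by
    have h2 : graphLap G gh = - graphLap G g := by
      rw [show gh = fun v => (-g) v - (- g vmax) from by funext v; simp only [hghdef, Pi.neg_apply]; ring,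
        lap_shift, lap_neg]
    rw [hfire, h2]
    funext v
    simp only [Pi.sub_apply, Pi.neg_apply]
    ring
  have hghnn : ∀ v, 0 ≤ gh v := by
    intro v
    have := hmax v
    simp only [hghdef]
    omega
  have hmax2 : ∀ v, gh v ≤ gh vmin := by
    intro v
    have := hgnn v
    simp only [hghdef, hminz]
    omega
  have hminz2 : gh vmax = 0 := by simp [hghdef]
  have hM2 : 1 ≤ gh vmin := by simp only [hghdef, hminz]; omega
  obtain ⟨_, _, _, r4F, _, _, _⟩ :=
    top_step hconn (node_eff F) (node_eff E) hdegF hghnn hfire2 hmax2 hminz2 hM2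
  rw [Set.disjoint_left]
  intro v hvE hvF
  have h1 : g vmax ≤ g v := by
    by_contra h
    have := r4E v h
    simp only [dsupp, Set.mem_setOf_eq] at hvE
    omega
  have h2 : gh vmin ≤ gh v := by
    by_contra h
    have := r4F v h
    simp only [dsupp, Set.mem_setOf_eq] at hvF
    omega
  simp only [hghdef, hminz] at h2
  omega

lemma cutSet_compl (G : SimpleGraph V) (A : Set V) : cutSet G Aᶜ = cutSet G A := by
  ext e
  simp only [mem_cutSet_iff]
  constructor
  · rintro ⟨u, w, hadj, hu, hw, rfl⟩
    exact ⟨w, u, hadj.symm, by simpa using hw, by simpa using hu, Sym2.eq_swap⟩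
  · rintro ⟨u, w, hadj, hu, hw, rfl⟩
    exact ⟨w, u, hadj.symm, by simpa using hw, by simpa using hu, Sym2.eq_swap⟩

structure LinkData (G : SimpleGraph V) (k : ℕ) (E F : V → ℤ) (A : Set V) : Prop where
  supE : dsupp E ⊆ A
  supF : dsupp F ⊆ Aᶜ
  cutmem : ∀ u w, G.Adj u w → u ∈ A → w ∉ A → u ∈ dsupp E ∧ w ∈ dsupp F
  backE : ∀ w ∈ dsupp F, ∃ u ∈ dsupp E, G.Adj u w
  backF : ∀ v ∈ dsupp E, ∃ w ∈ dsupp F, G.Adj v w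
  cutk : (cutSet G A).ncard = k
  hne : A.Nonempty
  hpr : A ≠ Set.univ

variable {k : ℕ}

lemma adj_ldata
    (hconn : ∀ F : Set (Sym2 V), F ⊆ G.edgeSet → ¬ (G.deleteEdges F).Connected → k ≤ F.ncard)
    {D0 : V → ℤ} (hdeg0 : ∑ v, D0 v = (k:ℤ)) {E F : Node G D0} (h : (TT G D0).Adj E F) :
    ∃ A : Set V, F.val = E.val - graphLap G (ind A) ∧ LinkData G k E.val F.val A := by
  classical
  obtain ⟨hne, A, hA⟩ := h
  have hAne : A.Nonempty := by
    rcases Set.eq_empty_or_nonempty A with rfl | hcase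
    · exfalso
      apply hne
      apply Subtype.ext
      rw [hA, show ind (∅ : Set V) = 0 from funext fun v => ind_not_mem (Set.notMem_empty v),
        lap_zero]
      funext v; simp
    · exact hcase
  have hApr : A ≠ Set.univ := by
    intro hu
    apply hne
    apply Subtype.ext
    rw [hA, show ind A = fun _ => (1:ℤ) from funext fun v => ind_mem (hu ▸ Set.mem_univ v),
      lap_const]
    funext v; simp
  have hdegE : ∑ v, E.val v = (k:ℤ) := by rw [node_deg]; exact hdeg0
  obtain ⟨r1, r2, r3, r4, r5⟩ := rig hconn (node_eff E) (hA ▸ node_eff F) hdegE hA hAne hApr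
  have supE : dsupp E.val ⊆ A := by
    intro v hv
    by_contra hvA
    have := r2 v hvA
    simp only [dsupp, Set.mem_setOf_eq] at hv
    omega
  have supF : dsupp F.val ⊆ Aᶜ := by
    intro v hv
    simp only [Set.mem_compl_iff]
    intro hvA
    have h0 := r3 v hvA
    simp only [dsupp, Set.mem_setOf_eq] at hv
    omega
  refine ⟨A, hA, ⟨supE, supF, ?_, ?_, ?_, r5, hAne, hApr⟩⟩
  · intro u w hadj hu hw
    constructor
    · have h1 := r1 u hu
      have h2 := outDeg_pos hadj hw
      simp only [dsupp, Set.mem_setOf_eq]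
      omega
    · have h1 := r4 w hw
      have h2 := inDeg_pos hadj.symm hu
      simp only [dsupp, Set.mem_setOf_eq]
      omega
  · intro w hw
    have hwA : w ∉ A := supF hw
    have h1 := r4 w hwA
    simp only [dsupp, Set.mem_setOf_eq] at hw
    have h4 : 1 ≤ inDeg G A w := by omega
    obtain ⟨u, hadj, hu⟩ := inDeg_pos_elim h4
    refine ⟨u, ?_, hadj.symm⟩
    have h2 := r1 u hu
    have h3 := outDeg_pos hadj.symm hwA
    simp only [dsupp, Set.mem_setOf_eq]
    omega
  · intro v hv
    have hvA : v ∈ A := supE hv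
    have h1 := r1 v hvA
    simp only [dsupp, Set.mem_setOf_eq] at hv
    have h4 : 1 ≤ outDeg G A v := by omega
    obtain ⟨w, hadj, hw⟩ := outDeg_pos_elim h4
    refine ⟨w, ?_, hadj⟩
    have h2 := r4 w hw
    have h3 := inDeg_pos hadj.symm hvA
    simp only [dsupp, Set.mem_setOf_eq]
    omega

lemma ldata_symm {E F : V → ℤ} {A : Set V} (ld : LinkData G k E F A) :
    LinkData G k F E Aᶜ := by
  refine ⟨ld.supF, by rw [compl_compl]; exact ld.supE, ?_, ?_, ?_, ?_, ?_, ?_⟩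
  · intro u w hadj hu hw
    have hu' : u ∉ A := hu
    have hw' : w ∈ A := by simpa using hw
    have := ld.cutmem w u hadj.symm hw' hu'
    exact ⟨this.2, this.1⟩
  · intro w hw
    obtain ⟨u, hu, hadj⟩ := ld.backF w hw
    exact ⟨u, hu, hadj.symm⟩
  · intro v hv
    obtain ⟨u, hu, hadj⟩ := ld.backE v hv
    exact ⟨u, hu, hadj.symm⟩
  · rw [cutSet_compl]; exact ld.cutk
  · rw [Set.nonempty_compl]; exact ld.hpr
  · intro h
    rw [Set.compl_univ_iff] at h
    exact (Set.not_nonempty_empty (h ▸ ld.hne))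

lemma preserve
    (hconn : ∀ F : Set (Sym2 V), F ⊆ G.edgeSet → ¬ (G.deleteEdges F).Connected → k ≤ F.ncard)
    {D0 : V → ℤ} (hdeg0 : ∑ v, D0 v = (k:ℤ)) (hnV : Nonempty V)
    {E0 F0 : Node G D0} {A : Set V} (hld : LinkData G k E0.val F0.val A) :
    ∀ {R R' : Node G D0} (W : (TT G D0).Walk R R'),
      (∀ e ∈ W.edges, e ≠ s(E0, F0)) → dsupp R.val ⊆ A → dsupp R'.val ⊆ A := by
  intro R R' W
  induction W with
  | nil => exact fun _ h => h
  | @cons R R2 R' h p ih =>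
      intro hedges hR
      have hstep : dsupp R2.val ⊆ A := by
        intro w hw
        by_contra hwA
        obtain ⟨C, hfireC, ldC⟩ := adj_ldata hconn hdeg0 h
        obtain ⟨u, huR, hadj⟩ := ldC.backE w hw
        have huA : u ∈ A := hR huR
        obtain ⟨huE0, hwF0⟩ := hld.cutmem u w hadj huA hwA
        have hRE0 : R = E0 := by
          by_contra hne
          exact absurd huE0 (Set.disjoint_left.1 (disj_supp hconn hdeg0 hnV R E0 hne) huR)
        have hR2F0 : R2 = F0 := by
          by_contra hne
          exact absurd hwF0 (Set.disjoint_left.1 (disj_supp hconn hdeg0 hnV R2 F0 hne) hw)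
        exact hedges s(R, R2) (by simp) (by rw [hRE0, hR2F0])
      exact ih (fun e he => hedges e (by simp [he])) hstep

lemma reach_aux
    (hconn : ∀ F : Set (Sym2 V), F ⊆ G.edgeSet → ¬ (G.deleteEdges F).Connected → k ≤ F.ncard)
    (hG : G.Connected) {D0 : V → ℤ} (hdeg0 : ∑ v, D0 v = (k:ℤ)) :
    ∀ (N : ℕ) (E F : Node G D0) (g : V → ℤ), (∀ v, 0 ≤ g v) →
      F.val = E.val - graphLap G g → (∑ v, g v).toNat ≤ N → (TT G D0).Reachable E F := by
  classical
  have hnV : Nonempty V := hG.nonempty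
  intro N
  induction N with
  | zero =>
      intro E F g hg hfire hsum
      have hsnn : (0:ℤ) ≤ ∑ v, g v := Finset.sum_nonneg fun v _ => hg v
      have h0 : ∑ v, g v = 0 := by omega
      have hz : ∀ v, g v = 0 := fun v =>
        (Finset.sum_eq_zero_iff_of_nonneg (fun w _ => hg w)).1 h0 v (mem_univ v)
      have : g = 0 := funext hz
      rw [this, lap_zero] at hfire
      have : E = F := Subtype.ext (by rw [hfire]; funext v; simp)
      exact this ▸ Reachable.refl E
  | succ n ih =>
      intro E F g hg hfire hsum
      obtain ⟨vmin, _, hmin'⟩ := Finset.exists_min_image univ g univ_nonempty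
      have hmin : ∀ v, g vmin ≤ g v := fun v => hmin' v (mem_univ v)
      by_cases hm : 1 ≤ g vmin
      · set g' := fun v => g v - g vmin with hg'
        have hfire' : F.val = E.val - graphLap G g' := by rw [hg', lap_shift]; exact hfire
        have hgnn' : ∀ v, 0 ≤ g' v := fun v => by simp only [hg']; have := hmin v; omega
        have hsum' : ∑ v, g' v = ∑ v, g v - (Fintype.card V) * g vmin := by
          simp only [hg', Finset.sum_sub_distrib, Finset.sum_const, Finset.card_univ,
            nsmul_eq_mul]
        have hcard : 1 ≤ Fintype.card V := Fintype.card_pos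
        have hb : (∑ v, g' v).toNat ≤ n := by
          have h1 : (0:ℤ) ≤ ∑ v, g' v := Finset.sum_nonneg fun v _ => hgnn' v
          have h2 : (0:ℤ) ≤ (Fintype.card V) * g vmin := by positivity
          have h3 : (1:ℤ) ≤ (Fintype.card V) * g vmin := by
            calc (1:ℤ) = 1 * 1 := by ring
            _ ≤ (Fintype.card V) * g vmin := by
                apply mul_le_mul (by exact_mod_cast hcard) hm (by omega) (by positivity)
          omega
        exact ih E F g' hgnn' hfire' hb
      · have hminz : g vmin = 0 := le_antisymm (by omega) (hg vmin)
        by_cases hzero : ∀ v, g v = 0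
        · have : g = 0 := funext hzero
          rw [this, lap_zero] at hfire
          have : E = F := Subtype.ext (by rw [hfire]; funext v; simp)
          exact this ▸ Reachable.refl E
        · push_neg at hzero
          obtain ⟨vmax, _, hmax'⟩ := Finset.exists_max_image univ g univ_nonempty
          have hmax : ∀ v, g v ≤ g vmax := fun v => hmax' v (mem_univ v)
          have hM : 1 ≤ g vmax := by
            obtain ⟨w, hw⟩ := hzero
            have h1 := hg w
            have h2 := hmax w
            omega
          have hdegE : ∑ v, E.val v = (k:ℤ) := by rw [node_deg]; exact hdeg0
          obtain ⟨heffC, hfire2, hg2, _, _, _, _⟩ :=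
            top_step hconn (node_eff E) (node_eff F)
              hdegE hg hfire hmax hminz hM
          set A := {v | g vmax ≤ g v} with hAdef
          have hequivC : (E.val - graphLap G (ind A)) ∈ DD G D0 := by
            refine ⟨heffC, ?_⟩
            obtain ⟨f1, hf1⟩ := E.2.2
            refine ⟨f1 + ind A, ?_⟩
            rw [lap_add, hf1]
            funext v
            simp only [Pi.sub_apply, Pi.add_apply]
            ring
          set C : Node G D0 := ⟨E.val - graphLap G (ind A), hequivC⟩ with hC
          have hEC : E ≠ C := by
            intro hEq
            have hclap : ∀ v, graphLap G (ind A) v = 0 := by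
              intro v
              have h1 : C.val = E.val - graphLap G (ind A) := rfl
              rw [← hEq] at h1
              have := congrFun h1 v
              simp only [Pi.sub_apply] at this
              omega
            have h2 := lap_eq_zero_const hG hclap vmax vmin
            rw [ind_mem (show vmax ∈ A from show g vmax ≤ g vmax from le_refl _),
              ind_not_mem (show vmin ∉ A from by
                simp only [hAdef, Set.mem_setOf_eq, not_le]; omega)] at h2
            omega
          have hadj : (TT G D0).Adj E C := ⟨hEC, A, rfl⟩
          have hsum2 : (∑ v, (g v - ind A v)).toNat ≤ n := by
            have h1 : ∑ v, (g v - ind A v) = ∑ v, g v - ∑ v, ind A v := by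
              rw [Finset.sum_sub_distrib]
            have h2 : (1:ℤ) ≤ ∑ v, ind A v := by
              have : ind A vmax = 1 := ind_mem (show vmax ∈ A from show g vmax ≤ g vmax from le_refl _)
              calc (1:ℤ) = ind A vmax := this.symm
              _ ≤ ∑ v, ind A v := by
                  apply Finset.single_le_sum (f := fun v => ind A v) ?_ (mem_univ vmax)
                  intro w _
                  show (0:ℤ) ≤ ind A w
                  by_cases h : w ∈ A
                  · rw [ind_mem h]; omega
                  · rw [ind_not_mem h]
            have h3 : (0:ℤ) ≤ ∑ v, (g v - ind A v) := Finset.sum_nonneg fun v _ => hg2 v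
            omega
          exact (hadj.reachable).trans (ih C F (fun v => g v - ind A v) hg2 hfire2 hsum2)

lemma tt_connected
    (hconn : ∀ F : Set (Sym2 V), F ⊆ G.edgeSet → ¬ (G.deleteEdges F).Connected → k ≤ F.ncard)
    (hG : G.Connected) {D0 : V → ℤ} (hD0 : D0 ∈ DD G D0) (hdeg0 : ∑ v, D0 v = (k:ℤ)) :
    (TT G D0).Connected := by
  classical
  have hnV : Nonempty V := hG.nonempty
  rw [connected_iff]
  refine ⟨?_, ⟨⟨D0, hD0⟩⟩⟩
  intro E F
  obtain ⟨g0, hg0⟩ := node_equiv E F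
  obtain ⟨vmin, _, hmin'⟩ := Finset.exists_min_image univ g0 univ_nonempty
  set g := fun v => g0 v - g0 vmin with hgdef
  have hfire : F.val = E.val - graphLap G g := by rw [hgdef, lap_shift]; exact hg0
  have hgnn : ∀ v, 0 ≤ g v := fun v => by
    simp only [hgdef]; have := hmin' v (mem_univ v); omega
  exact reach_aux hconn hG hdeg0 (∑ v, g v).toNat E F g hgnn hfire (le_refl _)

lemma tt_acyclic
    (hconn : ∀ F : Set (Sym2 V), F ⊆ G.edgeSet → ¬ (G.deleteEdges F).Connected → k ≤ F.ncard)
    (hG : G.Connected) (hk : 1 ≤ k) {D0 : V → ℤ} (hdeg0 : ∑ v, D0 v = (k:ℤ)) :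
    (TT G D0).IsAcyclic := by
  intro E c hc
  cases c with
  | nil => exact hc.ne_nil rfl
  | cons h p =>
      rw [Walk.cons_isCycle_iff] at hc
      obtain ⟨hpath, hedge⟩ := hc
      rename_i R
      obtain ⟨A, hfireA, ld⟩ := adj_ldata hconn hdeg0 h
      have hldsymm := ldata_symm ld
      have hsub : dsupp E.val ⊆ Aᶜ := by
        refine preserve hconn hdeg0 hG.nonempty (E0 := R) (F0 := E) hldsymm p ?_ ld.supF
        intro e he heq
        apply hedge
        rw [heq] at he
        rwa [show s(R, E) = s(E, R) from Sym2.eq_swap] at he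
      obtain ⟨v, hv⟩ := suppNonempty hk (node_eff E) (by rw [node_deg]; exact hdeg0)
      exact (hsub hv) (ld.supE hv)

lemma tt_isTree
    (hconn : ∀ F : Set (Sym2 V), F ⊆ G.edgeSet → ¬ (G.deleteEdges F).Connected → k ≤ F.ncard)
    (hG : G.Connected) (hk : 1 ≤ k) {D0 : V → ℤ} (hD0 : D0 ∈ DD G D0)
    (hdeg0 : ∑ v, D0 v = (k:ℤ)) : (TT G D0).IsTree :=
  ⟨tt_connected hconn hG hD0 hdeg0, tt_acyclic hconn hG hk hdeg0⟩

lemma sides_of_walk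
    (hconn : ∀ F : Set (Sym2 V), F ⊆ G.edgeSet → ¬ (G.deleteEdges F).Connected → k ≤ F.ncard)
    {D0 : V → ℤ} (hdeg0 : ∑ v, D0 v = (k:ℤ)) (hnV : Nonempty V)
    {E0 F0 : Node G D0} {A : Set V} (ld : LinkData G k E0.val F0.val A) :
    ∀ {P Q : Node G D0} (p : (TT G D0).Walk P Q), p.IsPath → s(E0, F0) ∈ p.edges →
      (dsupp P.val ⊆ A ∧ dsupp Q.val ⊆ Aᶜ) ∨ (dsupp P.val ⊆ Aᶜ ∧ dsupp Q.val ⊆ A) := by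
  intro P Q p
  induction p with
  | nil => intro _ h; simp at h
  | @cons P R Q h q ih =>
      intro hp he
      rw [Walk.edges_cons, List.mem_cons] at he
      have hqpath : q.IsPath := (Walk.cons_isPath_iff h q).1 hp |>.1
      have hPnot : P ∉ q.support := ((Walk.cons_isPath_iff h q).1 hp).2
      rcases he with heq | hin
      · rw [Sym2.eq_iff] at heq
        rcases heq with ⟨hE, hF⟩ | ⟨hE, hF⟩
        · subst hE; subst hF
          left
          refine ⟨ld.supE, ?_⟩
          refine preserve hconn hdeg0 hnV (ldata_symm ld) q ?_ ld.supF
          intro e he' hcontra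
          rw [hcontra] at he'
          exact hPnot (Walk.snd_mem_support_of_mem_edges q he')
        · subst hE; subst hF
          right
          refine ⟨ld.supF, ?_⟩
          refine preserve hconn hdeg0 hnV ld q ?_ ld.supE
          intro e he' hcontra
          rw [hcontra] at he'
          exact hPnot (Walk.snd_mem_support_of_mem_edges q he')
      · have hfst : s(P, R) ≠ s(E0, F0) := by
          intro hq
          have hnodup := hp.edges_nodup
          rw [Walk.edges_cons] at hnodup
          rw [hq] at hnodup
          exact (List.nodup_cons.1 hnodup).1 hin
        rcases ih hqpath hin with ⟨hR, hQ⟩ | ⟨hR, hQ⟩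
        · left
          refine ⟨?_, hQ⟩
          refine preserve hconn hdeg0 hnV ld (Walk.cons h.symm Walk.nil) ?_ hR
          intro e he' hcontra
          simp only [Walk.edges_cons, Walk.edges_nil, List.mem_singleton] at he'
          rw [he'] at hcontra
          rw [show s(R, P) = s(P, R) from Sym2.eq_swap] at hcontra
          exact hfst hcontra
        · right
          refine ⟨?_, hQ⟩
          refine preserve hconn hdeg0 hnV (ldata_symm ld) (Walk.cons h.symm Walk.nil) ?_ hR
          intro e he' hcontra
          simp only [Walk.edges_cons, Walk.edges_nil, List.mem_singleton] at he'
          rw [he'] at hcontra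
          rw [show s(R, P) = s(P, R) from Sym2.eq_swap,
            show s(F0, E0) = s(E0, F0) from Sym2.eq_swap] at hcontra
          exact hfst hcontra

lemma dir_of_ne
    (hconn : ∀ F : Set (Sym2 V), F ⊆ G.edgeSet → ¬ (G.deleteEdges F).Connected → k ≤ F.ncard)
    (hG : G.Connected) {D0 : V → ℤ} (hD0 : D0 ∈ DD G D0) (hdeg0 : ∑ v, D0 v = (k:ℤ))
    {Estar P : Node G D0} (hne : P ≠ Estar) :
    ∃ (Y : Node G D0) (_ : (TT G D0).Adj Estar Y) (C : Set V),
      LinkData G k Estar.val Y.val C ∧ Y.val = Estar.val - graphLap G (ind C) ∧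
        dsupp P.val ⊆ Cᶜ := by
  classical
  obtain ⟨w⟩ := (tt_connected hconn hG hD0 hdeg0).preconnected Estar P
  set p : (TT G D0).Path Estar P := w.toPath with hpdef
  obtain ⟨Y, hadj, q, hcons⟩ := Walk.exists_eq_cons_of_ne hne.symm p.val
  obtain ⟨C, hfire, ld⟩ := adj_ldata hconn hdeg0 hadj
  have hppath : p.val.IsPath := p.2
  rw [hcons] at hppath
  have hEnot : Estar ∉ q.support := ((Walk.cons_isPath_iff hadj q).1 hppath).2
  refine ⟨Y, hadj, C, ld, hfire, ?_⟩
  refine preserve hconn hdeg0 hG.nonempty (ldata_symm ld) q ?_ ld.supF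
  intro e he hcontra
  rw [hcontra] at he
  exact hEnot (Walk.snd_mem_support_of_mem_edges q he)

lemma dir_pair
    (hconn : ∀ F : Set (Sym2 V), F ⊆ G.edgeSet → ¬ (G.deleteEdges F).Connected → k ≤ F.ncard)
    (hG : G.Connected) {D0 : V → ℤ} (hdeg0 : ∑ v, D0 v = (k:ℤ)) {Estar : Node G D0} :
    ∀ {P Q : Node G D0} (p : (TT G D0).Walk P Q), P ≠ Estar → Q ≠ Estar → p.IsPath →
      Estar ∈ p.support →
      ∃ (Y : Node G D0) (C : Set V), LinkData G k Estar.val Y.val C ∧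
        dsupp P.val ⊆ Cᶜ ∧ dsupp Q.val ⊆ C := by
  classical
  intro P Q p
  induction p with
  | nil =>
      intro hP _ _ hmem
      rw [Walk.support_nil, List.mem_singleton] at hmem
      exact absurd hmem.symm hP
  | @cons P R Q h q ih =>
      intro hP hQ hp hmem
      have hqpath : q.IsPath := ((Walk.cons_isPath_iff h q).1 hp).1
      have hPnot : P ∉ q.support := ((Walk.cons_isPath_iff h q).1 hp).2
      by_cases hR : R = Estar
      · subst hR
        obtain ⟨C, hfire, ld⟩ := adj_ldata hconn hdeg0 h.symm
        obtain ⟨Y2, h2, q2, hcons⟩ := Walk.exists_eq_cons_of_ne (Ne.symm hQ) q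
        have hq2path : q2.IsPath := by
          rw [hcons] at hqpath
          exact ((Walk.cons_isPath_iff h2 q2).1 hqpath).1
        have hRnot : R ∉ q2.support := by
          rw [hcons] at hqpath
          exact ((Walk.cons_isPath_iff h2 q2).1 hqpath).2
        have hY2P : Y2 ≠ P := by
          intro hEq
          apply hPnot
          rw [hcons, Walk.support_cons]
          exact List.mem_cons_of_mem _ (hEq ▸ Walk.start_mem_support q2)
        have hQside : dsupp Q.val ⊆ C := by
          refine preserve hconn hdeg0 hG.nonempty ld q ?_ ld.supE
          intro e he hcontra
          rw [hcons, Walk.edges_cons, List.mem_cons] at he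
          rcases he with he | he
          · rw [he] at hcontra
            rw [Sym2.eq_iff] at hcontra
            rcases hcontra with ⟨_, h2'⟩ | ⟨h1', _⟩
            · exact hY2P h2'
            · exact hP h1'.symm
          · rw [hcontra] at he
            exact hRnot (Walk.fst_mem_support_of_mem_edges q2 he)
        exact ⟨P, C, ld, ld.supF, hQside⟩
      · have hmem' : Estar ∈ q.support := by
          rw [Walk.support_cons, List.mem_cons] at hmem
          rcases hmem with hmem | hmem
          · exact absurd hmem.symm hP
          · exact hmem
        obtain ⟨Y, C, ld, hRside, hQside⟩ := ih (fun hc => hR hc) hQ hqpath hmem'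
        refine ⟨Y, C, ld, ?_, hQside⟩
        refine preserve hconn hdeg0 hG.nonempty (ldata_symm ld) (Walk.cons h.symm Walk.nil) ?_ hRside
        intro e he hcontra
        simp only [Walk.edges_cons, Walk.edges_nil, List.mem_singleton] at he
        rw [he] at hcontra
        rw [Sym2.eq_iff] at hcontra
        rcases hcontra with ⟨_, hx2⟩ | ⟨hx1, _⟩
        · exact hP hx2
        · exact hR hx1

lemma fire_unique (hG : G.Connected) {A A' : Set V}
    (h : graphLap G (ind A) = graphLap G (ind A'))
    (hA1 : A.Nonempty) (hA2 : A ≠ Set.univ) (hA1' : A'.Nonempty) (hA2' : A' ≠ Set.univ) :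
    A = A' := by
  have hz : ∀ v, graphLap G (ind A - ind A') v = 0 := by
    intro v
    rw [lap_sub, h]
    simp
  have hconst := lap_eq_zero_const hG hz
  obtain ⟨w0, hw0⟩ := Set.ne_univ_iff_exists_notMem A |>.1 hA2
  obtain ⟨w0', hw0'⟩ := Set.ne_univ_iff_exists_notMem A' |>.1 hA2'
  obtain ⟨w1, hw1⟩ := hA1
  obtain ⟨w1', hw1'⟩ := hA1'
  have key : ∀ v, v ∈ A ↔ v ∈ A' := by
    intro v
    constructor
    · intro h1
      by_contra h2
      -- d v = 1
      have hv : (ind A - ind A') v = 1 := by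
        simp only [Pi.sub_apply]; rw [ind_mem h1, ind_not_mem h2]; ring
      -- pick a vertex not in A: d ≤ 0 there
      have hw : (ind A - ind A') w0 ≤ 0 := by
        simp only [Pi.sub_apply]; rw [ind_not_mem hw0]
        by_cases hh : w0 ∈ A'
        · rw [ind_mem hh]; omega
        · rw [ind_not_mem hh]; omega
      have := hconst v w0
      omega
    · intro h1
      by_contra h2
      have hv : (ind A - ind A') v = -1 := by
        simp only [Pi.sub_apply]; rw [ind_not_mem h2, ind_mem h1]; ring
      have hw : 0 ≤ (ind A - ind A') w0' := by
        simp only [Pi.sub_apply]; rw [ind_not_mem hw0']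
        by_cases hh : w0' ∈ A
        · rw [ind_mem hh]; omega
        · rw [ind_not_mem hh]; omega
      have := hconst v w0'
      omega
  exact Set.ext key

open Classical in
lemma ncard_dsupp_le {k : ℕ} {E : V → ℤ} (hE : DivEffective E) (hdeg : ∑ v, E v = (k:ℤ)) :
    (dsupp E).ncard ≤ k := by
  classical
  have hset : dsupp E = ↑(univ.filter (fun v => 1 ≤ E v)) := by
    ext v; simp [dsupp]
  rw [hset, Set.ncard_coe_finset]
  have h1 : ((univ.filter (fun v => 1 ≤ E v)).card : ℤ) ≤
      ∑ v ∈ univ.filter (fun v => 1 ≤ E v), E v := by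
    have := Finset.card_nsmul_le_sum (univ.filter (fun v => 1 ≤ E v)) E 1
      (fun x hx => by simpa using (Finset.mem_filter.1 hx).2)
    simpa using this
  have h2 : ∑ v ∈ univ.filter (fun v => 1 ≤ E v), E v ≤ ∑ v, E v :=
    Finset.sum_le_sum_of_subset_of_nonneg (Finset.filter_subset _ _) (fun v _ _ => hE v)
  rw [hdeg] at h2
  omega

lemma egg_closure {X : Set V} (hX : (G.induce X).Connected) (Φ : V → Prop)
    (hstep : ∀ a b, a ∈ X → b ∈ X → G.Adj a b → Φ a → Φ b)
    {x₀ : V} (hx₀ : x₀ ∈ X) (hΦ : Φ x₀) : ∀ x ∈ X, Φ x := by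
  have main : ∀ (a b : ↥X) (p : (G.induce X).Walk a b), Φ a.val → Φ b.val := by
    intro a b p
    induction p with
    | nil => exact id
    | @cons a c b h q ih =>
        intro ha
        have hadj : G.Adj a.val c.val := h
        exact ih (hstep a.val c.val a.2 c.2 hadj ha)
  intro x hx
  obtain ⟨p⟩ := hX.preconnected ⟨x₀, hx₀⟩ ⟨x, hx⟩
  exact main _ _ p hΦ

lemma egg_in_component {A X : Set V} (hX : (G.induce X).Connected) (hsub : X ⊆ A)
    {x y : V} (hx : x ∈ X) (hy : y ∈ X) :
    (G.deleteEdges (cutSet G A)).Reachable x y := by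
  have main : ∀ (a b : ↥X) (p : (G.induce X).Walk a b),
      (G.deleteEdges (cutSet G A)).Reachable a.val b.val := by
    intro a b p
    induction p with
    | nil => exact Reachable.refl _
    | @cons a c b h q ih =>
        refine Reachable.trans (Adj.reachable ?_) ih
        have hadj : G.Adj a.val c.val := h
        rw [deleteEdges_adj]
        refine ⟨hadj, ?_⟩
        intro hmem
        rcases cutSet_cases hmem with ⟨_, h2⟩ | ⟨_, h2⟩
        · exact h2 (hsub c.2)
        · exact h2 (hsub a.2)
  exact main ⟨x, hx⟩ ⟨y, hy⟩ (hX.preconnected ⟨x, hx⟩ ⟨y, hy⟩).some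

lemma mem_DD_self {D0 : V → ℤ} (hD0 : DivEffective D0) : D0 ∈ DD G D0 := by
  refine ⟨hD0, 0, ?_⟩
  rw [lap_zero]
  funext v; simp

lemma scramble_order_le {k : ℕ}
    (hconn : ∀ F : Set (Sym2 V), F ⊆ G.edgeSet → ¬ (G.deleteEdges F).Connected → k ≤ F.ncard)
    (hG : G.Connected) (hk : 1 ≤ k) {D0 : V → ℤ} (hD0e : DivEffective D0)
    (hrk : DivPosRank G D0) (hdeg0 : ∑ v, D0 v = (k:ℤ)) (S : Scramble G) :
    S.order ≤ k := by
  classical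
  have hD0 : D0 ∈ DD G D0 := mem_DD_self hD0e
  have hnV : Nonempty V := hG.nonempty
  have hdegN : ∀ E : Node G D0, ∑ v, E.val v = (k:ℤ) := fun E => by
    rw [node_deg]; exact hdeg0
  have heggne : ∀ X ∈ S.eggs, X.Nonempty := by
    intro X hX
    have := (S.egg_connected X hX).nonempty
    exact Set.nonempty_coe_sort.1 this
  by_cases hcase : ∃ (E0 F0 : Node G D0) (A : Set V),
      LinkData G k E0.val F0.val A ∧ (∃ X ∈ S.eggs, X ⊆ A) ∧ (∃ Y ∈ S.eggs, Y ⊆ Aᶜ)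
  · -- egg cut of size k
    obtain ⟨E0, F0, A, ld, ⟨X, hX, hXA⟩, ⟨Y, hY, hYA⟩⟩ := hcase
    obtain ⟨x₀, hx₀⟩ := heggne X hX
    obtain ⟨y₀, hy₀⟩ := heggne Y hY
    have heggcut : S.IsEggCut (cutSet G A) := by
      refine ⟨cutSet_subset_edgeSet, X, hX, Y, hY,
        (G.deleteEdges (cutSet G A)).connectedComponentMk x₀,
        (G.deleteEdges (cutSet G A)).connectedComponentMk y₀, ?_, ?_, ?_⟩
      · intro hEq
        have hreach : (G.deleteEdges (cutSet G A)).Reachable x₀ y₀ :=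
          SimpleGraph.ConnectedComponent.exact hEq
        obtain ⟨p⟩ := hreach
        exact (hYA hy₀) (walk_stay p (hXA hx₀))
      · intro x hx
        rw [SimpleGraph.ConnectedComponent.mem_supp_iff, SimpleGraph.ConnectedComponent.eq]
        exact egg_in_component (S.egg_connected X hX) hXA hx hx₀
      · intro y hy
        rw [SimpleGraph.ConnectedComponent.mem_supp_iff, SimpleGraph.ConnectedComponent.eq]
        have := egg_in_component (S.egg_connected Y hY)
          (show Y ⊆ Aᶜ from hYA) hy hy₀
        -- cutSet of Aᶜ equals cutSet of A
        rwa [cutSet_compl] at this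
    have hmem : k ∈ ({n | ∃ H : Set V, S.IsHittingSet H ∧ H.ncard = n} ∪
        {n | ∃ F : Set (Sym2 V), S.IsEggCut F ∧ F.ncard = n}) :=
      Or.inr ⟨cutSet G A, heggcut, ld.cutk⟩
    exact Nat.sInf_le hmem
  · -- hitting set case
    haveI : Fintype (Node G D0) := (DD_finite hD0e).fintype
    have hor : ∀ {E F : Node G D0}, (TT G D0).Adj E F → ∀ (A : Set V),
        LinkData G k E.val F.val A →
        (∀ X ∈ S.eggs, (X ∩ A).Nonempty) ∨ (∀ X ∈ S.eggs, (X ∩ Aᶜ).Nonempty) := by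
      intro E F h A ld
      by_contra hcon
      push_neg at hcon
      obtain ⟨⟨X, hX, hX2⟩, ⟨Y, hY, hY2⟩⟩ := hcon
      have hXsub : X ⊆ Aᶜ := by
        intro x hx
        intro hxA
        exact Set.eq_empty_iff_forall_notMem.1 hX2 x ⟨hx, hxA⟩
      have hYsub : Y ⊆ A := by
        intro y hy
        by_contra hyc
        exact Set.eq_empty_iff_forall_notMem.1 hY2 y ⟨hy, by simpa using hyc⟩
      exact hcase ⟨E, F, A, ld, ⟨Y, hY, hYsub⟩, ⟨X, hX, hXsub⟩⟩
    have htree := tt_isTree hconn hG hk hD0 hdeg0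
    have hsink : ∃ Estar : Node G D0, ∀ (F : Node G D0), (TT G D0).Adj Estar F →
        ∀ (A : Set V), F.val = Estar.val - graphLap G (ind A) →
        LinkData G k Estar.val F.val A → ∀ X ∈ S.eggs, (X ∩ A).Nonempty := by
      by_contra hno
      push_neg at hno
      have hno' : ∀ E : Node G D0, ∃ (F : Node G D0) (A : Set V),
          (TT G D0).Adj E F ∧ F.val = E.val - graphLap G (ind A) ∧
          LinkData G k E.val F.val A ∧ ∃ X ∈ S.eggs, X ∩ A = ∅ := by
        intro E
        obtain ⟨F, hadj, A, hfire, hld, X, hX, hXbad⟩ := hno E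
        exact ⟨F, A, hadj, hfire, hld, X, hX, hXbad⟩
      choose Fc AA hadjc hfirec hldc hbadc using hno'
      have hgood : ∀ E : Node G D0, ∀ X ∈ S.eggs, (X ∩ (AA E)ᶜ).Nonempty := by
        intro E
        rcases hor (hadjc E) (AA E) (hldc E) with hgd | hgd
        · exfalso
          obtain ⟨X, hX, hXbad⟩ := hbadc E
          obtain ⟨z, hz⟩ := hgd X hX
          rw [hXbad] at hz
          exact hz
        · exact hgd
      have hinj : Set.InjOn (fun E : Node G D0 => s(E, Fc E)) ↑(univ : Finset (Node G D0)) := by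
        intro E1 _ E2 _ hEq
        simp only [Sym2.eq_iff] at hEq
        rcases hEq with ⟨h1, _⟩ | ⟨h1, h2⟩
        · exact h1
        · exfalso
          -- E1 = Fc E2 and Fc E1 = E2
          have hv1 : (Fc E2).val = E1.val := by rw [h1]
          have hv2 : (Fc E1).val = E2.val := by rw [h2]
          -- equations
          have e1 : E2.val = E1.val - graphLap G (ind (AA E1)) := by
            rw [← hv2]; exact hfirec E1
          have e2 : E1.val = E2.val - graphLap G (ind (AA E2)) := by
            rw [← hv1]; exact hfirec E2
          have e3 : E1.val = E2.val - graphLap G (ind (AA E1)ᶜ) := by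
            rw [lap_ind_compl, e1]
            funext v
            simp only [Pi.sub_apply, Pi.neg_apply]
            ring
          have heqlap : graphLap G (ind (AA E2)) = graphLap G (ind (AA E1)ᶜ) := by
            funext v
            have t1 := congrFun e2 v
            have t2 := congrFun e3 v
            simp only [Pi.sub_apply] at t1 t2
            omega
          have hAeq : AA E2 = (AA E1)ᶜ := by
            refine fire_unique hG heqlap (hldc E2).hne (hldc E2).hpr ?_ ?_
            · rw [Set.nonempty_compl]; exact (hldc E1).hpr
            · intro hcu
              rw [Set.compl_univ_iff] at hcu
              exact Set.not_nonempty_empty (hcu ▸ (hldc E1).hne)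
          obtain ⟨X, hX, hXbad⟩ := hbadc E2
          rw [hAeq] at hXbad
          obtain ⟨z, hz⟩ := hgood E1 X hX
          rw [hXbad] at hz
          exact hz
      have hcard : Fintype.card (Node G D0) ≤ (TT G D0).edgeFinset.card := by
        have hmaps : ∀ E ∈ (univ : Finset (Node G D0)),
            s(E, Fc E) ∈ (TT G D0).edgeFinset := by
          intro E _
          rw [SimpleGraph.mem_edgeFinset]
          exact hadjc E
        calc Fintype.card (Node G D0) = (univ : Finset (Node G D0)).card :=
              (Finset.card_univ).symm
        _ ≤ (TT G D0).edgeFinset.card := Finset.card_le_card_of_injOn _ hmaps hinj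
      have hec := htree.card_edgeFinset
      have hpos : 1 ≤ Fintype.card (Node G D0) := by
        have : Nonempty (Node G D0) := ⟨⟨D0, hD0⟩⟩
        exact Fintype.card_pos
      omega
    obtain ⟨Estar, hEstar⟩ := hsink
    have hhit : ∀ X ∈ S.eggs, (dsupp Estar.val ∩ X).Nonempty := by
      intro X hX
      by_contra hempty
      rw [Set.not_nonempty_iff_eq_empty] at hempty
      have hemp : ∀ z, z ∈ dsupp Estar.val → z ∈ X → False := by
        intro z h1 h2
        exact Set.eq_empty_iff_forall_notMem.1 hempty z ⟨h1, h2⟩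
      obtain ⟨x₀, hx₀⟩ := heggne X hX
      obtain ⟨D', hequiv, heff, hD'x⟩ := hrk x₀
      have hP : D' ∈ DD G D0 := ⟨heff, hequiv⟩
      have hx₀P : x₀ ∈ dsupp (⟨D', hP⟩ : Node G D0).val := hD'x
      have hPne : (⟨D', hP⟩ : Node G D0) ≠ Estar := by
        intro hEq
        exact hemp x₀ (by rw [← hEq]; exact hx₀P) hx₀
      obtain ⟨Y, hadj, C, ld, hfire, hPC⟩ := dir_of_ne hconn hG hD0 hdeg0 hPne
      have hXsub : ∀ x ∈ X, x ∈ Cᶜ := by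
        refine egg_closure (S.egg_connected X hX) (fun z => z ∈ Cᶜ) ?_ hx₀ (hPC hx₀P)
        intro a b ha hb hab haC
        simp only [Set.mem_compl_iff] at haC ⊢
        intro hbC
        have hmem := (ld.cutmem b a hab.symm hbC haC).1
        exact hemp b hmem hb
      obtain ⟨z, hz1, hz2⟩ := hEstar Y hadj C hfire ld X hX
      exact (hXsub z hz1) hz2
    have hHS : S.IsHittingSet (dsupp Estar.val) := fun X hX => hhit X hX
    have hmem : (dsupp Estar.val).ncard ∈
        ({n | ∃ H : Set V, S.IsHittingSet H ∧ H.ncard = n} ∪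
        {n | ∃ F : Set (Sym2 V), S.IsEggCut F ∧ F.ncard = n}) :=
      Or.inl ⟨dsupp Estar.val, hHS, rfl⟩
    exact le_trans (Nat.sInf_le hmem) (ncard_dsupp_le (node_eff Estar) (hdegN Estar))

lemma width_link {k : ℕ}
    (hconn : ∀ F : Set (Sym2 V), F ⊆ G.edgeSet → ¬ (G.deleteEdges F).Connected → k ≤ F.ncard)
    (hG : G.Connected) {D0 : V → ℤ} (hD0 : D0 ∈ DD G D0) (hdeg0 : ∑ v, D0 v = (k:ℤ))
    {E0 F0 : Node G D0} {A : Set V} (ld : LinkData G k E0.val F0.val A)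
    {v w : V} {P Q : Node G D0}
    (hvP : v ∈ dsupp P.val) (hwQ : w ∈ dsupp Q.val) (hvw : G.Adj v w)
    (hall : ∀ p : (TT G D0).Walk P Q, s(E0, F0) ∈ p.edges) :
    s(v, w) ∈ cutSet G A := by
  classical
  obtain ⟨w0⟩ := (tt_connected hconn hG hD0 hdeg0).preconnected P Q
  set p : (TT G D0).Path P Q := w0.toPath with hpdef
  rcases sides_of_walk hconn hdeg0 hG.nonempty ld p.val p.2 (hall p.val) with ⟨hPA, hQA⟩ | ⟨hPA, hQA⟩
  · exact mem_cutSet_of hvw (hPA hvP) (hQA hwQ)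
  · rw [show s(v, w) = s(w, v) from Sym2.eq_swap]
    exact mem_cutSet_of hvw.symm (hQA hwQ) (hPA hvP)

lemma width_node {k : ℕ}
    (hconn : ∀ F : Set (Sym2 V), F ⊆ G.edgeSet → ¬ (G.deleteEdges F).Connected → k ≤ F.ncard)
    (hG : G.Connected) {D0 : V → ℤ} (hD0 : D0 ∈ DD G D0) (hdeg0 : ∑ v, D0 v = (k:ℤ))
    {Estar : Node G D0} {v w : V} {P Q : Node G D0}
    (hvP : v ∈ dsupp P.val) (hwQ : w ∈ dsupp Q.val) (hvw : G.Adj v w)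
    (hP : P ≠ Estar) (hQ : Q ≠ Estar)
    (hall : ∀ p : (TT G D0).Walk P Q, Estar ∈ p.support) : False := by
  classical
  obtain ⟨w0⟩ := (tt_connected hconn hG hD0 hdeg0).preconnected P Q
  set p : (TT G D0).Path P Q := w0.toPath with hpdef
  obtain ⟨Y, C, ld, hPC, hQC⟩ :=
    dir_pair hconn hG hdeg0 p.val hP hQ p.2 (hall p.val)
  have hvC : v ∉ C := hPC hvP
  have hwE : w ∈ dsupp Estar.val := (ld.cutmem w v hvw.symm (hQC hwQ) hvC).1
  have hdisj := disj_supp hconn hdeg0 hG.nonempty Q Estar hQ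
  exact Set.disjoint_left.1 hdisj hwQ hwE

lemma exists_decomp {k : ℕ}
    (hconn : ∀ F : Set (Sym2 V), F ⊆ G.edgeSet → ¬ (G.deleteEdges F).Connected → k ≤ F.ncard)
    (hG : G.Connected) (hk : 1 ≤ k) {D0 : V → ℤ}
    (hD0e : DivEffective D0) (hrk : DivPosRank G D0) (hdeg0 : ∑ v, D0 v = (k:ℤ)) :
    ∃ D : TreeCutDecomp G, D.width ≤ k := by
  classical
  have hD0 : D0 ∈ DD G D0 := mem_DD_self hD0e
  haveI : Fintype (Node G D0) := (DD_finite hD0e).fintype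
  set e : Node G D0 ≃ Fin (Fintype.card (Node G D0)) := Fintype.equivFin _ with he
  set T' : SimpleGraph (Fin (Fintype.card (Node G D0))) :=
    SimpleGraph.comap e.symm (TT G D0) with hT'
  have φadj : ∀ {a b : Node G D0}, (TT G D0).Adj a b → T'.Adj (e a) (e b) := by
    intro a b hab
    show (TT G D0).Adj (e.symm (e a)) (e.symm (e b))
    simpa using hab
  set φ : TT G D0 →g T' := ⟨e, fun hab => φadj hab⟩ with hφ
  set ψ : T' →g TT G D0 := ⟨e.symm, fun h => h⟩ with hψ
  have htree' : T'.IsTree := by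
    constructor
    · rw [connected_iff]
      constructor
      · intro i j
        obtain ⟨p⟩ := (tt_connected hconn hG hD0 hdeg0).preconnected (e.symm i) (e.symm j)
        exact ⟨(p.map φ).copy (Equiv.apply_symm_apply e i) (Equiv.apply_symm_apply e j)⟩
      · exact ⟨e ⟨D0, hD0⟩⟩
    · intro i c hc
      exact tt_acyclic hconn hG hk hdeg0 (c.map ψ)
        ((Walk.map_isCycle_iff_of_injective (Equiv.injective e.symm)).2 hc)
  have hdisj : Pairwise fun i j =>
      Disjoint (dsupp (e.symm i).val) (dsupp (e.symm j).val) := by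
    intro i j hij
    refine disj_supp hconn hdeg0 hG.nonempty _ _ ?_
    intro hcc
    exact hij (by rw [← Equiv.apply_symm_apply e i, ← Equiv.apply_symm_apply e j, hcc])
  have hcovers : ∀ v : V, ∃ i, v ∈ dsupp (e.symm i).val := by
    intro v
    obtain ⟨D', hequiv, heff, hD'v⟩ := hrk v
    refine ⟨e ⟨D', heff, hequiv⟩, ?_⟩
    rw [Equiv.symm_apply_apply]
    exact hD'v
  set D : TreeCutDecomp G :=
    ⟨Fin (Fintype.card (Node G D0)), Finite.of_fintype _, T', htree',
      fun i => dsupp (e.symm i).val, hdisj, hcovers⟩ with hD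
  refine ⟨D, ?_⟩
  rw [TreeCutDecomp.width]
  apply csSup_le
  · exact ⟨_, Or.inr ⟨e ⟨D0, hD0⟩, rfl⟩⟩
  · rintro m (⟨l, hl, rfl⟩ | ⟨b, rfl⟩)
    · -- link bound
      induction l using Sym2.ind with
      | _ i j =>
        have hadjT : (TT G D0).Adj (e.symm i) (e.symm j) := hl
        obtain ⟨A, hfireA, ld⟩ := adj_ldata hconn hdeg0 hadjT
        have hsub : D.linkAdh s(i, j) ⊆ cutSet G A := by
          rintro e' ⟨hedge, v, w, bb, dd, rfl, hvb, hwd, hwalks⟩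
          have hvw : G.Adj v w := (SimpleGraph.mem_edgeSet G).1 hedge
          refine width_link hconn hG hD0 hdeg0 ld hvb hwd hvw ?_
          intro p
          have hW := hwalks ((p.map φ).copy
            (Equiv.apply_symm_apply e bb) (Equiv.apply_symm_apply e dd))
          rw [Walk.edges_copy, Walk.edges_map] at hW
          obtain ⟨ε, hε1, hε2⟩ := List.mem_map.1 hW
          revert hε2
          induction ε using Sym2.ind with
          | _ a b' =>
            intro hε2
            have hε3 : s(e a, e b') = s(i, j) := by
              rw [← hε2]
              rfl
            rw [Sym2.eq_iff] at hε3
            rcases hε3 with ⟨h1, h2⟩ | ⟨h1, h2⟩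
            · have ha : a = e.symm i := by rw [← h1, Equiv.symm_apply_apply]
              have hb : b' = e.symm j := by rw [← h2, Equiv.symm_apply_apply]
              rwa [ha, hb] at hε1
            · have ha : a = e.symm j := by rw [← h1, Equiv.symm_apply_apply]
              have hb : b' = e.symm i := by rw [← h2, Equiv.symm_apply_apply]
              rw [ha, hb] at hε1
              rwa [show s(e.symm j, e.symm i) = s(e.symm i, e.symm j) from Sym2.eq_swap] at hε1
        calc (D.linkAdh s(i, j)).ncard ≤ (cutSet G A).ncard :=
              Set.ncard_le_ncard hsub (Finset.finite_toSet _)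
        _ = k := ld.cutk
    · -- node bound
      have hempty : D.nodeAdh b = ∅ := by
        rw [Set.eq_empty_iff_forall_notMem]
        rintro e' ⟨hedge, v, w, bb, dd, rfl, hvb, hwd, hbb, hdd, hwalks⟩
        have hvw : G.Adj v w := (SimpleGraph.mem_edgeSet G).1 hedge
        refine width_node hconn hG hD0 hdeg0 (Estar := e.symm b) hvb hwd hvw ?_ ?_ ?_
        · intro hcc
          exact hbb (by rw [← Equiv.apply_symm_apply e bb, hcc, Equiv.apply_symm_apply])
        · intro hcc
          exact hdd (by rw [← Equiv.apply_symm_apply e dd, hcc, Equiv.apply_symm_apply])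
        · intro p
          have hW := hwalks ((p.map φ).copy
            (Equiv.apply_symm_apply e bb) (Equiv.apply_symm_apply e dd))
          rw [Walk.support_copy, Walk.support_map] at hW
          obtain ⟨x, hx1, hx2⟩ := List.mem_map.1 hW
          have hx3 : x = e.symm b := by
            have : e x = b := hx2
            rw [← this, Equiv.symm_apply_apply]
          rwa [← hx3]
      have hb1 : (D.bag b).ncard ≤ k :=
        ncard_dsupp_le (node_eff _) (by rw [node_deg]; exact hdeg0)
      rw [hempty]
      simpa using hb1

lemma width_bddAbove (D : TreeCutDecomp G) :
    BddAbove ({n | ∃ l ∈ D.T.edgeSet, n = (D.linkAdh l).ncard} ∪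
      {n | ∃ b : D.B, n = (D.bag b).ncard + (D.nodeAdh b).ncard}) := by
  classical
  refine ⟨Nat.card V + Nat.card (Sym2 V), ?_⟩
  have hedge : ∀ s : Set (Sym2 V), s.ncard ≤ Nat.card (Sym2 V) := by
    intro s
    calc s.ncard ≤ (Set.univ : Set (Sym2 V)).ncard :=
          Set.ncard_le_ncard (Set.subset_univ _) (Set.toFinite _)
    _ = Nat.card (Sym2 V) := Set.ncard_univ _
  have hvert : ∀ s : Set V, s.ncard ≤ Nat.card V := by
    intro s
    calc s.ncard ≤ (Set.univ : Set V).ncard :=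
          Set.ncard_le_ncard (Set.subset_univ _) (Set.toFinite _)
    _ = Nat.card V := Set.ncard_univ _
  rintro m (⟨l', _, rfl⟩ | ⟨b', rfl⟩)
  · have := hedge (D.linkAdh l')
    omega
  · have h1 := hvert (D.bag b')
    have h2 := hedge (D.nodeAdh b')
    omega

lemma width_ge {k : ℕ}
    (hconn : ∀ F : Set (Sym2 V), F ⊆ G.edgeSet → ¬ (G.deleteEdges F).Connected → k ≤ F.ncard)
    (hG : G.Connected) (hkV : k ≤ Nat.card V) (D : TreeCutDecomp G) : k ≤ D.width := by
  classical
  have hbdd := width_bddAbove D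
  by_cases hcase : ∃ (b d : D.B) (v w : V), b ≠ d ∧ v ∈ D.bag b ∧ w ∈ D.bag d
  · obtain ⟨b, d, v, w, hbd, hvb, hwd⟩ := hcase
    haveI : Finite D.B := D.finB
    obtain ⟨p0⟩ := D.isTree.1.preconnected b d
    obtain ⟨c, hadj, p, hpcons⟩ := Walk.exists_eq_cons_of_ne hbd p0.toPath.val
    have hppath : p0.toPath.val.IsPath := p0.toPath.2
    rw [hpcons] at hppath
    have hl : s(b, c) ∈ D.T.edgeSet := hadj
    set S1 : Set D.B := {P | ∃ q : D.T.Walk P b, s(b, c) ∉ q.edges} with hS1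
    set U : Set V := {x | ∃ P ∈ S1, x ∈ D.bag P} with hU
    have hbS : b ∈ S1 := ⟨Walk.nil, by simp⟩
    have hdS : d ∉ S1 := by
      rintro ⟨q, hq⟩
      have hqpath : p.IsPath := ((Walk.cons_isPath_iff hadj p).1 hppath).1
      have hbnot : b ∉ p.support := ((Walk.cons_isPath_iff hadj p).1 hppath).2
      have hlp : s(b, c) ∉ p.edges := by
        intro hmem
        exact hbnot (Walk.fst_mem_support_of_mem_edges p hmem)
      set r := (p.append q).toPath with hr
      have hlr : s(b, c) ∉ r.val.edges := by
        intro hmem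
        have := Walk.edges_toPath_subset (p.append q) hmem
        rw [Walk.edges_append, List.mem_append] at this
        rcases this with h | h
        · exact hlp h
        · exact hq h
      have hcyc : (Walk.cons hadj r.val).IsCycle := by
        rw [Walk.cons_isCycle_iff]
        exact ⟨r.2, hlr⟩
      exact D.isTree.2 (Walk.cons hadj r.val) hcyc
    have hcross : ∀ x y, G.Adj x y → x ∈ U → y ∉ U → s(x, y) ∈ D.linkAdh s(b, c) := by
      intro x y hxy hxU hyU
      obtain ⟨P, hPS, hxP⟩ := hxU
      obtain ⟨Q, hyQ⟩ := D.covers y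
      have hQS : Q ∉ S1 := fun hQS => hyU ⟨Q, hQS, hyQ⟩
      refine ⟨hxy, x, y, P, Q, rfl, hxP, hyQ, ?_⟩
      intro r
      by_contra hlr
      obtain ⟨q, hq⟩ := hPS
      refine hQS ⟨(r.reverse).append q, ?_⟩
      rw [Walk.edges_append, List.mem_append, Walk.edges_reverse, List.mem_reverse]
      rintro (h | h)
      · exact hlr h
      · exact hq h
    have hdisc : ¬ (G.deleteEdges (D.linkAdh s(b, c))).Connected := by
      intro hcc
      obtain ⟨r⟩ := hcc.preconnected v w
      have hstay : ∀ {x y : V}, (G.deleteEdges (D.linkAdh s(b, c))).Walk x y → x ∈ U → y ∈ U := by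
        intro x y r
        induction r with
        | nil => exact id
        | cons h' r' ih =>
            intro hx
            rw [deleteEdges_adj] at h'
            refine ih ?_
            by_contra hz
            exact h'.2 (hcross _ _ h'.1 hx hz)
      have hwU : w ∈ U := hstay r ⟨b, hbS, hvb⟩
      obtain ⟨Q, hQS, hwQ⟩ := hwU
      have hQd : Q = d := by
        by_contra hne
        exact Set.disjoint_left.1 (D.disj hne) hwQ hwd
      exact hdS (hQd ▸ hQS)
    have hle := hconn _ (fun e' he' => he'.1) hdisc
    have hmem : (D.linkAdh s(b, c)).ncard ∈
        ({n | ∃ l ∈ D.T.edgeSet, n = (D.linkAdh l).ncard} ∪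
        {n | ∃ b : D.B, n = (D.bag b).ncard + (D.nodeAdh b).ncard}) :=
      Or.inl ⟨s(b, c), hl, rfl⟩
    exact le_trans hle (le_csSup hbdd hmem)
  · have hnV : Nonempty V := hG.nonempty
    obtain ⟨v₀⟩ := hnV
    obtain ⟨b₀, hb₀⟩ := D.covers v₀
    have hall : ∀ x : V, x ∈ D.bag b₀ := by
      intro x
      obtain ⟨bx, hbx⟩ := D.covers x
      by_cases hbe : bx = b₀
      · exact hbe ▸ hbx
      · exact absurd ⟨bx, b₀, x, v₀, hbe, hbx, hb₀⟩ hcase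
    have hbag : Nat.card V ≤ (D.bag b₀).ncard := by
      have huniv : D.bag b₀ = Set.univ := Set.eq_univ_of_forall hall
      rw [huniv, Set.ncard_univ]
    have hmem : (D.bag b₀).ncard + (D.nodeAdh b₀).ncard ∈
        ({n | ∃ l ∈ D.T.edgeSet, n = (D.linkAdh l).ncard} ∪
        {n | ∃ b : D.B, n = (D.bag b).ncard + (D.nodeAdh b).ncard}) :=
      Or.inr ⟨b₀, rfl⟩
    rw [TreeCutDecomp.width]
    have h3 := le_csSup hbdd hmem
    omega

noncomputable def singletonScramble (G : SimpleGraph V) (hnV : Nonempty V) : Scramble G where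
  eggs := {X | ∃ v : V, X = {v}}
  nonempty := ⟨{hnV.some}, hnV.some, rfl⟩
  egg_connected := by
    rintro X ⟨v, rfl⟩
    rw [connected_iff]
    refine ⟨?_, ⟨⟨v, rfl⟩⟩⟩
    intro a b
    have : a = b := Subtype.ext (a.2.trans b.2.symm)
    exact this ▸ Reachable.refl a

lemma singleton_order_ge {k : ℕ}
    (hconn : ∀ F : Set (Sym2 V), F ⊆ G.edgeSet → ¬ (G.deleteEdges F).Connected → k ≤ F.ncard)
    (hnV : Nonempty V) (hkV : k ≤ Nat.card V) :
    k ≤ (singletonScramble G hnV).order := by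
  classical
  refine le_csInf ?_ ?_
  · refine ⟨(Set.univ : Set V).ncard, Or.inl ⟨Set.univ, ?_, rfl⟩⟩
    rintro X ⟨v, rfl⟩
    exact ⟨v, Set.mem_univ v, rfl⟩
  · rintro m (⟨H, hH, rfl⟩ | ⟨F, hF, rfl⟩)
    · have huniv : H = Set.univ := by
        rw [Set.eq_univ_iff_forall]
        intro x
        obtain ⟨z, hz1, hz2⟩ := hH {x} ⟨x, rfl⟩
        rw [Set.mem_singleton_iff] at hz2
        exact hz2 ▸ hz1
      rw [huniv, Set.ncard_univ]
      exact hkV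
    · obtain ⟨hsub, E1, hE1, E2, hE2, C1, C2, hne, hC1, hC2⟩ := hF
      obtain ⟨x1, hx1⟩ := hE1
      obtain ⟨x2, hx2⟩ := hE2
      refine hconn F hsub ?_
      intro hcc
      apply hne
      have hr := hcc.preconnected x1 x2
      have h1 : x1 ∈ C1.supp := hC1 (by rw [hx1]; rfl)
      have h2 : x2 ∈ C2.supp := hC2 (by rw [hx2]; rfl)
      rw [SimpleGraph.ConnectedComponent.mem_supp_iff] at h1 h2
      rw [← h1, ← h2]
      exact SimpleGraph.ConnectedComponent.sound hr

end Scw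

/-- If `G` is a finite connected simple graph that is `k`-edge-connected (`k ≥ 1`) and
has gonality `k`, then `sn(G) = scw(G) = gon(G) = k`. -/
theorem scrambleNumber_eq_screewidth_eq_gonality [Fintype V] (G : SimpleGraph V)
    (hG : G.Connected) (k : ℕ) (hk : 1 ≤ k)
    (hconn : ∀ F : Set (Sym2 V), F ⊆ G.edgeSet → ¬ (G.deleteEdges F).Connected →
      k ≤ F.ncard)
    (hgon : gonality G = k) :
    scrambleNumber G = k ∧ screewidth G = k := by
  classical
  have hnV : Nonempty V := hG.nonempty
  have hone : (Fintype.card V : ℕ) ∈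
      {n : ℕ | ∃ D : V → ℤ, DivEffective D ∧ DivPosRank G D ∧ ∑ v, D v = (n:ℤ)} := by
    refine ⟨fun _ => 1, fun v => by norm_num, ?_, by simp⟩
    intro v
    exact ⟨fun _ => 1, ⟨0, by rw [Scw.lap_zero]; funext w; simp⟩,
      fun w => by norm_num, le_refl 1⟩
  have hne : {n : ℕ | ∃ D : V → ℤ, DivEffective D ∧ DivPosRank G D ∧
      ∑ v, D v = (n:ℤ)}.Nonempty := ⟨_, hone⟩
  have hsinf : sInf {n : ℕ | ∃ D : V → ℤ, DivEffective D ∧ DivPosRank G D ∧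
      ∑ v, D v = (n:ℤ)} = k := hgon
  have hmem := Nat.sInf_mem hne
  rw [hsinf] at hmem
  obtain ⟨D0, hD0eff, hD0rk, hD0deg⟩ := hmem
  have hkV : k ≤ Nat.card V := by
    have h1 := Nat.sInf_le hone
    rw [hsinf] at h1
    rw [Nat.card_eq_fintype_card]
    exact h1
  have hbddS : BddAbove {n | ∃ S : Scramble G, S.order = n} := by
    refine ⟨k, ?_⟩
    rintro m ⟨S, rfl⟩
    exact Scw.scramble_order_le hconn hG hk hD0eff hD0rk hD0deg S
  constructor
  · apply le_antisymm
    · apply csSup_le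
      · exact ⟨(Scw.singletonScramble G hnV).order, Scw.singletonScramble G hnV, rfl⟩
      · rintro m ⟨S, rfl⟩
        exact Scw.scramble_order_le hconn hG hk hD0eff hD0rk hD0deg S
    · exact le_trans (Scw.singleton_order_ge hconn hnV hkV)
        (le_csSup hbddS ⟨Scw.singletonScramble G hnV, rfl⟩)
  · apply le_antisymm
    · obtain ⟨D, hD⟩ := Scw.exists_decomp hconn hG hk hD0eff hD0rk hD0deg
      exact le_trans (Nat.sInf_le ⟨D, rfl⟩) hD
    · obtain ⟨D, _⟩ := Scw.exists_decomp hconn hG hk hD0eff hD0rk hD0deg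
      refine le_csInf ⟨D.width, D, rfl⟩ ?_
      rintro m ⟨D', rfl⟩
      exact Scw.width_ge hconn hG hkV D'
end

section
/- For finite connected simple graphs G and H, the screewidth of the Cartesian (box) product satisfies scw(G □ H) ≤ min{|V(H)| · scw(G), |V(G)| · scw(H)}. -/
open SimpleGraph

universe u

variable {V : Type u}

section Aux

variable {W : Type*} [Finite V] [Finite W] {G : SimpleGraph V} {H : SimpleGraph W}

/-- The trivial one-node decomposition. -/
def trivialDecomp [Finite V] (G : SimpleGraph V) : TreeCutDecomp G where
  B := PUnit
  finB := inferInstance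
  T := ⊥
  isTree := ⟨⟨fun a b => (Subsingleton.elim a b) ▸ Reachable.refl a⟩, isAcyclic_bot⟩
  bag _ := Set.univ
  disj := Subsingleton.pairwise
  covers v := ⟨PUnit.unit, trivial⟩

lemma screewidth_set_nonempty (G : SimpleGraph V) :
    {n | ∃ D : TreeCutDecomp G, D.width = n}.Nonempty :=
  ⟨_, trivialDecomp G, rfl⟩

lemma width_set_bddAbove (D : TreeCutDecomp G) :
    BddAbove ({n | ∃ l ∈ D.T.edgeSet, n = (D.linkAdh l).ncard} ∪
        {n | ∃ b : D.B, n = (D.bag b).ncard + (D.nodeAdh b).ncard}) := by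
  refine ⟨Nat.card V + Nat.card (Sym2 V), ?_⟩
  rintro n (⟨l, hl, rfl⟩ | ⟨b, rfl⟩)
  · calc (D.linkAdh l).ncard ≤ (Set.univ : Set (Sym2 V)).ncard :=
          Set.ncard_le_ncard (Set.subset_univ _) Set.finite_univ
      _ = Nat.card (Sym2 V) := Set.ncard_univ _
      _ ≤ _ := Nat.le_add_left _ _
  · gcongr
    · calc (D.bag b).ncard ≤ (Set.univ : Set V).ncard :=
          Set.ncard_le_ncard (Set.subset_univ _) Set.finite_univ
        _ = Nat.card V := Set.ncard_univ _
    · calc (D.nodeAdh b).ncard ≤ (Set.univ : Set (Sym2 V)).ncard :=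
          Set.ncard_le_ncard (Set.subset_univ _) Set.finite_univ
        _ = Nat.card (Sym2 V) := Set.ncard_univ _

lemma linkAdh_ncard_le_width (D : TreeCutDecomp G) {l : Sym2 D.B} (hl : l ∈ D.T.edgeSet) :
    (D.linkAdh l).ncard ≤ D.width :=
  le_csSup (width_set_bddAbove D) (Or.inl ⟨l, hl, rfl⟩)

lemma nodeAdh_ncard_le_width (D : TreeCutDecomp G) (b : D.B) :
    (D.bag b).ncard + (D.nodeAdh b).ncard ≤ D.width :=
  le_csSup (width_set_bddAbove D) (Or.inr ⟨b, rfl⟩)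

lemma ncard_prod_univ {α β : Type*} (S : Set α) :
    (S ×ˢ (Set.univ : Set β)).ncard = S.ncard * Nat.card β := by
  rw [← Nat.card_coe_set_eq, Nat.card_congr (Equiv.Set.prod _ _), Nat.card_prod,
    Nat.card_coe_set_eq, Nat.card_coe_set_eq, Set.ncard_univ]

end Aux

section Box

variable {W : Type*} [Finite V] [Finite W] {G : SimpleGraph V} {H : SimpleGraph W}

/-- Blow up a decomposition of `G` to one of `G □ H` by replacing each bag `X` with `X × W`. -/
def TreeCutDecomp.boxLeft (H : SimpleGraph W) (D : TreeCutDecomp G) :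
    TreeCutDecomp (G □ H) where
  B := D.B
  finB := D.finB
  T := D.T
  isTree := D.isTree
  bag b := D.bag b ×ˢ Set.univ
  disj := by
    intro b d hbd
    have h := D.disj hbd
    refine Set.disjoint_left.mpr ?_
    rintro ⟨v, w⟩ ⟨hv, -⟩ ⟨hv', -⟩
    exact Set.disjoint_left.mp h hv hv'
  covers v := (D.covers v.1).imp fun b hb => ⟨hb, trivial⟩

lemma TreeCutDecomp.boxLeft_linkAdh_subset (D : TreeCutDecomp G) (l : Sym2 D.B) :
    (D.boxLeft H).linkAdh l ⊆
      (fun p : Sym2 V × W => Sym2.map (fun u => (u, p.2)) p.1) '' (D.linkAdh l ×ˢ Set.univ) := by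
  rintro e ⟨he, v, w, b, d, rfl, hv, hw, hwalk⟩
  rw [SimpleGraph.mem_edgeSet] at he
  have hbd : b ≠ d := by
    rintro rfl
    exact List.not_mem_nil (hwalk SimpleGraph.Walk.nil)
  rcases he with ⟨hadj, h2⟩ | ⟨hadj, h1⟩
  · refine ⟨(s(v.1, w.1), v.2), ⟨⟨hadj, v.1, w.1, b, d, rfl, hv.1, hw.1, hwalk⟩, trivial⟩, ?_⟩
    simp only [Sym2.map_pair_eq]
    rw [show (v.1, v.2) = v from rfl, h2, show (w.1, w.2) = w from rfl]
  · exact absurd (hw.1) (Set.disjoint_left.mp (D.disj hbd) (h1 ▸ hv.1))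

lemma TreeCutDecomp.boxLeft_nodeAdh_subset (D : TreeCutDecomp G) (n : D.B) :
    (D.boxLeft H).nodeAdh n ⊆
      (fun p : Sym2 V × W => Sym2.map (fun u => (u, p.2)) p.1) '' (D.nodeAdh n ×ˢ Set.univ) := by
  rintro e ⟨he, v, w, b, d, rfl, hv, hw, hbn, hdn, hwalk⟩
  rw [SimpleGraph.mem_edgeSet] at he
  have hbd : b ≠ d := by
    rintro rfl
    exact hbn (List.mem_singleton.mp (hwalk SimpleGraph.Walk.nil)).symm
  rcases he with ⟨hadj, h2⟩ | ⟨hadj, h1⟩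
  · refine ⟨(s(v.1, w.1), v.2),
      ⟨⟨hadj, v.1, w.1, b, d, rfl, hv.1, hw.1, hbn, hdn, hwalk⟩, trivial⟩, ?_⟩
    simp only [Sym2.map_pair_eq]
    rw [show (v.1, v.2) = v from rfl, h2, show (w.1, w.2) = w from rfl]
  · exact absurd (hw.1) (Set.disjoint_left.mp (D.disj hbd) (h1 ▸ hv.1))

lemma ncard_map_prod_le (S : Set (Sym2 V)) {A : Set (Sym2 (V × W))}
    (hA : A ⊆ (fun p : Sym2 V × W => Sym2.map (fun u => (u, p.2)) p.1) '' (S ×ˢ Set.univ)) :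
    A.ncard ≤ S.ncard * Nat.card W := by
  calc A.ncard ≤ _ := Set.ncard_le_ncard hA (Set.toFinite _)
    _ ≤ (S ×ˢ (Set.univ : Set W)).ncard := Set.ncard_image_le (Set.toFinite _)
    _ = S.ncard * Nat.card W := ncard_prod_univ S

lemma TreeCutDecomp.boxLeft_width_le [Nonempty V] (D : TreeCutDecomp G) :
    (D.boxLeft H).width ≤ Nat.card W * D.width := by
  have hBne : Nonempty D.B := ⟨(D.covers (Classical.arbitrary V)).choose⟩
  refine csSup_le ⟨_, Or.inr ⟨Classical.arbitrary D.B, rfl⟩⟩ ?_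
  rintro n (⟨l, hl, rfl⟩ | ⟨b, rfl⟩)
  · calc ((D.boxLeft H).linkAdh l).ncard ≤ (D.linkAdh l).ncard * Nat.card W :=
          ncard_map_prod_le _ (D.boxLeft_linkAdh_subset l)
      _ ≤ D.width * Nat.card W := by gcongr; exact linkAdh_ncard_le_width D hl
      _ = Nat.card W * D.width := Nat.mul_comm _ _
  · have h1 : ((D.boxLeft H).bag b).ncard = (D.bag b).ncard * Nat.card W :=
      ncard_prod_univ _
    calc ((D.boxLeft H).bag b).ncard + ((D.boxLeft H).nodeAdh b).ncard
        ≤ (D.bag b).ncard * Nat.card W + (D.nodeAdh b).ncard * Nat.card W := by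
          rw [h1]; gcongr; exact ncard_map_prod_le _ (D.boxLeft_nodeAdh_subset b)
      _ = ((D.bag b).ncard + (D.nodeAdh b).ncard) * Nat.card W := (Nat.add_mul _ _ _).symm
      _ ≤ D.width * Nat.card W := by gcongr; exact nodeAdh_ncard_le_width D b
      _ = Nat.card W * D.width := Nat.mul_comm _ _

end Box

section BoxRight

variable {W : Type*} [Finite V] [Finite W] {G : SimpleGraph V} {H : SimpleGraph W}

lemma ncard_univ_prod {α β : Type*} (S : Set β) :
    ((Set.univ : Set α) ×ˢ S).ncard = S.ncard * Nat.card α := by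
  rw [← Nat.card_coe_set_eq, Nat.card_congr (Equiv.Set.prod _ _), Nat.card_prod,
    Nat.card_coe_set_eq, Nat.card_coe_set_eq, Set.ncard_univ, Nat.mul_comm]

lemma ncard_map_prod_le' {α β γ : Type*} [Finite α] [Finite β] (f : α × β → γ)
    (S : Set α) {A : Set γ} (hA : A ⊆ f '' (S ×ˢ Set.univ)) :
    A.ncard ≤ S.ncard * Nat.card β := by
  calc A.ncard ≤ _ := Set.ncard_le_ncard hA (Set.toFinite _)
    _ ≤ (S ×ˢ (Set.univ : Set β)).ncard := Set.ncard_image_le (Set.toFinite _)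
    _ = S.ncard * Nat.card β := ncard_prod_univ S

/-- Blow up a decomposition of `H` to one of `G □ H` by replacing each bag `X` with `V × X`. -/
def TreeCutDecomp.boxRight (G : SimpleGraph V) (D : TreeCutDecomp H) :
    TreeCutDecomp (G □ H) where
  B := D.B
  finB := D.finB
  T := D.T
  isTree := D.isTree
  bag b := Set.univ ×ˢ D.bag b
  disj := by
    intro b d hbd
    have h := D.disj hbd
    refine Set.disjoint_left.mpr ?_
    rintro ⟨v, w⟩ ⟨-, hw⟩ ⟨-, hw'⟩
    exact Set.disjoint_left.mp h hw hw'
  covers v := (D.covers v.2).imp fun b hb => ⟨trivial, hb⟩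

lemma TreeCutDecomp.boxRight_linkAdh_subset (D : TreeCutDecomp H) (l : Sym2 D.B) :
    ((D.boxRight G).linkAdh l) ⊆
      (fun p : Sym2 W × V => Sym2.map (fun w => (p.2, w)) p.1) '' (D.linkAdh l ×ˢ Set.univ) := by
  rintro e ⟨he, v, w, b, d, rfl, hv, hw, hwalk⟩
  rw [SimpleGraph.mem_edgeSet] at he
  have hbd : b ≠ d := by
    rintro rfl
    exact List.not_mem_nil (hwalk SimpleGraph.Walk.nil)
  rcases he with ⟨hadj, h2⟩ | ⟨hadj, h1⟩
  · exact absurd (hw.2) (Set.disjoint_left.mp (D.disj hbd) (h2 ▸ hv.2))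
  · refine ⟨(s(v.2, w.2), v.1), ⟨⟨hadj, v.2, w.2, b, d, rfl, hv.2, hw.2, hwalk⟩, trivial⟩, ?_⟩
    simp only [Sym2.map_pair_eq]
    rw [show (v.1, v.2) = v from rfl, h1, show (w.1, w.2) = w from rfl]

lemma TreeCutDecomp.boxRight_nodeAdh_subset (D : TreeCutDecomp H) (n : D.B) :
    ((D.boxRight G).nodeAdh n) ⊆
      (fun p : Sym2 W × V => Sym2.map (fun w => (p.2, w)) p.1) '' (D.nodeAdh n ×ˢ Set.univ) := by
  rintro e ⟨he, v, w, b, d, rfl, hv, hw, hbn, hdn, hwalk⟩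
  rw [SimpleGraph.mem_edgeSet] at he
  have hbd : b ≠ d := by
    rintro rfl
    exact hbn (List.mem_singleton.mp (hwalk SimpleGraph.Walk.nil)).symm
  rcases he with ⟨hadj, h2⟩ | ⟨hadj, h1⟩
  · exact absurd (hw.2) (Set.disjoint_left.mp (D.disj hbd) (h2 ▸ hv.2))
  · refine ⟨(s(v.2, w.2), v.1),
      ⟨⟨hadj, v.2, w.2, b, d, rfl, hv.2, hw.2, hbn, hdn, hwalk⟩, trivial⟩, ?_⟩
    simp only [Sym2.map_pair_eq]
    rw [show (v.1, v.2) = v from rfl, h1, show (w.1, w.2) = w from rfl]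

lemma TreeCutDecomp.boxRight_width_le [Nonempty W] (D : TreeCutDecomp H) :
    (D.boxRight G).width ≤ Nat.card V * D.width := by
  have hBne : Nonempty D.B := ⟨(D.covers (Classical.arbitrary W)).choose⟩
  refine csSup_le ⟨_, Or.inr ⟨Classical.arbitrary D.B, rfl⟩⟩ ?_
  rintro n (⟨l, hl, rfl⟩ | ⟨b, rfl⟩)
  · calc ((D.boxRight G).linkAdh l).ncard ≤ (D.linkAdh l).ncard * Nat.card V :=
          ncard_map_prod_le' _ _ (D.boxRight_linkAdh_subset l)
      _ ≤ D.width * Nat.card V := by gcongr; exact linkAdh_ncard_le_width D hl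
      _ = Nat.card V * D.width := Nat.mul_comm _ _
  · have h1 : ((D.boxRight G).bag b).ncard = (D.bag b).ncard * Nat.card V :=
      ncard_univ_prod _
    calc ((D.boxRight G).bag b).ncard + ((D.boxRight G).nodeAdh b).ncard
        ≤ (D.bag b).ncard * Nat.card V + (D.nodeAdh b).ncard * Nat.card V := by
          rw [h1]; gcongr; exact ncard_map_prod_le' _ _ (D.boxRight_nodeAdh_subset b)
      _ = ((D.bag b).ncard + (D.nodeAdh b).ncard) * Nat.card V := (Nat.add_mul _ _ _).symm
      _ ≤ D.width * Nat.card V := by gcongr; exact nodeAdh_ncard_le_width D b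
      _ = Nat.card V * D.width := Nat.mul_comm _ _

end BoxRight


/-- For finite connected simple graphs `G` and `H`, the screewidth of the Cartesian
(box) product satisfies `scw(G □ H) ≤ min {|V(H)|·scw(G), |V(G)|·scw(H)}`. -/
theorem screewidth_boxProd_le {W : Type*} [Finite V] [Finite W]
    (G : SimpleGraph V) (H : SimpleGraph W) (hG : G.Connected) (hH : H.Connected) :
    screewidth (G □ H) ≤ min (Nat.card W * screewidth G) (Nat.card V * screewidth H) := by
  have : Nonempty V := hG.nonempty
  have : Nonempty W := hH.nonempty
  refine le_min ?_ ?_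
  · obtain ⟨D, hD⟩ := Nat.sInf_mem (screewidth_set_nonempty G)
    calc screewidth (G □ H) ≤ (D.boxLeft H).width := Nat.sInf_le ⟨_, rfl⟩
      _ ≤ Nat.card W * D.width := D.boxLeft_width_le
      _ = Nat.card W * screewidth G := by rw [hD]; rfl
  · obtain ⟨D, hD⟩ := Nat.sInf_mem (screewidth_set_nonempty H)
    calc screewidth (G □ H) ≤ (D.boxRight G).width := Nat.sInf_le ⟨_, rfl⟩
      _ ≤ Nat.card V * D.width := D.boxRight_width_le
      _ = Nat.card V * screewidth H := by rw [hD]; rfl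
end

section
/- For all m, n ≥ 1, the grid graph G_{m,n} = P_m □ P_n (the Cartesian product of the path graphs on m and on n vertices) satisfies scw(G_{m,n}) = min{m, n}. -/
open SimpleGraph

universe u

variable {V : Type u}

section AuxTreeLemmas

section TreeLemmas
variable {B : Type} {T : SimpleGraph B}

/-- In a tree, the edges of any path between `u` and `v` are contained in any walk. -/
lemma tree_path_edges_subset (hT : T.IsTree) {u v : B} (p : T.Walk u v) (hp : p.IsPath)
    (w : T.Walk u v) : p.edges ⊆ w.edges := by
  classical
  obtain ⟨r, -, h1⟩ := hT.existsUnique_path u v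
  have : p = w.bypass := (h1 p hp).trans (h1 w.bypass w.bypass_isPath).symm
  rw [this]
  exact w.edges_bypass_subset

/-- Likewise for supports. -/
lemma tree_path_support_subset (hT : T.IsTree) {u v : B} (p : T.Walk u v) (hp : p.IsPath)
    (w : T.Walk u v) : p.support ⊆ w.support := by
  classical
  obtain ⟨r, -, h1⟩ := hT.existsUnique_path u v
  have : p = w.bypass := (h1 p hp).trans (h1 w.bypass w.bypass_isPath).symm
  rw [this]
  exact w.support_bypass_subset

/-- Every walk between adjacent `b d` in a tree contains the edge `s(b,d)`. -/
lemma tree_walk_mem_edge (hT : T.IsTree) {b d : B} (h : T.Adj b d) (w : T.Walk b d) :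
    s(b, d) ∈ w.edges := by
  have hp : (Walk.cons h Walk.nil).IsPath := by
    simp [Walk.cons_isPath_iff, h.ne]
  exact tree_path_edges_subset hT _ hp w (by simp)

/-- From a path to `b` containing the edge `s(d,b)`, extract a walk to `d` avoiding it. -/
lemma exists_walk_avoid {c b d : B} (p : T.Walk c b) (hp : p.IsPath)
    (hl : s(d, b) ∈ p.edges) : ∃ q : T.Walk c d, s(d, b) ∉ q.edges := by
  induction p with
  | nil => simp at hl
  | @cons c c' b h p ih =>
    rw [Walk.edges_cons, List.mem_cons] at hl
    rw [Walk.cons_isPath_iff] at hp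
    rcases hl with hl | hl
    · rw [Sym2.eq_iff] at hl
      rcases hl with ⟨rfl, rfl⟩ | ⟨rfl, rfl⟩
      · exact ⟨Walk.nil, by simp⟩
      · exact absurd p.end_mem_support hp.2
    · obtain ⟨q, hq⟩ := ih hp.1 hl
      by_cases he : s(d, b) = s(c, c')
      · rw [Sym2.eq_iff] at he
        rcases he with ⟨rfl, rfl⟩ | ⟨rfl, rfl⟩
        · exact ⟨Walk.nil, by simp⟩
        · exact absurd p.end_mem_support hp.2
      · exact ⟨Walk.cons h q, by simp [he, hq]⟩


/-- CORE: any walk between two distinct neighbours of `b` passes through `b`. -/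
lemma tree_walk_between_nbrs (hT : T.IsTree) {b d d' : B} (hbd : T.Adj b d) (hbd' : T.Adj b d')
    (hne : d ≠ d') (w : T.Walk d d') : b ∈ w.support := by
  by_contra hb
  have hp2 : (Walk.cons hbd.symm (Walk.cons hbd' Walk.nil)).IsPath := by
    simp [Walk.cons_isPath_iff, hbd.ne', hbd'.ne', hne, hbd'.ne]
  have := tree_path_support_subset hT _ hp2 w
  exact hb (this (by simp))

/-- the two "sides" of an edge of a tree cover everything -/
lemma tree_side_cover (hT : T.IsTree) {b d : B} (h : T.Adj b d) (c : B) :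
    (∃ w : T.Walk c b, s(b, d) ∉ w.edges) ∨ (∃ w : T.Walk c d, s(b, d) ∉ w.edges) := by
  obtain ⟨p, hp, -⟩ := hT.existsUnique_path c b
  by_cases hl : s(b, d) ∈ p.edges
  · right
    rw [Sym2.eq_swap] at hl
    obtain ⟨q, hq⟩ := exists_walk_avoid p hp hl
    rw [Sym2.eq_swap] at hq
    exact ⟨q, hq⟩
  · exact Or.inl ⟨p, hl⟩

/-- the two sides are disjoint -/
lemma tree_side_disj (hT : T.IsTree) {b d c : B} (h : T.Adj b d)
    (h1 : ∃ w : T.Walk c b, s(b, d) ∉ w.edges) (h2 : ∃ w : T.Walk c d, s(b, d) ∉ w.edges) :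
    False := by
  obtain ⟨w1, hw1⟩ := h1
  obtain ⟨w2, hw2⟩ := h2
  have := tree_walk_mem_edge hT h (w1.reverse.append w2)
  rw [Walk.edges_append, List.mem_append, Walk.edges_reverse, List.mem_reverse] at this
  tauto

/-- any walk between nodes on opposite sides of an edge uses the edge -/
lemma tree_cross (hT : T.IsTree) {b d c₁ c₂ : B} (h : T.Adj b d)
    (h1 : ∃ w : T.Walk c₁ b, s(b, d) ∉ w.edges) (h2 : ∃ w : T.Walk c₂ d, s(b, d) ∉ w.edges)
    (w : T.Walk c₁ c₂) : s(b, d) ∈ w.edges := by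
  by_contra hw
  obtain ⟨w1, hw1⟩ := h1
  obtain ⟨w2, hw2⟩ := h2
  have := tree_walk_mem_edge hT h (w1.reverse.append (w.append w2))
  rw [Walk.edges_append, List.mem_append, Walk.edges_reverse, List.mem_reverse,
    Walk.edges_append, List.mem_append] at this
  tauto

/-- anchor: `d` is the neighbour of `b` in the component of `c` in `T - b` -/
def AnchorProp (T : SimpleGraph B) (b c d : B) : Prop :=
  T.Adj b d ∧ ∃ q : T.Walk d c, b ∉ q.support

lemma anchor_exists (hT : T.IsTree) {b c : B} (hcb : c ≠ b) : ∃ d, AnchorProp T b c d := by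
  obtain ⟨p, hp, -⟩ := hT.existsUnique_path b c
  cases p with
  | nil => exact absurd rfl hcb.symm
  | @cons _ d _ h q =>
    rw [Walk.cons_isPath_iff] at hp
    exact ⟨d, h, q, hp.2⟩

lemma anchor_different (hT : T.IsTree) {b c c' d d' : B} (h : AnchorProp T b c d)
    (h' : AnchorProp T b c' d') (hne : d ≠ d') (w : T.Walk c c') : b ∈ w.support := by
  by_contra hb
  obtain ⟨hadj, q, hq⟩ := h
  obtain ⟨hadj', q', hq'⟩ := h'
  have := tree_walk_between_nbrs hT hadj hadj' hne (q.append (w.append q'.reverse))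
  rw [Walk.mem_support_append_iff, Walk.mem_support_append_iff, Walk.support_reverse,
    List.mem_reverse] at this
  tauto

/-- a node with anchor `d` is on the `d`-side of the edge `s(b,d)` -/
lemma anchor_side (hT : T.IsTree) {b c d : B} (h : AnchorProp T b c d) :
    ∃ w : T.Walk c d, s(b, d) ∉ w.edges := by
  obtain ⟨hadj, q, hq⟩ := h
  refine ⟨q.reverse, fun he => hq ?_⟩
  rw [Walk.edges_reverse, List.mem_reverse] at he
  exact q.fst_mem_support_of_mem_edges he

end TreeLemmas



lemma nat_ivt {g : ℕ → Prop} : ∀ {b a : ℕ}, a ≤ b → g a → ¬ g b →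
    ∃ k, a ≤ k ∧ k + 1 ≤ b ∧ g k ∧ ¬ g (k + 1) := by
  intro b
  induction b with
  | zero => intro a hab ha hb; interval_cases a; exact absurd ha hb
  | succ b ih =>
    intro a hab ha hb
    rcases Nat.eq_or_lt_of_le hab with rfl | hlt
    · exact absurd ha hb
    · by_cases hg : g b
      · exact ⟨b, by omega, le_refl _, hg, hb⟩
      · obtain ⟨k, h1, h2, h3, h4⟩ := ih (by omega) ha hg
        exact ⟨k, h1, by omega, h3, h4⟩

lemma nat_const {X : Type*} {f : ℕ → X} {m : ℕ} (h : ∀ i, i + 1 < m → f i = f (i + 1)) :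
    ∀ i, i < m → f i = f 0 := by
  intro i
  induction i with
  | zero => intro _; rfl
  | succ i ih => intro hi; rw [← h i hi]; exact ih (by omega)

-- grid basics
lemma grid_adj_horiz {m n : ℕ} (i : ℕ) (h1 : i < m) (h2 : i + 1 < m) (j : Fin n) :
    (pathGraph m □ pathGraph n).Adj (⟨i, h1⟩, j) (⟨i + 1, h2⟩, j) := by
  apply SimpleGraph.boxProd_adj_left.2
  rw [pathGraph_adj]
  left; rfl

lemma grid_adj_vert {m n : ℕ} (i : Fin m) (k : ℕ) (h1 : k < n) (h2 : k + 1 < n) :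
    (pathGraph m □ pathGraph n).Adj (i, ⟨k, h1⟩) (i, ⟨k + 1, h2⟩) := by
  apply SimpleGraph.boxProd_adj_right.2
  rw [pathGraph_adj]
  left; rfl



/-- walks in the path graph cross every intermediate edge -/
lemma pathGraph_walk_cross {m : ℕ} {x y : Fin m} (w : (pathGraph m).Walk x y) :
    ∀ i : ℕ, (hi : i + 1 < m) → (x : ℕ) ≤ i → i < (y : ℕ) →
      s((⟨i, by omega⟩ : Fin m), (⟨i + 1, hi⟩ : Fin m)) ∈ w.edges := by
  induction w with
  | nil => intro i hi h1 h2; omega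
  | @cons x x' y h w ih =>
    intro i hi h1 h2
    rw [pathGraph_adj] at h
    rcases h with h | h
    · by_cases hix : i < (x' : ℕ)
      · have e1 : x = (⟨i, by omega⟩ : Fin m) := Fin.ext (by simp; omega)
        have e2 : x' = (⟨i + 1, hi⟩ : Fin m) := Fin.ext (by simp; omega)
        have heq : s(x, x') = s((⟨i, by omega⟩ : Fin m), (⟨i + 1, hi⟩ : Fin m)) :=
          Sym2.eq_iff.2 (Or.inl ⟨e1, e2⟩)
        rw [Walk.edges_cons]
        exact heq ▸ (List.mem_cons_self : s(x, x') ∈ s(x, x') :: w.edges)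
      · rw [Walk.edges_cons]
        exact List.mem_cons_of_mem _ (ih i hi (by omega) h2)
    · rw [Walk.edges_cons]
      exact List.mem_cons_of_mem _ (ih i hi (by omega) h2)

lemma pathGraph_isTree {m : ℕ} (hm : 1 ≤ m) : (pathGraph m).IsTree := by
  obtain ⟨m', rfl⟩ : ∃ m', m = m' + 1 := ⟨m - 1, by omega⟩
  refine ⟨pathGraph_connected m', ?_⟩
  rw [isAcyclic_iff_forall_adj_isBridge]
  intro u v huv
  rw [isBridge_iff_adj_and_forall_walk_mem_edges]
  intro w
  rcases pathGraph_adj.1 huv with h | h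
  · have hc := pathGraph_walk_cross w (u : ℕ) (by omega) le_rfl (by omega)
    have e1 : (⟨(u : ℕ), by omega⟩ : Fin (m' + 1)) = u := Fin.ext rfl
    have e2 : (⟨(u : ℕ) + 1, by omega⟩ : Fin (m' + 1)) = v := Fin.ext h
    exact (Sym2.eq_iff.2 (Or.inl ⟨e1, e2⟩)) ▸ hc
  · have hc := pathGraph_walk_cross w.reverse (v : ℕ) (by omega) le_rfl (by omega)
    rw [Walk.edges_reverse, List.mem_reverse] at hc
    have e1 : (⟨(v : ℕ), by omega⟩ : Fin (m' + 1)) = v := Fin.ext rfl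
    have e2 : (⟨(v : ℕ) + 1, by omega⟩ : Fin (m' + 1)) = u := Fin.ext h
    exact (Sym2.eq_iff.2 (Or.inr ⟨e1, e2⟩)) ▸ hc


section Transport
variable {W : Type v'} [Finite V] [Finite W] {G : SimpleGraph V} {G' : SimpleGraph W}

/-- transport a tree-cut decomposition along a graph isomorphism -/
def TreeCutDecomp.map (e : G ≃g G') (D : TreeCutDecomp G) : TreeCutDecomp G' where
  B := D.B
  finB := D.finB
  T := D.T
  isTree := D.isTree
  bag b := (e : V → W) '' D.bag b
  disj := fun b d hbd => (Set.disjoint_image_iff e.injective).2 (D.disj hbd)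
  covers w := by
    obtain ⟨b, hb⟩ := D.covers (e.symm w)
    exact ⟨b, e.symm w, hb, by simp⟩

lemma TreeCutDecomp.map_linkAdh (e : G ≃g G') (D : TreeCutDecomp G) (l : Sym2 D.B) :
    (D.map e).linkAdh l = Sym2.map e '' D.linkAdh l := by
  ext f
  constructor
  · rintro ⟨hE, v', w', b, d, rfl, hv', hw', hwalk⟩
    obtain ⟨v, hv, rfl⟩ := hv'
    obtain ⟨w, hw, rfl⟩ := hw'
    refine ⟨s(v, w), ⟨?_, v, w, b, d, rfl, hv, hw, hwalk⟩, (Sym2.map_pair_eq _ _ _).symm⟩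
    rw [SimpleGraph.mem_edgeSet] at hE ⊢
    exact e.map_adj_iff.1 hE
  · rintro ⟨x, ⟨hE, v, w, b, d, rfl, hv, hw, hwalk⟩, rfl⟩
    rw [Sym2.map_pair_eq]
    refine ⟨?_, e v, e w, b, d, rfl, ⟨v, hv, rfl⟩, ⟨w, hw, rfl⟩, hwalk⟩
    rw [SimpleGraph.mem_edgeSet] at hE ⊢
    exact e.map_adj_iff.2 hE

lemma TreeCutDecomp.map_nodeAdh (e : G ≃g G') (D : TreeCutDecomp G) (b0 : D.B) :
    (D.map e).nodeAdh b0 = Sym2.map e '' D.nodeAdh b0 := by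
  ext f
  constructor
  · rintro ⟨hE, v', w', b, d, rfl, hv', hw', hb, hd, hwalk⟩
    obtain ⟨v, hv, rfl⟩ := hv'
    obtain ⟨w, hw, rfl⟩ := hw'
    refine ⟨s(v, w), ⟨?_, v, w, b, d, rfl, hv, hw, hb, hd, hwalk⟩, (Sym2.map_pair_eq _ _ _).symm⟩
    rw [SimpleGraph.mem_edgeSet] at hE ⊢
    exact e.map_adj_iff.1 hE
  · rintro ⟨x, ⟨hE, v, w, b, d, rfl, hv, hw, hb, hd, hwalk⟩, rfl⟩
    rw [Sym2.map_pair_eq]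
    refine ⟨?_, e v, e w, b, d, rfl, ⟨v, hv, rfl⟩, ⟨w, hw, rfl⟩, hb, hd, hwalk⟩
    rw [SimpleGraph.mem_edgeSet] at hE ⊢
    exact e.map_adj_iff.2 hE

lemma TreeCutDecomp.map_width (e : G ≃g G') (D : TreeCutDecomp G) :
    (D.map e).width = D.width := by
  unfold width
  congr 1
  apply congrArg₂
  · ext x
    constructor
    · rintro ⟨l, hl, rfl⟩
      exact ⟨l, hl, by rw [map_linkAdh e D l, Set.ncard_image_of_injective _
        (Sym2.map.injective e.injective)]⟩
    · rintro ⟨l, hl, rfl⟩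
      exact ⟨l, hl, by rw [map_linkAdh e D l, Set.ncard_image_of_injective _
        (Sym2.map.injective e.injective)]⟩
  · ext x
    constructor
    · rintro ⟨b, rfl⟩
      refine ⟨b, ?_⟩
      rw [map_nodeAdh e D b, Set.ncard_image_of_injective _ (Sym2.map.injective e.injective)]
      show ((e : V → W) '' D.bag b).ncard + _ = _
      rw [Set.ncard_image_of_injective _ e.injective]
    · rintro ⟨b, rfl⟩
      refine ⟨b, ?_⟩
      rw [map_nodeAdh e D b, Set.ncard_image_of_injective _ (Sym2.map.injective e.injective)]
      show _ = ((e : V → W) '' D.bag b).ncard + _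
      rw [Set.ncard_image_of_injective _ e.injective]

lemma screewidth_iso (e : G ≃g G') : screewidth G = screewidth G' := by
  unfold screewidth
  congr 1
  ext x
  exact ⟨fun ⟨D, hD⟩ => ⟨D.map e, by rw [D.map_width e, hD]⟩,
    fun ⟨D, hD⟩ => ⟨D.map e.symm, by rw [D.map_width e.symm, hD]⟩⟩

end Transport


namespace TreeCutDecomp
variable [Finite V]

lemma bag_eq {G : SimpleGraph V} (D : TreeCutDecomp G) {v : V} {c c' : D.B}
    (hc : v ∈ D.bag c) (hc' : v ∈ D.bag c') : c = c' := by
  by_contra hne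
  exact Set.disjoint_left.mp (D.disj hne) hc hc'

lemma bothFar {m n : ℕ} (D : TreeCutDecomp (pathGraph m □ pathGraph n)) {b d : D.B}
    (h : D.T.Adj b d) (j1 j2 : Fin n)
    (h1 : ∀ i : Fin m, ∃ c, ((i, j1) ∈ D.bag c) ∧ ∃ w : D.T.Walk c d, s(b, d) ∉ w.edges)
    (h2 : ∀ i : Fin m, ∃ c, ((i, j2) ∈ D.bag c) ∧ ∃ w : D.T.Walk c b, s(b, d) ∉ w.edges) :
    m ≤ (D.linkAdh s(b, d)).ncard := by
  set g : Fin m → ℕ → Prop := fun i k =>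
    ∃ (hk : k < n) (c : D.B), ((i, ⟨k, hk⟩) ∈ D.bag c) ∧ ∃ w : D.T.Walk c b, s(b, d) ∉ w.edges
    with hg
  have key : ∀ i : Fin m, ∃ e ∈ D.linkAdh s(b, d),
      ∃ (k : ℕ) (hk : k < n) (hk1 : k + 1 < n), e = s(((i, ⟨k, hk⟩) : Fin m × Fin n), (i, ⟨k + 1, hk1⟩)) := by
    intro i
    have hg2 : g i j2 := by
      obtain ⟨c, hc, hw⟩ := h2 i
      exact ⟨j2.2, c, by simpa using hc, hw⟩
    have hg1 : ¬ g i j1 := by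
      rintro ⟨hk, c', hc', hw'⟩
      obtain ⟨c, hc, hw⟩ := h1 i
      have hcc : c' = c := D.bag_eq hc' (by simpa using hc)
      subst hcc
      exact tree_side_disj D.isTree h hw' hw
    -- produce, from a sign change between consecutive k, k+1, an adhesion edge
    have mk : ∀ (k : ℕ) (hk : k < n) (hk1 : k + 1 < n), g i k → ¬ g i (k+1) →
        ∃ e ∈ D.linkAdh s(b, d),
        ∃ (k : ℕ) (hk : k < n) (hk1 : k + 1 < n), e = s(((i, ⟨k, hk⟩) : Fin m × Fin n), (i, ⟨k + 1, hk1⟩)) := by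
      intro k hk hk1 hgk hgk1
      obtain ⟨hk', c1, hc1, hw1⟩ := hgk
      obtain ⟨c0, hc0⟩ := D.covers (i, ⟨k + 1, hk1⟩)
      have hside : ∃ w : D.T.Walk c0 d, s(b, d) ∉ w.edges := by
        rcases tree_side_cover D.isTree h c0 with hs | hs
        · exact absurd ⟨hk1, c0, hc0, hs⟩ hgk1
        · exact hs
      refine ⟨s(((i, ⟨k, hk⟩) : Fin m × Fin n), (i, ⟨k + 1, hk1⟩)), ?_, k, hk, hk1, rfl⟩
      refine ⟨(grid_adj_vert i k hk hk1).symm.symm, (i, ⟨k, hk⟩), (i, ⟨k + 1, hk1⟩), c1, c0,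
        rfl, by convert hc1 using 2, hc0, fun p => tree_cross D.isTree h hw1 hside p⟩
    rcases lt_trichotomy (j1 : ℕ) (j2 : ℕ) with hlt | heq | hlt
    · obtain ⟨k, hk1, hk2, hk3, hk4⟩ := nat_ivt (g := fun k => ¬ g i k) (le_of_lt hlt) hg1
        (not_not_intro hg2)
      have hkn : k + 1 < n := lt_of_le_of_lt hk2 j2.2
      -- g i (k+1) holds, g i k fails : edge with sides swapped
      have hgk1 : g i (k + 1) := not_not.mp hk4
      obtain ⟨hk', c1, hc1, hw1⟩ := hgk1
      obtain ⟨c0, hc0⟩ := D.covers ((i, ⟨k, by omega⟩) : Fin m × Fin n)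
      have hside : ∃ w : D.T.Walk c0 d, s(b, d) ∉ w.edges := by
        rcases tree_side_cover D.isTree h c0 with hs | hs
        · exact absurd ⟨by omega, c0, hc0, hs⟩ hk3
        · exact hs
      refine ⟨s(((i, ⟨k, by omega⟩) : Fin m × Fin n), (i, ⟨k + 1, hkn⟩)), ?_, k, by omega, hkn, rfl⟩
      refine ⟨(grid_adj_vert i k (by omega) hkn).symm.symm, (i, ⟨k + 1, hkn⟩), (i, ⟨k, by omega⟩), c1, c0,
        Sym2.eq_swap.symm, by convert hc1 using 2, hc0, fun p => tree_cross D.isTree h hw1 hside p⟩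
    · have hj : j1 = j2 := Fin.ext heq
      rw [hj] at hg1
      exact absurd hg2 hg1
    · obtain ⟨k, hk1, hk2, hk3, hk4⟩ := nat_ivt (le_of_lt hlt) hg2 hg1
      exact mk k (by omega) (by omega) hk3 hk4
  classical
  choose f hf k hk hk1 he using key
  have : (Set.univ : Set (Fin m)).ncard ≤ (D.linkAdh s(b, d)).ncard := by
    apply Set.ncard_le_ncard_of_injOn f (fun a _ => hf a) _ (Set.toFinite _)
    intro a _ a' _ hfa
    rw [he a, he a'] at hfa
    rcases Sym2.eq_iff.1 hfa with ⟨h1', h2'⟩ | ⟨h1', h2'⟩ <;> exact congrArg Prod.fst h1'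
  simpa [Set.ncard_univ] using this


/-- The central counting argument: the lower bound for the width data. -/
lemma lower_core {m n : ℕ} (hm : 1 ≤ m) (hn : 1 ≤ n) (hnm : n ≤ m)
    (D : TreeCutDecomp (pathGraph m □ pathGraph n))
    (Hlink : ∀ l ∈ D.T.edgeSet, (D.linkAdh l).ncard < n)
    (Hnode : ∀ b, (D.bag b).ncard + (D.nodeAdh b).ncard < n) : False := by
  classical
  -- `Far b d` : some full row of the grid lives on the `d`-side of the link `s(b,d)`.
  set Far : D.B → D.B → Prop := fun b d =>
    ∃ j : Fin n, ∀ i : Fin m, ∃ c, ((i, j) ∈ D.bag c) ∧ ∃ w : D.T.Walk c d, s(b, d) ∉ w.edges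
    with hFar
  have Hfar : ∀ b d, D.T.Adj b d → Far b d → Far d b → False := by
    rintro b d hadj ⟨j1, h1⟩ ⟨j2, h2⟩
    have h2' : ∀ i : Fin m, ∃ c, ((i, j2) ∈ D.bag c) ∧ ∃ w : D.T.Walk c b, s(b, d) ∉ w.edges := by
      intro i
      obtain ⟨c, hc, w, hw⟩ := h2 i
      refine ⟨c, hc, w, ?_⟩
      rw [Sym2.eq_swap]
      exact hw
    have hge := D.bothFar hadj j1 j2 h1 h2'
    have hlt := Hlink s(b, d) (by rwa [SimpleGraph.mem_edgeSet])
    omega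
  -- a sink exists
  have hsink : ∃ b, ∀ d, D.T.Adj b d → ¬ Far b d := by
    by_contra hcon
    push_neg at hcon
    choose fd hadj hfar using hcon
    haveI := D.finB
    haveI : Fintype D.B := Fintype.ofFinite _
    haveI : Fintype D.T.edgeSet := Fintype.ofFinite _
    have hinj : Function.Injective (fun b => (⟨s(b, fd b), hadj b⟩ : D.T.edgeSet)) := by
      intro b1 b2 hb
      simp only [Subtype.mk.injEq] at hb
      replace hb : s(b1, fd b1) = s(b2, fd b2) := congrArg Subtype.val hb
      rcases Sym2.eq_iff.1 hb with ⟨h1, h2⟩ | ⟨h1, h2⟩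
      · exact h1
      · exfalso
        have hf2 := hfar b2
        rw [← h1] at hf2
        rw [← h2] at hf2
        exact Hfar b1 (fd b1) (hadj b1) (hfar b1) hf2
    have hcard := Fintype.card_le_of_injective _ hinj
    have hTcard := D.isTree.card_edgeFinset
    rw [SimpleGraph.edgeFinset_card] at hTcard
    have hpos : 1 ≤ Fintype.card D.B := Fintype.card_pos_iff.2
      ((D.covers (⟨0, hm⟩, ⟨0, hn⟩)).elim fun b _ => ⟨b⟩)
    have hEq : Fintype.card {x // x ∈ D.T.edgeSet} = Fintype.card ↑D.T.edgeSet :=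
      Fintype.card_congr (Equiv.refl _)
    omega
  obtain ⟨b, hb⟩ := hsink
  -- per-row dichotomy at the sink
  set S1 : Set (Fin n) := {j | ∃ i : Fin m, (i, j) ∈ D.bag b} with hS1
  set S2 : Set (Fin n) := {j | ∃ e ∈ D.nodeAdh b, ∃ (i : ℕ) (hi : i < m) (hi1 : i + 1 < m),
    e = s((((⟨i, hi⟩ : Fin m), j) : Fin m × Fin n), ((⟨i + 1, hi1⟩ : Fin m), j))} with hS2
  have hcover : ∀ j : Fin n, j ∈ S1 ∪ S2 := by
    intro j
    by_cases hj : ∃ i : Fin m, (i, j) ∈ D.bag b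
    · exact Or.inl hj
    · push_neg at hj
      right
      choose c hcbag using fun i : Fin m => D.covers (i, j)
      have hcb : ∀ i, c i ≠ b := fun i hi => hj i (hi ▸ hcbag i)
      choose dd hdd using fun i : Fin m => anchor_exists D.isTree (hcb i)
      by_cases hconst : ∀ (i : ℕ) (hi : i + 1 < m), dd ⟨i, by omega⟩ = dd ⟨i + 1, hi⟩
      · exfalso
        set d0 := dd ⟨0, by omega⟩ with hd0
        have hcst : ∀ (i : ℕ) (hi : i < m), dd ⟨i, hi⟩ = d0 := by
          intro i
          induction i with
          | zero => intro hi; rfl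
          | succ i ih =>
            intro hi
            rw [← hconst i hi]
            exact ih (by omega)
        apply hb d0 (hdd ⟨0, by omega⟩).1
        refine ⟨j, fun i => ⟨c i, hcbag i, ?_⟩⟩
        have h2 := hdd i
        rw [show dd i = d0 from hcst i.1 i.2 ▸ (by rw [Fin.eta])] at h2
        exact anchor_side D.isTree h2
      · push_neg at hconst
        obtain ⟨i, hi, hne⟩ := hconst
        refine ⟨s((((⟨i, by omega⟩ : Fin m), j) : Fin m × Fin n), ((⟨i + 1, hi⟩ : Fin m), j)),
          ⟨?_, (⟨i, by omega⟩, j), (⟨i + 1, hi⟩, j), c ⟨i, by omega⟩, c ⟨i + 1, hi⟩,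
            rfl, hcbag _, hcbag _, hcb _, hcb _,
            fun p => anchor_different D.isTree (hdd _) (hdd _) hne p⟩,
          i, by omega, hi, rfl⟩
        exact (grid_adj_horiz i (by omega) hi j).symm.symm
  -- counting
  have hc1 : S1.ncard ≤ (D.bag b).ncard := by
    have hch : ∀ j : Fin n, ∃ v : Fin m × Fin n, j ∈ S1 → v ∈ D.bag b ∧ v.2 = j := by
      intro j
      by_cases hj : j ∈ S1
      · obtain ⟨i, hi⟩ := hj
        exact ⟨(i, j), fun _ => ⟨hi, rfl⟩⟩
      · exact ⟨(⟨0, hm⟩, ⟨0, hn⟩), fun h => absurd h hj⟩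
    choose f hf using hch
    apply Set.ncard_le_ncard_of_injOn f (fun a ha => (hf a ha).1) _ (Set.toFinite _)
    intro a ha a' ha' hfa
    rw [← (hf a ha).2, ← (hf a' ha').2, hfa]
  have hc2 : S2.ncard ≤ (D.nodeAdh b).ncard := by
    have hch : ∀ j : Fin n, ∃ e : Sym2 (Fin m × Fin n), j ∈ S2 →
        e ∈ D.nodeAdh b ∧ ∃ (i : ℕ) (hi : i < m) (hi1 : i + 1 < m),
        e = s((((⟨i, hi⟩ : Fin m), j) : Fin m × Fin n), ((⟨i + 1, hi1⟩ : Fin m), j)) := by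
      intro j
      by_cases hj : j ∈ S2
      · obtain ⟨e, he, hi⟩ := hj
        exact ⟨e, fun _ => ⟨he, hi⟩⟩
      · exact ⟨s((⟨0, hm⟩, ⟨0, hn⟩), (⟨0, hm⟩, ⟨0, hn⟩)), fun h => absurd h hj⟩
    choose f hf using hch
    apply Set.ncard_le_ncard_of_injOn f (fun a ha => (hf a ha).1) _ (Set.toFinite _)
    intro a ha a' ha' hfa
    obtain ⟨i, hi, hi1, he⟩ := (hf a ha).2
    obtain ⟨i', hi', hi1', he'⟩ := (hf a' ha').2
    rw [he, he'] at hfa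
    rcases Sym2.eq_iff.1 hfa with ⟨h1, h2⟩ | ⟨h1, h2⟩ <;> exact congrArg Prod.snd h1
  have huniv : (Set.univ : Set (Fin n)) = S1 ∪ S2 :=
    (Set.eq_univ_of_forall hcover).symm
  have hn' : n ≤ S1.ncard + S2.ncard := by
    have h0 : (Set.univ : Set (Fin n)).ncard = n := by simp [Set.ncard_univ]
    calc n = ((S1 ∪ S2 : Set (Fin n))).ncard := by rw [← huniv, h0]
    _ ≤ S1.ncard + S2.ncard := Set.ncard_union_le _ _
  have := Hnode b
  omega


end TreeCutDecomp

/-- the column decomposition of the grid -/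
def gridDecomp (m n : ℕ) (hm : 1 ≤ m) : TreeCutDecomp (pathGraph m □ pathGraph n) where
  B := Fin m
  finB := inferInstance
  T := pathGraph m
  isTree := pathGraph_isTree hm
  bag i := {v | v.1 = i}
  disj := by
    intro i j hij
    rw [Set.disjoint_left]
    rintro v (rfl : v.1 = i) (h : v.1 = j)
    exact hij h
  covers v := ⟨v.1, rfl⟩

lemma gridDecomp_width (m n : ℕ) (hm : 1 ≤ m) (hn : 1 ≤ n) :
    (gridDecomp m n hm).width ≤ n := by
  classical
  set D := gridDecomp m n hm with hD
  have hbag : ∀ i : Fin m, (D.bag i).ncard = n := by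
    intro i
    have : D.bag i = (fun j : Fin n => ((i, j) : Fin m × Fin n)) '' Set.univ := by
      ext v
      constructor
      · intro hv
        have hvi : v.1 = i := hv
        exact ⟨v.2, Set.mem_univ _, by rw [← hvi]⟩
      · rintro ⟨j, -, rfl⟩
        rfl
    rw [this, Set.ncard_image_of_injective _ (fun j j' h => (Prod.ext_iff.1 h).2),
      Set.ncard_univ, Nat.card_eq_fintype_card, Fintype.card_fin]
  apply csSup_le
  · exact ⟨_, Or.inr ⟨⟨0, hm⟩, rfl⟩⟩
  rintro x (⟨l, hl, rfl⟩ | ⟨b, rfl⟩)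
  · -- link adhesion has at most n elements
    induction l using Sym2.ind with
    | _ u v =>
      rw [SimpleGraph.mem_edgeSet] at hl
      have hsub : D.linkAdh s(u, v) ⊆
          (fun j : Fin n => s(((u, j) : Fin m × Fin n), (v, j))) '' Set.univ := by
        rintro e ⟨heE, p, q, b', d', rfl, hb', hd', hwalk⟩
        rw [SimpleGraph.mem_edgeSet] at heE
        have hb'' : p.1 = b' := hb'
        have hd'' : q.1 = d' := hd'
        rcases SimpleGraph.boxProd_adj.1 heE with ⟨hadj, hpq⟩ | ⟨hadj, hpq⟩
        · -- horizontal edge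
          have hone := hwalk (Walk.cons (hb'' ▸ hd'' ▸ hadj) Walk.nil)
          simp only [Walk.edges_cons, Walk.edges_nil, List.mem_singleton] at hone
          rw [← hb'', ← hd''] at hone
          rcases Sym2.eq_iff.1 hone with ⟨h1, h2⟩ | ⟨h1, h2⟩
          · refine ⟨p.2, Set.mem_univ _, ?_⟩
            have e1 : ((u : Fin m), p.2) = p := by rw [h1]; exact Prod.mk.eta
            have e2 : ((v : Fin m), p.2) = q := by rw [h2, hpq]; exact Prod.mk.eta
            show s((u, p.2), (v, p.2)) = s(p, q)
            rw [e1, e2]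
            try rfl
          · refine ⟨p.2, Set.mem_univ _, ?_⟩
            have e1 : ((u : Fin m), p.2) = q := by rw [h1, hpq]; exact Prod.mk.eta
            have e2 : ((v : Fin m), p.2) = p := by rw [h2]; exact Prod.mk.eta
            show s((u, p.2), (v, p.2)) = s(p, q)
            rw [e1, e2]
            exact Sym2.eq_swap
        · -- vertical edge: both endpoints in same bag, nil walk gives contradiction
          exfalso
          have : b' = d' := by rw [← hb'', ← hd'', hpq]
          subst this
          have := hwalk Walk.nil
          simp at this
      calc (D.linkAdh s(u, v)).ncard ≤ _ := Set.ncard_le_ncard hsub (Set.toFinite _)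
        _ ≤ (Set.univ : Set (Fin n)).ncard := Set.ncard_image_le (Set.toFinite _)
        _ = n := by rw [Set.ncard_univ, Nat.card_eq_fintype_card, Fintype.card_fin]
  · -- node terms
    have hempty : D.nodeAdh b = ∅ := by
      ext e
      simp only [Set.mem_empty_iff_false, iff_false]
      rintro ⟨heE, p, q, b', d', rfl, hb', hd', hbb, hdb, hwalk⟩
      rw [SimpleGraph.mem_edgeSet] at heE
      have hb'' : p.1 = b' := hb'
      have hd'' : q.1 = d' := hd'
      rcases SimpleGraph.boxProd_adj.1 heE with ⟨hadj, hpq⟩ | ⟨hadj, hpq⟩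
      · have := hwalk (Walk.cons (hb'' ▸ hd'' ▸ hadj) Walk.nil)
        simp only [Walk.support_cons, Walk.support_nil, List.mem_cons,
          List.mem_singleton, List.not_mem_nil, or_false] at this
        rcases this with rfl | rfl
        · exact hbb rfl
        · exact hdb rfl
      · have : b' = d' := by rw [← hb'', ← hd'', hpq]
        subst this
        have := hwalk Walk.nil
        simp only [Walk.support_nil, List.mem_singleton] at this
        exact hbb this.symm
    rw [hempty, hbag b]
    simp


lemma screewidth_grid_le (m n : ℕ) (hm : 1 ≤ m) (hn : 1 ≤ n) :
    screewidth (SimpleGraph.pathGraph m □ SimpleGraph.pathGraph n) ≤ n :=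
  le_trans (Nat.sInf_le ⟨gridDecomp m n hm, rfl⟩) (gridDecomp_width m n hm hn)

lemma screewidth_grid_ge (m n : ℕ) (hm : 1 ≤ m) (hn : 1 ≤ n) (hnm : n ≤ m) :
    n ≤ screewidth (SimpleGraph.pathGraph m □ SimpleGraph.pathGraph n) := by
  have hne : Set.Nonempty {k | ∃ D : TreeCutDecomp (pathGraph m □ pathGraph n), D.width = k} :=
    ⟨_, gridDecomp m n hm, rfl⟩
  obtain ⟨D, hD⟩ := Nat.sInf_mem hne
  by_contra hcon
  push_neg at hcon
  rw [screewidth] at hcon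
  rw [← hD] at hcon
  have hbdd : BddAbove ({k | ∃ l ∈ D.T.edgeSet, k = (D.linkAdh l).ncard} ∪
      {k | ∃ b : D.B, k = (D.bag b).ncard + (D.nodeAdh b).ncard}) := by
    refine ⟨Nat.card (Fin m × Fin n) + Nat.card (Sym2 (Fin m × Fin n)), ?_⟩
    rintro x (⟨l, hl, rfl⟩ | ⟨b, rfl⟩)
    · have : (D.linkAdh l).ncard ≤ Nat.card (Sym2 (Fin m × Fin n)) := by
        rw [← Set.ncard_univ]
        exact Set.ncard_le_ncard (Set.subset_univ _) (Set.toFinite _)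
      omega
    · have h1 : (D.bag b).ncard ≤ Nat.card (Fin m × Fin n) := by
        rw [← Set.ncard_univ]
        exact Set.ncard_le_ncard (Set.subset_univ _) (Set.toFinite _)
      have h2 : (D.nodeAdh b).ncard ≤ Nat.card (Sym2 (Fin m × Fin n)) := by
        rw [← Set.ncard_univ]
        exact Set.ncard_le_ncard (Set.subset_univ _) (Set.toFinite _)
      exact add_le_add h1 h2
  have Hlink : ∀ l ∈ D.T.edgeSet, (D.linkAdh l).ncard < n := by
    intro l hl
    have := le_csSup hbdd (Or.inl ⟨l, hl, rfl⟩ :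
      (D.linkAdh l).ncard ∈ {k | ∃ l ∈ D.T.edgeSet, k = (D.linkAdh l).ncard} ∪
      {k | ∃ b : D.B, k = (D.bag b).ncard + (D.nodeAdh b).ncard})
    rw [← TreeCutDecomp.width] at this
    omega
  have Hnode : ∀ b, (D.bag b).ncard + (D.nodeAdh b).ncard < n := by
    intro b
    have := le_csSup hbdd (Or.inr ⟨b, rfl⟩ :
      (D.bag b).ncard + (D.nodeAdh b).ncard ∈
      {k | ∃ l ∈ D.T.edgeSet, k = (D.linkAdh l).ncard} ∪
      {k | ∃ b : D.B, k = (D.bag b).ncard + (D.nodeAdh b).ncard})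
    rw [← TreeCutDecomp.width] at this
    omega
  exact D.lower_core hm hn hnm Hlink Hnode

end AuxTreeLemmas

/-- For all `m, n ≥ 1`, the grid graph `G_{m,n} = P_m □ P_n` has screewidth
`min {m, n}`. -/
theorem screewidth_gridGraph (m n : ℕ) (hm : 1 ≤ m) (hn : 1 ≤ n) :
    screewidth (SimpleGraph.pathGraph m □ SimpleGraph.pathGraph n) = min m n := by
  rcases le_total n m with h | h
  · rw [min_eq_right h]
    exact le_antisymm (screewidth_grid_le m n hm hn) (screewidth_grid_ge m n hm hn h)
  · rw [min_eq_left h, screewidth_iso (SimpleGraph.boxProdComm (pathGraph m) (pathGraph n))]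
    exact le_antisymm (screewidth_grid_le n m hn hm) (screewidth_grid_ge n m hn hm h)
end
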